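/- arXiv:2605.12030 — 10 statements merged into one kernel-verified Lean document; each statement's English description precedes it below -/
import Mathlib

section
/- Let D = (𝒫,ℬ) be a symmetric (v,k,λ)-design and let (X,Y) be an equinumerous incidence-free pair with X ⊆ 𝒫 and Y ⊆ ℬ. Then there is a perfect matching between 𝒫∖X and ℬ∖Y in the incidence graph of D; that is, there exists a bijection f : 𝒫∖X → ℬ∖Y such that p ∈ f(p) for every point p ∈ 𝒫∖X. -/
set_option linter.unusedVariables false


private lemma stmt0_sum_inter_card {P : Type*} [DecidableEq P] (𝒞 : Finset (Finset P)) (A : Finset P) :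
    ∑ C ∈ 𝒞, (C ∩ A).card = ∑ q ∈ A, (𝒞.filter (fun C => q ∈ C)).card := by
  have h1 : ∀ C : Finset P, (C ∩ A).card = ∑ q ∈ A, if q ∈ C then 1 else 0 := by
    intro C
    rw [Finset.inter_comm, ← Finset.filter_mem_eq_inter, Finset.card_filter]
  calc ∑ C ∈ 𝒞, (C ∩ A).card = ∑ C ∈ 𝒞, ∑ q ∈ A, if q ∈ C then 1 else 0 :=
        Finset.sum_congr rfl (fun C _ => h1 C)
    _ = ∑ q ∈ A, ∑ C ∈ 𝒞, if q ∈ C then 1 else 0 := Finset.sum_comm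
    _ = ∑ q ∈ A, (𝒞.filter (fun C => q ∈ C)).card := by
        refine Finset.sum_congr rfl (fun q _ => ?_)
        rw [Finset.card_filter]

private lemma stmt0_sum_inter_card_sq {P : Type*} [DecidableEq P] (𝒞 : Finset (Finset P)) (A : Finset P) :
    ∑ C ∈ 𝒞, ((C ∩ A).card)^2 = ∑ q ∈ A, ∑ q' ∈ A, (𝒞.filter (fun C => q ∈ C ∧ q' ∈ C)).card := by
  have h1 : ∀ C : Finset P, ((C ∩ A).card)^2
      = ∑ q ∈ A, ∑ q' ∈ A, if q ∈ C ∧ q' ∈ C then 1 else 0 := by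
    intro C
    have hc : (C ∩ A).card = ∑ q ∈ A, if q ∈ C then 1 else 0 := by
      rw [Finset.inter_comm, ← Finset.filter_mem_eq_inter, Finset.card_filter]
    rw [hc, sq, Finset.sum_mul_sum]
    refine Finset.sum_congr rfl (fun q _ => Finset.sum_congr rfl (fun q' _ => ?_))
    by_cases h : q ∈ C <;> by_cases h' : q' ∈ C <;> simp [h, h']
  calc ∑ C ∈ 𝒞, ((C ∩ A).card)^2
      = ∑ C ∈ 𝒞, ∑ q ∈ A, ∑ q' ∈ A, if q ∈ C ∧ q' ∈ C then 1 else 0 :=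
        Finset.sum_congr rfl (fun C _ => h1 C)
    _ = ∑ q ∈ A, ∑ C ∈ 𝒞, ∑ q' ∈ A, if q ∈ C ∧ q' ∈ C then 1 else 0 := Finset.sum_comm
    _ = ∑ q ∈ A, ∑ q' ∈ A, ∑ C ∈ 𝒞, if q ∈ C ∧ q' ∈ C then 1 else 0 :=
        Finset.sum_congr rfl (fun q _ => Finset.sum_comm)
    _ = ∑ q ∈ A, ∑ q' ∈ A, (𝒞.filter (fun C => q ∈ C ∧ q' ∈ C)).card := by
        refine Finset.sum_congr rfl (fun q _ => Finset.sum_congr rfl (fun q' _ => ?_))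
        rw [Finset.card_filter]

-- dual: sum over all points of squared degree
private lemma stmt0_sum_deg_sq {P : Type*} [Fintype P] [DecidableEq P] (𝒯 : Finset (Finset P)) :
    ∑ q : P, ((𝒯.filter (fun C => q ∈ C)).card)^2 = ∑ C ∈ 𝒯, ∑ D ∈ 𝒯, (C ∩ D).card := by
  have h1 : ∀ q : P, ((𝒯.filter (fun C => q ∈ C)).card)^2
      = ∑ C ∈ 𝒯, ∑ D ∈ 𝒯, if q ∈ C ∧ q ∈ D then 1 else 0 := by
    intro q
    rw [Finset.card_filter, sq, Finset.sum_mul_sum]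
    refine Finset.sum_congr rfl (fun C _ => Finset.sum_congr rfl (fun D _ => ?_))
    by_cases h : q ∈ C <;> by_cases h' : q ∈ D <;> simp [h, h']
  calc ∑ q : P, ((𝒯.filter (fun C => q ∈ C)).card)^2
      = ∑ q : P, ∑ C ∈ 𝒯, ∑ D ∈ 𝒯, if q ∈ C ∧ q ∈ D then 1 else 0 :=
        Finset.sum_congr rfl (fun q _ => h1 q)
    _ = ∑ C ∈ 𝒯, ∑ q : P, ∑ D ∈ 𝒯, if q ∈ C ∧ q ∈ D then 1 else 0 := Finset.sum_comm
    _ = ∑ C ∈ 𝒯, ∑ D ∈ 𝒯, ∑ q : P, if q ∈ C ∧ q ∈ D then 1 else 0 :=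
        Finset.sum_congr rfl (fun C _ => Finset.sum_comm)
    _ = ∑ C ∈ 𝒯, ∑ D ∈ 𝒯, (C ∩ D).card := by
        refine Finset.sum_congr rfl (fun C _ => Finset.sum_congr rfl (fun D _ => ?_))
        rw [← Finset.card_filter]
        congr 1
        ext q
        simp [Finset.mem_inter]


private lemma stmt0_pair_eval {P : Type*} [DecidableEq P] (ℬ : Finset (Finset P)) (k l : ℕ)
    (hdeg : ∀ p : P, (ℬ.filter (fun C => p ∈ C)).card = k)
    (hpts : ∀ p q : P, p ≠ q → (ℬ.filter (fun C => p ∈ C ∧ q ∈ C)).card = l)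
    (A : Finset P) :
    ∑ q ∈ A, ∑ q' ∈ A, (ℬ.filter (fun C => q ∈ C ∧ q' ∈ C)).card
      = A.card * (k + (A.card - 1) * l) := by
  have h1 : ∀ q ∈ A, ∑ q' ∈ A, (ℬ.filter (fun C => q ∈ C ∧ q' ∈ C)).card
      = k + (A.card - 1) * l := by
    intro q hq
    rw [← Finset.add_sum_erase _ _ hq]
    have e1 : (ℬ.filter (fun C => q ∈ C ∧ q ∈ C)).card = k := by
      simp only [and_self]; exact hdeg q
    have e2 : ∑ q' ∈ A.erase q, (ℬ.filter (fun C => q ∈ C ∧ q' ∈ C)).card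
        = (A.card - 1) * l := by
      rw [Finset.sum_congr rfl (fun q' hq' => hpts q q' (Ne.symm (Finset.mem_erase.mp hq').1)),
        Finset.sum_const, Finset.card_erase_of_mem hq, smul_eq_mul]
    rw [e1, e2]
  rw [Finset.sum_congr rfl h1, Finset.sum_const, smul_eq_mul]

private lemma stmt0_block_pair_eval {P : Type*} [DecidableEq P] (ℬ : Finset (Finset P)) (k l : ℕ)
    (hblock : ∀ C ∈ ℬ, C.card = k)
    (hblocks : ∀ C ∈ ℬ, ∀ D ∈ ℬ, C ≠ D → (C ∩ D).card = l)
    (𝒯 : Finset (Finset P)) (h𝒯 : 𝒯 ⊆ ℬ) :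
    ∑ C ∈ 𝒯, ∑ D ∈ 𝒯, (C ∩ D).card = 𝒯.card * (k + (𝒯.card - 1) * l) := by
  have h1 : ∀ C ∈ 𝒯, ∑ D ∈ 𝒯, (C ∩ D).card = k + (𝒯.card - 1) * l := by
    intro C hC
    rw [← Finset.add_sum_erase _ _ hC]
    have e1 : (C ∩ C).card = k := by rw [Finset.inter_self]; exact hblock C (h𝒯 hC)
    have e2 : ∑ D ∈ 𝒯.erase C, (C ∩ D).card = (𝒯.card - 1) * l := by
      rw [Finset.sum_congr rfl (fun D hD => hblocks C (h𝒯 hC) D (h𝒯 (Finset.mem_of_mem_erase hD))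
        (Ne.symm (Finset.mem_erase.mp hD).1)),
        Finset.sum_const, Finset.card_erase_of_mem hC, smul_eq_mul]
    rw [e1, e2]
  rw [Finset.sum_congr rfl h1, Finset.sum_const, smul_eq_mul]


private lemma stmt0_rel {v k l : ℕ} {P : Type*} [Fintype P] [DecidableEq P]
    (ℬ : Finset (Finset P))
    (hv : Fintype.card P = v)
    (hblock : ∀ C ∈ ℬ, C.card = k)
    (hdeg : ∀ p : P, (ℬ.filter (fun C => p ∈ C)).card = k)
    (hpts : ∀ p q : P, p ≠ q → (ℬ.filter (fun C => p ∈ C ∧ q ∈ C)).card = l)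
    (hvpos : 0 < v) :
    (v - 1) * l = k * (k - 1) := by
  classical
  have hPpos : 0 < Fintype.card P := by rw [hv]; exact hvpos
  obtain ⟨p₀⟩ := Fintype.card_pos_iff.mp hPpos
  set 𝒞₀ := ℬ.filter (fun C => p₀ ∈ C) with h𝒞₀
  have hinter : ∀ C : Finset P, C ∩ (Finset.univ.erase p₀) = C.erase p₀ := by
    intro C; ext q; simp [Finset.mem_erase, and_comm]
  have lhs : ∑ C ∈ 𝒞₀, (C ∩ (Finset.univ.erase p₀)).card = k * (k - 1) := by
    have : ∀ C ∈ 𝒞₀, (C ∩ (Finset.univ.erase p₀)).card = k - 1 := by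
      intro C hC
      rw [hinter C, Finset.card_erase_of_mem (Finset.mem_filter.mp hC).2,
        hblock C (Finset.mem_filter.mp hC).1]
    rw [Finset.sum_congr rfl this, Finset.sum_const, smul_eq_mul, hdeg p₀]
  have rhs : ∑ q ∈ Finset.univ.erase p₀, (𝒞₀.filter (fun C => q ∈ C)).card = (v - 1) * l := by
    have : ∀ q ∈ Finset.univ.erase p₀, (𝒞₀.filter (fun C => q ∈ C)).card = l := by
      intro q hq
      rw [h𝒞₀, Finset.filter_filter]
      exact hpts p₀ q (Ne.symm (Finset.mem_erase.mp hq).1)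
    rw [Finset.sum_congr rfl this, Finset.sum_const, smul_eq_mul,
      Finset.card_erase_of_mem (Finset.mem_univ p₀), Finset.card_univ, hv]
  rw [← lhs, stmt0_sum_inter_card, rhs]


set_option maxHeartbeats 1000000 in
private lemma stmt0_endgame (v k l m s n r t : ℚ)
    (hrel : l*(v-1) = k*(k-1)) (hl : 1 ≤ l) (hlk : l + 1 ≤ k)
    (hm : 0 ≤ m) (hs : 1 ≤ s) (hn0 : 0 ≤ n) (hns : n + 1 ≤ s)
    (hr0 : 0 ≤ r) (hv : m + s + r = v) (ht : m + n + t = v)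
    (hm1 : m = 0 ∨ 1 ≤ m)
    (F1 : (k*m)^2 ≤ (v-m)*(l*m^2 + (k-l)*m))
    (F2 : l*m ≤ r*(k-l)) (F3 : l*m ≤ n*(k-l))
    (F4 : (k*t)^2 ≤ (m+r)*(l*t^2 + (k-l)*t)) : False := by
  have hK : 1 ≤ k - l := by linarith
  have hk0 : 0 < k := by linarith
  have hl0 : 0 < l := by linarith
  have htr : r + 1 ≤ t := by linarith
  have ht0 : 0 < t := by linarith
  -- cancel t in F4
  have F4' : k^2*t ≤ (m+r)*(l*t + (k-l)) := by
    have e1 : (k*t)^2 = (k^2*t)*t := by ring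
    have e2 : (m+r)*(l*t^2 + (k-l)*t) = ((m+r)*(l*t + (k-l)))*t := by ring
    rw [e1, e2] at F4
    exact le_of_mul_le_mul_right F4 ht0
  -- Theta positive
  have hTheta : 0 < k*(k-l)^2 + k*(l-1)*(k-l)*m - l^2*m^2 := by
    rcases hm1 with h0 | h1
    · rw [h0]
      have : 0 < k*(k-l)^2 := by positivity
      linarith [this]
    · have hm0 : (0:ℚ) < m := by linarith
      have F1' : k^2*m ≤ (v-m)*(l*m + (k-l)) := by
        have e1 : (k*m)^2 = (k^2*m)*m := by ring
        have e2 : (v-m)*(l*m^2 + (k-l)*m) = ((v-m)*(l*m + (k-l)))*m := by ring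
        rw [e1, e2] at F1
        exact le_of_mul_le_mul_right F1 hm0
      have key : (v-m)*(l*m+(k-l)) - k^2*m = v*(k-l) - l*m^2 - 2*(k-l)*m := by
        linear_combination m*hrel
      have hvK : l*m^2 + 2*(k-l)*m ≤ v*(k-l) := by linarith
      have id2 : k*(k-l)^2 + k*(l-1)*(k-l)*m - l*(v*(k-l) - 2*(k-l)*m)
          = (k-l)*((m-1)*(k*(l-1)+2*l)+l) := by linear_combination (-(k-l))*hrel
      have h5 : l^2*m^2 ≤ l*(v*(k-l) - 2*(k-l)*m) := by
        have := mul_le_mul_of_nonneg_left hvK hl0.le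
        nlinarith [this]
      have A1 : 0 ≤ (m-1)*(k*(l-1)+2*l) := by
        apply mul_nonneg (by linarith)
        have : 0 ≤ k*(l-1) := mul_nonneg hk0.le (by linarith)
        linarith
      have A2 : 0 < (k-l)*((m-1)*(k*(l-1)+2*l)+l) :=
        mul_pos (by linarith) (by linarith)
      linarith [id2, h5, A2]
  -- g ≤ 0
  have hpos : k ≤ k^2 - l*(m+r) := by
    have e : m + r = v - s := by linarith
    have h2 : l*(m+r) ≤ l*(v-1) := by
      rw [e]; exact mul_le_mul_of_nonneg_left (by linarith) hl0.le
    nlinarith [h2, hrel]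
  have hg : (r+1)*(k^2 - l*(m+r)) ≤ (k-l)*(m+r) := by
    have h1 : t*(k^2 - l*(m+r)) ≤ (k-l)*(m+r) := by nlinarith [F4']
    have h2 : (r+1)*(k^2-l*(m+r)) ≤ t*(k^2-l*(m+r)) :=
      mul_le_mul_of_nonneg_right htr (by linarith)
    linarith
  -- endpoints
  have haw : m*k ≤ (m+r)*(k-l) := by nlinarith [F2]
  have hwb : (m+r)*(k-l) ≤ (v-1)*(k-l) - l*m := by
    have h3 : n*(k-l) ≤ (s-1)*(k-l) :=
      mul_le_mul_of_nonneg_right (by linarith) (by linarith)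
    have e : (v-1)*(k-l) - l*m - (m+r)*(k-l) = (s-1)*(k-l) - l*m := by
      linear_combination (-(k-l))*hv
    linarith [F3, h3, e]
  have hGw : (((m+r)*(k-l))-(m-1)*(k-l))*(k^2*(k-l)-l*((m+r)*(k-l))) - (k-l)^2*((m+r)*(k-l)) ≤ 0 := by
    have e : (((m+r)*(k-l))-(m-1)*(k-l))*(k^2*(k-l)-l*((m+r)*(k-l))) - (k-l)^2*((m+r)*(k-l))
        = (k-l)^2*((r+1)*(k^2-l*(m+r)) - (k-l)*(m+r)) := by ring
    rw [e]
    exact mul_nonpos_of_nonneg_of_nonpos (sq_nonneg _) (by linarith [hg])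
  have hGa : (m*k-(m-1)*(k-l))*(k^2*(k-l)-l*(m*k)) - (k-l)^2*(m*k)
      = k*(k*(k-l)^2 + k*(l-1)*(k-l)*m - l^2*m^2) := by ring
  have hGb : (((v-1)*(k-l)-l*m)-(m-1)*(k-l))*(k^2*(k-l)-l*((v-1)*(k-l)-l*m)) - (k-l)^2*((v-1)*(k-l)-l*m)
      = k*(k*(k-l)^2 + k*(l-1)*(k-l)*m - l^2*m^2) := by
    linear_combination (-(k-l)^2*v + (k-l)^2 + m*(k-l)*(k+l))*hrel
  obtain hab | hab := eq_or_lt_of_le (haw.trans hwb)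
  · have hWA : (m+r)*(k-l) = m*k := le_antisymm (hab ▸ hwb) haw
    rw [hWA, hGa] at hGw
    have := mul_pos hk0 hTheta
    linarith
  · have hid : ((((m+r)*(k-l))-(m-1)*(k-l))*(k^2*(k-l)-l*((m+r)*(k-l))) - (k-l)^2*((m+r)*(k-l))) * (((v-1)*(k-l)-l*m) - m*k)
        = ((m*k-(m-1)*(k-l))*(k^2*(k-l)-l*(m*k)) - (k-l)^2*(m*k))*((((v-1)*(k-l)-l*m)) - (m+r)*(k-l))
          + ((((v-1)*(k-l)-l*m)-(m-1)*(k-l))*(k^2*(k-l)-l*((v-1)*(k-l)-l*m)) - (k-l)^2*((v-1)*(k-l)-l*m))*((m+r)*(k-l) - m*k)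
          + l*(((((v-1)*(k-l)-l*m)) - (m+r)*(k-l))*(((m+r)*(k-l) - m*k)*((((v-1)*(k-l)-l*m)) - m*k))) := by
      ring
    rw [hGa, hGb] at hid
    have t1 : 0 ≤ ((v-1)*(k-l)-l*m) - (m+r)*(k-l) := by linarith
    have t2 : 0 ≤ (m+r)*(k-l) - m*k := by linarith
    have t3 : 0 < ((v-1)*(k-l)-l*m) - m*k := by linarith
    have hkT : 0 < k*(k*(k-l)^2 + k*(l-1)*(k-l)*m - l^2*m^2) := mul_pos hk0 hTheta
    have s1 : 0 ≤ k*(k*(k-l)^2 + k*(l-1)*(k-l)*m - l^2*m^2)*(((v-1)*(k-l)-l*m) - (m+r)*(k-l)) :=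
      mul_nonneg hkT.le t1
    have s2 : 0 ≤ k*(k*(k-l)^2 + k*(l-1)*(k-l)*m - l^2*m^2)*((m+r)*(k-l) - m*k) :=
      mul_nonneg hkT.le t2
    have s3 : 0 < k*(k*(k-l)^2 + k*(l-1)*(k-l)*m - l^2*m^2)*((((v-1)*(k-l)-l*m)) - m*k) :=
      mul_pos hkT t3
    have s5 : 0 ≤ l*(((((v-1)*(k-l)-l*m)) - (m+r)*(k-l))*(((m+r)*(k-l) - m*k)*((((v-1)*(k-l)-l*m)) - m*k))) :=
      mul_nonneg hl0.le (mul_nonneg t1 (mul_nonneg t2 t3.le))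
    have s6 : ((((m+r)*(k-l))-(m-1)*(k-l))*(k^2*(k-l)-l*((m+r)*(k-l))) - (k-l)^2*((m+r)*(k-l))) * (((v-1)*(k-l)-l*m) - m*k) ≤ 0 :=
      mul_nonpos_of_nonpos_of_nonneg hGw t3.le
    linarith [hid, s1, s2, s3, s5, s6]

set_option maxHeartbeats 2000000 in
private lemma stmt0_hall {v k l : ℕ} {P : Type*} [Fintype P] [DecidableEq P]
    (ℬ : Finset (Finset P)) (hv : Fintype.card P = v) (hℬcard : ℬ.card = v)
    (hblock : ∀ C ∈ ℬ, C.card = k)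
    (hdeg : ∀ p : P, (ℬ.filter (fun C => p ∈ C)).card = k)
    (hpts : ∀ p q : P, p ≠ q → (ℬ.filter (fun C => p ∈ C ∧ q ∈ C)).card = l)
    (hblocks : ∀ C ∈ ℬ, ∀ D ∈ ℬ, C ≠ D → (C ∩ D).card = l)
    (hl : 0 < l) (hlk : l < k) (hkv : k < v)
    (X : Finset P) (Y : Finset (Finset P)) (hY : Y ⊆ ℬ)
    (hfree : ∀ p ∈ X, ∀ C ∈ Y, p ∉ C) (hequi : X.card = Y.card)
    (σ : Finset {p : P // p ∉ X}) :
    σ.card ≤ (σ.biUnion (fun p => (ℬ \ Y).filter (fun C => (p : P) ∈ C))).card := by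
  classical
  by_contra hcon
  push_neg at hcon
  set m := X.card with hmdef
  set S : Finset P := σ.image Subtype.val with hSdef
  set N : Finset (Finset P) := σ.biUnion (fun p => (ℬ \ Y).filter (fun C => (p : P) ∈ C)) with hNdef
  set T : Finset (Finset P) := (ℬ \ Y) \ N with hTdef
  set R : Finset P := (Finset.univ \ X) \ S with hRdef
  have hScard : S.card = σ.card := Finset.card_image_of_injective σ Subtype.val_injective
  have hcon' : N.card < S.card := by rw [hScard]; exact hcon
  have hSne : S.Nonempty := Finset.card_pos.mp (by omega)
  have hSX : ∀ q ∈ S, q ∉ X := by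
    intro q hq
    rw [hSdef, Finset.mem_image] at hq
    obtain ⟨p, _, rfl⟩ := hq
    exact p.2
  have hNmem : ∀ C : Finset P, C ∈ N ↔ (C ∈ ℬ \ Y ∧ ∃ q ∈ S, q ∈ C) := by
    intro C
    constructor
    · intro hC
      rw [hNdef, Finset.mem_biUnion] at hC
      obtain ⟨p, hp, hC⟩ := hC
      rw [Finset.mem_filter] at hC
      refine ⟨hC.1, p.val, ?_, hC.2⟩
      rw [hSdef, Finset.mem_image]
      exact ⟨p, hp, rfl⟩
    · rintro ⟨h1, q, hq, h2⟩
      rw [hSdef, Finset.mem_image] at hq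
      obtain ⟨p, hp, rfl⟩ := hq
      rw [hNdef, Finset.mem_biUnion]
      exact ⟨p, hp, Finset.mem_filter.mpr ⟨h1, h2⟩⟩
  have hNsub : N ⊆ ℬ \ Y := fun C hC => ((hNmem C).mp hC).1
  have hTmem : ∀ C ∈ T, C ∈ ℬ ∧ C ∉ Y ∧ ∀ q ∈ S, q ∉ C := by
    intro C hC
    rw [hTdef, Finset.mem_sdiff] at hC
    obtain ⟨h1, h2⟩ := hC
    have h3 := Finset.mem_sdiff.mp h1
    refine ⟨h3.1, h3.2, fun q hq hqC => h2 ((hNmem C).mpr ⟨h1, q, hq, hqC⟩)⟩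
  have hYm : Y.card = m := hequi.symm
  have hBY : (ℬ \ Y).card = v - m := by rw [Finset.card_sdiff_of_subset hY, hℬcard, hYm]
  have hmv : m ≤ v := by
    rw [← hℬcard, ← hYm]; exact Finset.card_le_card hY
  have hUX : (Finset.univ \ X).card = v - m := by
    rw [Finset.card_sdiff_of_subset (Finset.subset_univ X), Finset.card_univ, hv]
  have hSsub : S ⊆ Finset.univ \ X := by
    intro q hq; rw [Finset.mem_sdiff]; exact ⟨Finset.mem_univ q, hSX q hq⟩
  have hsv : S.card ≤ v - m := hUX ▸ Finset.card_le_card hSsub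
  have hRcard : R.card = v - m - S.card := by rw [hRdef, Finset.card_sdiff_of_subset hSsub, hUX]
  have hNv : N.card ≤ v - m := hBY ▸ Finset.card_le_card hNsub
  have hTcard : T.card = v - m - N.card := by rw [hTdef, Finset.card_sdiff_of_subset hNsub, hBY]
  have hs1 : 1 ≤ S.card := Finset.card_pos.mpr hSne
  have ht1 : 1 ≤ T.card := by omega
  have hTne : T.Nonempty := Finset.card_pos.mp (by omega)
  have hpart : m + S.card + R.card = v := by omega
  have hpartT : m + N.card + T.card = v := by omega
  -- bound: for q ∉ X (X nonempty), q lies on at most k-l blocks of Y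
  have hdegY : X.Nonempty → ∀ q : P, q ∉ X → (Y.filter (fun D => q ∈ D)).card + l ≤ k := by
    rintro ⟨x₀, hx₀⟩ q hq
    have hqx : q ≠ x₀ := fun h => hq (h ▸ hx₀)
    have hdisj : Disjoint (Y.filter (fun D => q ∈ D)) (ℬ.filter (fun C => q ∈ C ∧ x₀ ∈ C)) := by
      rw [Finset.disjoint_left]
      intro D hD hD'
      exact hfree x₀ hx₀ D (Finset.mem_filter.mp hD).1 (Finset.mem_filter.mp hD').2.2
    have hsub : (Y.filter (fun D => q ∈ D)) ∪ (ℬ.filter (fun C => q ∈ C ∧ x₀ ∈ C))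
        ⊆ ℬ.filter (fun C => q ∈ C) := by
      intro C hC
      rcases Finset.mem_union.mp hC with h | h
      · exact Finset.mem_filter.mpr ⟨hY (Finset.mem_filter.mp h).1, (Finset.mem_filter.mp h).2⟩
      · exact Finset.mem_filter.mpr ⟨(Finset.mem_filter.mp h).1, (Finset.mem_filter.mp h).2.1⟩
    have hcard := Finset.card_le_card hsub
    rw [Finset.card_union_of_disjoint hdisj, hpts q x₀ hqx, hdeg q] at hcard
    exact hcard
  -- bound: for C ∈ ℬ \ Y (Y nonempty), C meets X in at most k-l points
  have hinterX : Y.Nonempty → ∀ C ∈ ℬ, C ∉ Y → (C ∩ X).card + l ≤ k := by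
    rintro ⟨D₀, hD₀⟩ C hC hCY
    have hne : C ≠ D₀ := fun h => hCY (h ▸ hD₀)
    have hdisj : Disjoint (C ∩ X) (C ∩ D₀) := by
      rw [Finset.disjoint_left]
      intro q hq hq'
      exact hfree q (Finset.mem_inter.mp hq).2 D₀ hD₀ (Finset.mem_inter.mp hq').2
    have hsub : (C ∩ X) ∪ (C ∩ D₀) ⊆ C := by
      intro q hq
      rcases Finset.mem_union.mp hq with h | h
      exacts [(Finset.mem_inter.mp h).1, (Finset.mem_inter.mp h).1]
    have hcard := Finset.card_le_card hsub
    rw [Finset.card_union_of_disjoint hdisj, hblocks C hC D₀ (hY hD₀) hne, hblock C hC] at hcard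
    exact hcard
  -- F2 (ℕ) : m*l ≤ r*(k-l) when m ≥ 1
  have F2N : 1 ≤ m → m * l ≤ R.card * (k - l) := by
    intro hm1
    have hXne : X.Nonempty := Finset.card_pos.mp hm1
    obtain ⟨C₀, hC₀T⟩ := hTne
    obtain ⟨hC₀ℬ, hC₀Y, hC₀S⟩ := hTmem C₀ hC₀T
    have e0 : ∑ D ∈ Y, (D ∩ C₀).card = m * l := by
      have hterm : ∀ D ∈ Y, (D ∩ C₀).card = l := by
        intro D hD
        rw [Finset.inter_comm]
        exact hblocks C₀ hC₀ℬ D (hY hD) (fun h => hC₀Y (h ▸ hD))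
      rw [Finset.sum_congr rfl hterm, Finset.sum_const, smul_eq_mul, hYm]
    have e1 : ∑ q ∈ C₀, (Y.filter (fun D => q ∈ D)).card = m * l := by
      rw [← stmt0_sum_inter_card Y C₀]; exact e0
    have e2 : ∑ q ∈ C₀, (Y.filter (fun D => q ∈ D)).card
        = ∑ q ∈ C₀ ∩ R, (Y.filter (fun D => q ∈ D)).card := by
      symm
      apply Finset.sum_subset Finset.inter_subset_left
      intro q hq hq'
      have hqR : q ∉ R := fun h => hq' (Finset.mem_inter.mpr ⟨hq, h⟩)
      rw [hRdef, Finset.mem_sdiff] at hqR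
      push_neg at hqR
      by_cases hqS : q ∈ S
      · exact absurd hq (hC₀S q hqS)
      · have hqX : q ∈ X := by
          by_contra hqX
          exact hqS (hqR (Finset.mem_sdiff.mpr ⟨Finset.mem_univ q, hqX⟩))
        rw [Finset.card_eq_zero, Finset.filter_eq_empty_iff]
        intro D hD
        exact hfree q hqX D hD
    have e3 : ∑ q ∈ C₀ ∩ R, (Y.filter (fun D => q ∈ D)).card ≤ (C₀ ∩ R).card * (k - l) := by
      rw [← smul_eq_mul]
      apply Finset.sum_le_card_nsmul
      intro q hq
      have hqX : q ∉ X := by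
        have := (Finset.mem_sdiff.mp (Finset.mem_sdiff.mp
          (Finset.mem_inter.mp hq).2).1).2
        exact this
      have := hdegY hXne q hqX
      omega
    have e4 : (C₀ ∩ R).card ≤ R.card := Finset.card_le_card Finset.inter_subset_right
    calc m * l = ∑ q ∈ C₀ ∩ R, (Y.filter (fun D => q ∈ D)).card := by rw [← e2, e1]
      _ ≤ (C₀ ∩ R).card * (k - l) := e3
      _ ≤ R.card * (k - l) := Nat.mul_le_mul_right _ e4
  -- F3 (ℕ) : m*l ≤ n*(k-l) when m ≥ 1
  have F3N : 1 ≤ m → m * l ≤ N.card * (k - l) := by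
    intro hm1
    have hXne : X.Nonempty := Finset.card_pos.mp hm1
    have hYne : Y.Nonempty := Finset.card_pos.mp (by omega)
    obtain ⟨p₀, hp₀S⟩ := hSne
    have hp₀X : p₀ ∉ X := hSX p₀ hp₀S
    have e0 : ∑ x ∈ X, ((ℬ.filter (fun C => p₀ ∈ C)).filter (fun C => x ∈ C)).card = m * l := by
      have hterm : ∀ x ∈ X, ((ℬ.filter (fun C => p₀ ∈ C)).filter (fun C => x ∈ C)).card = l := by
        intro x hx
        rw [Finset.filter_filter]
        exact hpts p₀ x (fun h => hp₀X (h ▸ hx))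
      rw [Finset.sum_congr rfl hterm, Finset.sum_const, smul_eq_mul]
    have e1 : ∑ C ∈ ℬ.filter (fun C => p₀ ∈ C), (C ∩ X).card = m * l := by
      rw [stmt0_sum_inter_card]; exact e0
    have e2 : ∑ C ∈ ℬ.filter (fun C => p₀ ∈ C), (C ∩ X).card
        = ∑ C ∈ (ℬ.filter (fun C => p₀ ∈ C)) ∩ N, (C ∩ X).card := by
      symm
      apply Finset.sum_subset Finset.inter_subset_left
      intro C hC hC'
      have hCN : C ∉ N := fun h => hC' (Finset.mem_inter.mpr ⟨hC, h⟩)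
      have hCp₀ := Finset.mem_filter.mp hC
      by_cases hCY : C ∈ Y
      · rw [Finset.card_eq_zero]
        rw [Finset.eq_empty_iff_forall_notMem]
        intro q hq
        exact hfree q (Finset.mem_inter.mp hq).2 C hCY (Finset.mem_inter.mp hq).1
      · exact absurd ((hNmem C).mpr ⟨Finset.mem_sdiff.mpr ⟨hCp₀.1, hCY⟩, p₀, hp₀S, hCp₀.2⟩) hCN
    have e3 : ∑ C ∈ (ℬ.filter (fun C => p₀ ∈ C)) ∩ N, (C ∩ X).card
        ≤ ((ℬ.filter (fun C => p₀ ∈ C)) ∩ N).card * (k - l) := by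
      rw [← smul_eq_mul]
      apply Finset.sum_le_card_nsmul
      intro C hC
      have hCN := (Finset.mem_inter.mp hC).2
      have hCBY := Finset.mem_sdiff.mp (hNsub hCN)
      have := hinterX hYne C hCBY.1 hCBY.2
      omega
    have e4 : ((ℬ.filter (fun C => p₀ ∈ C)) ∩ N).card ≤ N.card :=
      Finset.card_le_card Finset.inter_subset_right
    calc m * l = ∑ C ∈ (ℬ.filter (fun C => p₀ ∈ C)) ∩ N, (C ∩ X).card := by rw [← e2, e1]
      _ ≤ ((ℬ.filter (fun C => p₀ ∈ C)) ∩ N).card * (k - l) := e3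
      _ ≤ N.card * (k - l) := Nat.mul_le_mul_right _ e4
  -- ===== F1 (Cauchy-Schwarz on X over ℬ \ Y) =====
  have hvanish : ∀ C ∈ ℬ, C ∉ ℬ \ Y → (C ∩ X).card = 0 := by
    intro C hC hC'
    have hCY : C ∈ Y := by
      by_contra h
      exact hC' (Finset.mem_sdiff.mpr ⟨hC, h⟩)
    rw [Finset.card_eq_zero, Finset.eq_empty_iff_forall_notMem]
    intro q hq
    exact hfree q (Finset.mem_inter.mp hq).2 C hCY (Finset.mem_inter.mp hq).1
  have e1 : ∑ C ∈ ℬ \ Y, (C ∩ X).card = m * k := by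
    rw [Finset.sum_subset Finset.sdiff_subset hvanish, stmt0_sum_inter_card]
    have hterm : ∀ x ∈ X, (ℬ.filter (fun C => x ∈ C)).card = k := fun x _ => hdeg x
    rw [Finset.sum_congr rfl hterm, Finset.sum_const, smul_eq_mul]
  have e2 : ∑ C ∈ ℬ \ Y, ((C ∩ X).card)^2 = m * (k + (m - 1) * l) := by
    have hvan2 : ∀ C ∈ ℬ, C ∉ ℬ \ Y → ((C ∩ X).card)^2 = 0 := by
      intro C hC hC'
      rw [hvanish C hC hC']
      norm_num
    rw [Finset.sum_subset Finset.sdiff_subset hvan2, stmt0_sum_inter_card_sq,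
      stmt0_pair_eval ℬ k l hdeg hpts X]
  have CSF1 : (m*k)^2 ≤ (v-m) * (m*(k+(m-1)*l)) := by
    have hcs := sq_sum_le_card_mul_sum_sq (s := ℬ \ Y) (f := fun C => (((C ∩ X).card) : ℚ))
    have hc1 : ∑ C ∈ ℬ \ Y, (((C ∩ X).card) : ℚ) = ((m*k : ℕ) : ℚ) := by
      rw [← Nat.cast_sum, e1]
    have hc2 : ∑ C ∈ ℬ \ Y, (((C ∩ X).card) : ℚ)^2 = ((m*(k+(m-1)*l) : ℕ) : ℚ) := by
      rw [← e2, Nat.cast_sum]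
      push_cast
      rfl
    rw [hc1, hc2, hBY] at hcs
    exact_mod_cast hcs
  -- ===== F4 (Cauchy-Schwarz on T over univ \ S) =====
  have hTsubB : T ⊆ ℬ := fun C hC => (hTmem C hC).1
  have b2 : ∑ q : P, (T.filter (fun C => q ∈ C)).card = T.card * k := by
    rw [← stmt0_sum_inter_card T Finset.univ]
    have hterm : ∀ C ∈ T, (C ∩ Finset.univ).card = k := by
      intro C hC
      rw [Finset.inter_univ]
      exact hblock C (hTsubB hC)
    rw [Finset.sum_congr rfl hterm, Finset.sum_const, smul_eq_mul]
  have hvanS : ∀ q ∈ Finset.univ, q ∉ Finset.univ \ S → (T.filter (fun C => q ∈ C)).card = 0 := by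
    intro q _ hq
    have hqS : q ∈ S := by
      by_contra h
      exact hq (Finset.mem_sdiff.mpr ⟨Finset.mem_univ q, h⟩)
    rw [Finset.card_eq_zero, Finset.filter_eq_empty_iff]
    intro C hC
    exact (hTmem C hC).2.2 q hqS
  have e1T : ∑ q ∈ Finset.univ \ S, (T.filter (fun C => q ∈ C)).card = T.card * k := by
    rw [Finset.sum_subset Finset.sdiff_subset hvanS]
    exact b2
  have e2T : ∑ q ∈ Finset.univ \ S, ((T.filter (fun C => q ∈ C)).card)^2
      ≤ T.card * (k + (T.card - 1) * l) := by
    calc ∑ q ∈ Finset.univ \ S, ((T.filter (fun C => q ∈ C)).card)^2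
        ≤ ∑ q : P, ((T.filter (fun C => q ∈ C)).card)^2 :=
          Finset.sum_le_sum_of_subset Finset.sdiff_subset
      _ = T.card * (k + (T.card - 1) * l) := by
          rw [stmt0_sum_deg_sq, stmt0_block_pair_eval ℬ k l hblock hblocks T hTsubB]
  have hUScard : (Finset.univ \ S).card = v - S.card := by
    rw [Finset.card_sdiff_of_subset (Finset.subset_univ S), Finset.card_univ, hv]
  have CSF4 : (T.card*k)^2 ≤ (v - S.card) * (T.card*(k+(T.card-1)*l)) := by
    have hcs := sq_sum_le_card_mul_sum_sq (s := Finset.univ \ S)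
      (f := fun q => (((T.filter (fun C => q ∈ C)).card) : ℚ))
    have hc1 : ∑ q ∈ Finset.univ \ S, (((T.filter (fun C => q ∈ C)).card) : ℚ)
        = ((T.card * k : ℕ) : ℚ) := by
      rw [← Nat.cast_sum, e1T]
    have hc2 : ∑ q ∈ Finset.univ \ S, (((T.filter (fun C => q ∈ C)).card) : ℚ)^2
        ≤ ((T.card * (k + (T.card - 1) * l) : ℕ) : ℚ) := by
      have : ∑ q ∈ Finset.univ \ S, (((T.filter (fun C => q ∈ C)).card) : ℚ)^2
          = ((∑ q ∈ Finset.univ \ S, ((T.filter (fun C => q ∈ C)).card)^2 : ℕ) : ℚ) := by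
        rw [Nat.cast_sum]
        push_cast
        rfl
      rw [this]
      exact_mod_cast e2T
    rw [hc1, hUScard] at hcs
    have := hcs.trans (by
      apply mul_le_mul_of_nonneg_left hc2
      positivity)
    exact_mod_cast this
  -- ===== cast everything to ℚ and conclude =====
  have hrelN := stmt0_rel ℬ hv hblock hdeg hpts (by omega)
  have h1v : 1 ≤ v := by omega
  have h1k : 1 ≤ k := by omega
  have hrelQ : (l:ℚ)*((v:ℚ)-1) = (k:ℚ)*((k:ℚ)-1) := by
    have hq := congrArg (fun x : ℕ => (x : ℚ)) hrelN
    push_cast [Nat.cast_sub h1v, Nat.cast_sub h1k] at hq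
    linarith [hq]
  have F1Q : (((k:ℚ))*m)^2 ≤ ((v:ℚ)-m)*((l:ℚ)*(m:ℚ)^2+((k:ℚ)-l)*m) := by
    rcases Nat.eq_zero_or_pos m with h0 | hm1
    · rw [h0]
      norm_num
    · have h' : (((m*k)^2 : ℕ) : ℚ) ≤ (((v-m) * (m*(k+(m-1)*l)) : ℕ) : ℚ) := Nat.cast_le.mpr CSF1
      push_cast [Nat.cast_sub hmv, Nat.cast_sub hm1] at h'
      have hre : ((v:ℚ)-m)*((m:ℚ)*((k:ℚ)+((m:ℚ)-1)*l)) = ((v:ℚ)-m)*((l:ℚ)*(m:ℚ)^2+((k:ℚ)-l)*m) := by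
        ring
      nlinarith [h', hre]
  have F4Q : (((k:ℚ))*T.card)^2 ≤ ((m:ℚ)+R.card)*((l:ℚ)*(T.card:ℚ)^2+((k:ℚ)-l)*T.card) := by
    have h' : (((T.card*k)^2 : ℕ) : ℚ) ≤ (((v - S.card) * (T.card*(k+(T.card-1)*l)) : ℕ) : ℚ) :=
      Nat.cast_le.mpr CSF4
    have hsv' : S.card ≤ v := by omega
    push_cast [Nat.cast_sub hsv', Nat.cast_sub ht1] at h'
    have hmr : (v:ℚ) - S.card = (m:ℚ) + R.card := by
      have := congrArg (fun x : ℕ => (x : ℚ)) hpart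
      push_cast at this
      linarith
    rw [hmr] at h'
    have hre : ((m:ℚ)+R.card)*((T.card:ℚ)*((k:ℚ)+((T.card:ℚ)-1)*l)) = ((m:ℚ)+(R.card:ℚ))*((l:ℚ)*(T.card:ℚ)^2+((k:ℚ)-l)*T.card) := by
      ring
    nlinarith [h', hre]
  have F2Q : (l:ℚ)*m ≤ (R.card:ℚ)*((k:ℚ)-l) := by
    rcases Nat.eq_zero_or_pos m with h0 | hm1
    · rw [h0]
      push_cast
      have : (0:ℚ) ≤ (R.card:ℚ)*((k:ℚ)-l) := by
        apply mul_nonneg (by positivity)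
        have : (l:ℚ) ≤ (k:ℚ) := by exact_mod_cast hlk.le
        linarith
      linarith
    · have h' : ((m*l : ℕ) : ℚ) ≤ ((R.card*(k-l) : ℕ) : ℚ) := Nat.cast_le.mpr (F2N hm1)
      push_cast [Nat.cast_sub hlk.le] at h'
      linarith
  have F3Q : (l:ℚ)*m ≤ (N.card:ℚ)*((k:ℚ)-l) := by
    rcases Nat.eq_zero_or_pos m with h0 | hm1
    · rw [h0]
      push_cast
      have : (0:ℚ) ≤ (N.card:ℚ)*((k:ℚ)-l) := by
        apply mul_nonneg (by positivity)
        have : (l:ℚ) ≤ (k:ℚ) := by exact_mod_cast hlk.le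
        linarith
      linarith
    · have h' : ((m*l : ℕ) : ℚ) ≤ ((N.card*(k-l) : ℕ) : ℚ) := Nat.cast_le.mpr (F3N hm1)
      push_cast [Nat.cast_sub hlk.le] at h'
      linarith
  have hvQ : (m:ℚ) + S.card + R.card = v := by exact_mod_cast hpart
  have htQ : (m:ℚ) + N.card + T.card = v := by exact_mod_cast hpartT
  have hm1Q : (m:ℚ) = 0 ∨ 1 ≤ (m:ℚ) := by
    rcases Nat.eq_zero_or_pos m with h0 | h1
    · left; exact_mod_cast h0
    · right; exact_mod_cast h1
  exact stmt0_endgame v k l m S.card N.card R.card T.card hrelQ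
    (by exact_mod_cast hl) (by exact_mod_cast hlk) (by positivity)
    (by exact_mod_cast hs1) (by positivity) (by exact_mod_cast hcon')
    (by positivity) hvQ htQ hm1Q F1Q F2Q F3Q F4Q


/-- Let `D = (𝒫, ℬ)` be a symmetric `(v, k, l)`-design and let `(X, Y)` be an
equinumerous incidence-free pair with `X ⊆ 𝒫` and `Y ⊆ ℬ`. Then there is a perfect matching
between `𝒫 \ X` and `ℬ \ Y` in the incidence graph of `D`, i.e. a bijection
`f : 𝒫 \ X → ℬ \ Y` with `p ∈ f p` for every `p`. -/
theorem stmt_0 (v k l : ℕ) (P : Type*) [Fintype P] [DecidableEq P]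
    (ℬ : Finset (Finset P))
    -- D is a symmetric (v, k, l)-design:
    (hv : Fintype.card P = v) (hℬcard : ℬ.card = v)
    (hblock : ∀ C ∈ ℬ, C.card = k)
    (hdeg : ∀ p : P, (ℬ.filter (fun C => p ∈ C)).card = k)
    (hpts : ∀ p q : P, p ≠ q → (ℬ.filter (fun C => p ∈ C ∧ q ∈ C)).card = l)
    (hblocks : ∀ C ∈ ℬ, ∀ D ∈ ℬ, C ≠ D → (C ∩ D).card = l)
    (hl : 0 < l) (hlk : l < k) (hkv : k < v)
    -- (X, Y) is an equinumerous incidence-free pair: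
    (X : Finset P) (Y : Finset (Finset P)) (hY : Y ⊆ ℬ)
    (hfree : ∀ p ∈ X, ∀ C ∈ Y, p ∉ C)
    (hequi : X.card = Y.card) :
    ∃ f : {p : P // p ∉ X} → {C : Finset P // C ∈ ℬ \ Y},
      Function.Bijective f ∧ ∀ p : {p : P // p ∉ X}, (p : P) ∈ (f p : Finset P) := by
  classical
  obtain ⟨f, hfinj, hfmem⟩ := (Finset.all_card_le_biUnion_card_iff_existsInjective'
    (fun p : {p : P // p ∉ X} => (ℬ \ Y).filter (fun C => (p : P) ∈ C))).mp
    (fun σ => stmt0_hall ℬ hv hℬcard hblock hdeg hpts hblocks hl hlk hkv X Y hY hfree hequi σ)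
  have hmem : ∀ p : {p : P // p ∉ X}, f p ∈ ℬ \ Y ∧ (p : P) ∈ f p :=
    fun p => Finset.mem_filter.mp (hfmem p)
  refine ⟨fun p => ⟨f p, (hmem p).1⟩, ?_, fun p => (hmem p).2⟩
  rw [Fintype.bijective_iff_injective_and_card]
  constructor
  · intro p q h
    exact hfinj (congrArg Subtype.val h)
  · have h1 : Fintype.card {p : P // p ∉ X} = v - X.card := by
      simp [Fintype.card_subtype_compl, hv]
    have h2 : Fintype.card {C : Finset P // C ∈ ℬ \ Y} = v - X.card := by
      rw [Fintype.card_coe, Finset.card_sdiff_of_subset hY, hℬcard, ← hequi]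
    rw [h1, h2]
end

section
/- Let G be a finite bipartite graph with parts A and B, and suppose there exists a weight function w assigning to each edge of G a nonnegative real number such that for every vertex v of G the sum of w(e) over all edges e incident to v equals 1. Then |A| = |B| and G has a perfect matching. -/
/-- Let `G` be a finite bipartite graph with parts `A` and `B` (adjacency
relation `E : A → B → Prop`), and suppose there is a nonnegative weight function `w` on the
edges such that at every vertex the incident weights sum to `1` (a perfect fractional
matching). Then `|A| = |B|` and `G` has a perfect matching. -/
theorem stmt_2 (A B : Type*) [Fintype A] [Fintype B]
    (E : A → B → Prop) (w : A → B → ℝ)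
    (hw_nonneg : ∀ a b, 0 ≤ w a b)
    (hw_support : ∀ a b, ¬E a b → w a b = 0)
    (hwA : ∀ a : A, ∑ b : B, w a b = 1)
    (hwB : ∀ b : B, ∑ a : A, w a b = 1) :
    Fintype.card A = Fintype.card B ∧
      ∃ f : A → B, Function.Bijective f ∧ ∀ a : A, E a (f a) := by
  classical
  have hcard : Fintype.card A = Fintype.card B := by
    have h1 : ∑ a : A, ∑ b : B, w a b = (Fintype.card A : ℝ) := by
      simp [hwA]
    have h2 : ∑ a : A, ∑ b : B, w a b = (Fintype.card B : ℝ) := by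
      rw [Finset.sum_comm]; simp [hwB]
    exact_mod_cast h1.symm.trans h2
  refine ⟨hcard, ?_⟩
  set t : A → Finset B := fun a => Finset.univ.filter (fun b => E a b) with ht
  have hall : ∀ S : Finset A, S.card ≤ (S.biUnion t).card := by
    intro S
    have key : (S.card : ℝ) ≤ ((S.biUnion t).card : ℝ) := by
      calc (S.card : ℝ) = ∑ a ∈ S, ∑ b : B, w a b := by simp [hwA]
        _ = ∑ b : B, ∑ a ∈ S, w a b := Finset.sum_comm
        _ = ∑ b ∈ S.biUnion t, ∑ a ∈ S, w a b := by
            refine (Finset.sum_subset (Finset.subset_univ _) ?_).symm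
            intro b _ hb
            apply Finset.sum_eq_zero
            intro a ha
            by_contra hne
            exact hb (Finset.mem_biUnion.mpr ⟨a, ha, by
              simp only [ht, Finset.mem_filter, Finset.mem_univ, true_and]
              by_contra hE
              exact hne (hw_support a b hE)⟩)
        _ ≤ ∑ b ∈ S.biUnion t, ∑ a : A, w a b := by
            apply Finset.sum_le_sum
            intro b _
            exact Finset.sum_le_sum_of_subset_of_nonneg (Finset.subset_univ _)
              (fun a _ _ => hw_nonneg a b)
        _ = ((S.biUnion t).card : ℝ) := by simp [hwB]
    exact_mod_cast key
  obtain ⟨f, hfinj, hf⟩ :=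
    (Finset.all_card_le_biUnion_card_iff_exists_injective t).mp hall
  refine ⟨f, (Fintype.bijective_iff_injective_and_card f).mpr ⟨hfinj, hcard⟩, ?_⟩
  intro a
  have := hf a
  simpa [ht] using this
end

section
/- Let Π be a projective plane of order q and let (X,Y) be an equinumerous incidence-free pair, where X is a set of points of Π and Y is a set of lines of Π. Then there exists a bijection f from the set of points not in X to the set of lines not in Y such that P ∈ f(P) for every point P ∉ X. -/
open Configuration

open Finset

section aux
set_option linter.unusedSectionVars false
variable {P L : Type*} [Membership P L] [ProjectivePlane P L] [Fintype P] [Fintype L]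
  [DecidableEq P] [DecidableEq L] [∀ (p : P) (l : L), Decidable (p ∈ l)]

lemma my_inc_swap (A : Finset P) (B : Finset L) :
    ∑ p ∈ A, (B.filter (fun l => p ∈ l)).card = ∑ l ∈ B, (A.filter (fun p => p ∈ l)).card := by
  simp_rw [Finset.card_filter]
  exact Finset.sum_comm

lemma my_lines_through (p : P) :
    (univ.filter (fun l : L => p ∈ l)).card = ProjectivePlane.order P L + 1 := by
  rw [← ProjectivePlane.lineCount_eq L p, lineCount, Nat.card_eq_fintype_card,
    Fintype.card_subtype]

lemma my_points_on (l : L) :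
    (univ.filter (fun p : P => p ∈ l)).card = ProjectivePlane.order P L + 1 := by
  rw [← ProjectivePlane.pointCount_eq P l, pointCount, Nat.card_eq_fintype_card,
    Fintype.card_subtype]

/-- Pointwise pairing lemma: if no point of `S` lies on a line of `T`, `p ∉ l`, then the
number of lines of `T` through `p` plus the number of points of `S` on `l` is at most `q+1`. -/
lemma my_pointwise (S : Finset P) (T : Finset L)
    (hST : ∀ p ∈ S, ∀ l ∈ T, p ∉ l) {p : P} {l : L} (hp : p ∉ l) :
    (T.filter (fun t => p ∈ t)).card + (S.filter (fun s => s ∈ l)).card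
      ≤ ProjectivePlane.order P L + 1 := by
  set A : Finset P := univ.filter (fun q : P => q ∈ l) with hA
  have hAcard : A.card = ProjectivePlane.order P L + 1 := my_points_on l
  have h1 : (T.filter (fun t => p ∈ t)).card ≤ (A \ S).card := by
    apply Finset.card_le_card_of_injOn
      (fun t => if h : t = l then p else HasPoints.mkPoint (P := P) h)
    · intro t ht
      simp only [mem_filter, Finset.mem_coe] at ht
      have htl : t ≠ l := fun h => hp (h ▸ ht.2)
      simp only [dif_neg htl, Finset.mem_coe, Finset.mem_sdiff, hA, mem_filter, mem_univ, true_and]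
      refine ⟨(HasPoints.mkPoint_ax (P := P) htl).2, fun hmem => ?_⟩
      exact hST _ hmem t ht.1 (HasPoints.mkPoint_ax (P := P) htl).1
    · intro t₁ ht₁ t₂ ht₂ heq
      simp only [Finset.coe_filter, Set.mem_setOf_eq] at ht₁ ht₂
      have h₁ : t₁ ≠ l := fun h => hp (h ▸ ht₁.2)
      have h₂ : t₂ ≠ l := fun h => hp (h ▸ ht₂.2)
      simp only [dif_neg h₁, dif_neg h₂] at heq
      have hx₁ := HasPoints.mkPoint_ax (P := P) h₁
      have hx₂ := HasPoints.mkPoint_ax (P := P) h₂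
      have hxp : HasPoints.mkPoint (P := P) h₁ ≠ p := fun h => hp (h ▸ hx₁.2)
      rcases Nondegenerate.eq_or_eq hx₁.1 ht₁.2 (heq ▸ hx₂.1) ht₂.2 with h | h
      · exact absurd h hxp
      · exact h
  have h2 : (S.filter (fun s => s ∈ l)).card = (A ∩ S).card := by
    congr 1
    ext x
    simp [hA, and_comm]
  have h3 := Finset.card_inter_add_card_sdiff A S
  omega

/-- Key counting lemma. -/
lemma my_key (X : Finset P) (Y : Finset L)
    (hfree : ∀ p ∈ X, ∀ l ∈ Y, p ∉ l) (hcard : X.card = Y.card)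
    (S : Finset P) (T : Finset L) (hSX : ∀ p ∈ S, p ∉ X) (hTY : ∀ l ∈ T, l ∉ Y)
    (hST : ∀ p ∈ S, ∀ l ∈ T, p ∉ l) :
    T.card ≤ ((univ \ X) \ S).card := by
  set k := ProjectivePlane.order P L + 1 with hk
  set R : Finset P := (univ \ X) \ S with hR
  set g : P → ℕ := fun p => (T.filter (fun t => p ∈ t)).card with hg
  set dY : P → ℕ := fun p => (Y.filter (fun t => p ∈ t)).card with hdY
  have hSsub : S ⊆ univ \ X := fun p hp => Finset.mem_sdiff.mpr ⟨mem_univ p, hSX p hp⟩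
  have hXsub : X ⊆ univ := Finset.subset_univ X
  -- splitting sums over univ = X ⊔ S ⊔ R
  have hsplit : ∀ h : P → ℕ, ∑ p ∈ R, h p + ∑ p ∈ S, h p + ∑ p ∈ X, h p = ∑ p : P, h p := by
    intro h
    rw [hR, Finset.sum_sdiff hSsub, Finset.sum_sdiff hXsub]
  -- total incidence of T
  have htotT : ∑ p : P, g p = T.card * k := by
    rw [hg, my_inc_swap univ T]
    rw [Finset.sum_congr rfl (fun l _ => my_points_on l), Finset.sum_const, smul_eq_mul]
  have htotY : ∑ p : P, dY p = Y.card * k := by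
    rw [hdY, my_inc_swap univ Y]
    rw [Finset.sum_congr rfl (fun l _ => my_points_on l), Finset.sum_const, smul_eq_mul]
  -- S contributes 0 to g
  have hSg : ∑ p ∈ S, g p = 0 := by
    refine Finset.sum_eq_zero fun p hp => ?_
    rw [hg, Finset.card_eq_zero]
    exact Finset.filter_eq_empty_iff.mpr fun {l} hl => hST p hp l hl
  -- X contributes 0 to dY
  have hXdY : ∑ p ∈ X, dY p = 0 := by
    refine Finset.sum_eq_zero fun p hp => ?_
    rw [hdY, Finset.card_eq_zero]
    exact Finset.filter_eq_empty_iff.mpr fun {l} hl => hfree p hp l hl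
  -- pointwise bound g p + dY p ≤ k
  have hgdY : ∀ p : P, g p + dY p ≤ k := by
    intro p
    have hdisj : Disjoint (T.filter (fun t => p ∈ t)) (Y.filter (fun t => p ∈ t)) := by
      refine Finset.disjoint_left.mpr fun l hl hl' => ?_
      exact hTY l (Finset.mem_filter.mp hl).1 (Finset.mem_filter.mp hl').1
    calc g p + dY p = ((T.filter (fun t => p ∈ t)) ∪ (Y.filter (fun t => p ∈ t))).card := by
          rw [Finset.card_union_of_disjoint hdisj]
      _ ≤ (univ.filter (fun t : L => p ∈ t)).card := by
          apply Finset.card_le_card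
          exact Finset.union_subset (Finset.filter_subset_filter _ (subset_univ T))
            (Finset.filter_subset_filter _ (subset_univ Y))
      _ = k := my_lines_through p
  have hRbound : ∑ p ∈ R, g p + ∑ p ∈ R, dY p ≤ R.card * k := by
    rw [← Finset.sum_add_distrib]
    calc ∑ p ∈ R, (g p + dY p) ≤ ∑ _p ∈ R, k := Finset.sum_le_sum fun p _ => hgdY p
      _ = R.card * k := by rw [Finset.sum_const, smul_eq_mul]
  -- pairing bound : ∑_{p∈X} g p + ∑_{p∈S} dY p ≤ X.card * k
  have hpair : ∑ p ∈ X, g p + ∑ p ∈ S, dY p ≤ X.card * k := by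
    have hswap : ∑ p ∈ S, dY p = ∑ l ∈ Y, (S.filter (fun s => s ∈ l)).card :=
      my_inc_swap S Y
    -- use equivalence between X and Y
    let e : X ≃ Y := Finset.equivOfCardEq hcard
    have hYsum : ∑ l ∈ Y, (S.filter (fun s => s ∈ l)).card
        = ∑ x : X, (S.filter (fun s => s ∈ (e x : L))).card := by
      rw [← Finset.sum_attach Y (fun l => (S.filter (fun s => s ∈ l)).card)]
      exact (Equiv.sum_comp e (fun y => (S.filter (fun s => s ∈ (y : L))).card)).symm
    have hXsum : ∑ p ∈ X, g p = ∑ x : X, g (x : P) :=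
      (Finset.sum_attach X g).symm
    rw [hswap, hYsum, hXsum, ← Finset.sum_add_distrib]
    calc ∑ x : X, (g (x : P) + (S.filter (fun s => s ∈ (e x : L))).card)
        ≤ ∑ _x : X, k := by
          refine Finset.sum_le_sum fun x _ => ?_
          exact my_pointwise S T hST (hfree _ x.2 _ (e x).2)
      _ = X.card * k := by rw [Finset.sum_const, smul_eq_mul, Finset.card_univ, Fintype.card_coe]
  -- combine
  have e1 := hsplit g
  have e2 := hsplit dY
  have hkpos : 0 < k := Nat.succ_pos _
  have hfin : T.card * k ≤ R.card * k := by
    have hYX : Y.card * k = X.card * k := by rw [hcard]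
    omega
  exact Nat.le_of_mul_le_mul_right hfin hkpos

end aux

/-- Let `Π` be a projective plane of order `q` and let `(X, Y)` be an
equinumerous incidence-free pair of points and lines. Then there is a bijection `f` from
the points not in `X` to the lines not in `Y` such that `p ∈ f p` for every point `p ∉ X`. -/
theorem stmt_3 (q : ℕ) (hq : 2 ≤ q) (P L : Type*) [Membership P L]
    [ProjectivePlane P L] [Fintype P] [Fintype L]
    (horder : ProjectivePlane.order P L = q)
    (X : Set P) (Y : Set L)
    (hfree : ∀ p ∈ X, ∀ l ∈ Y, p ∉ l)
    (hequi : X.ncard = Y.ncard) :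
    ∃ f : {p : P // p ∉ X} → {l : L // l ∉ Y},
      Function.Bijective f ∧ ∀ p : {p : P // p ∉ X}, (p : P) ∈ (f p : L) := by
  classical
  set X' : Finset P := X.toFinset with hX'
  set Y' : Finset L := Y.toFinset with hY'
  have hX'card : X'.card = X.ncard := (Set.ncard_eq_toFinset_card' X).symm
  have hY'card : Y'.card = Y.ncard := (Set.ncard_eq_toFinset_card' Y).symm
  have hXY : X'.card = Y'.card := by rw [hX'card, hY'card, hequi]
  -- cardinalities of the complements
  have hcardP : Fintype.card {p : P // p ∉ X} = Fintype.card P - X'.card := by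
    rw [Fintype.card_subtype_compl, hX', Set.toFinset_card]
  have hcardL : Fintype.card {l : L // l ∉ Y} = Fintype.card L - Y'.card := by
    rw [Fintype.card_subtype_compl, hY', Set.toFinset_card]
  have hPL : Fintype.card P = Fintype.card L :=
    ProjectivePlane.card_points_eq_card_lines P L
  have hcards : Fintype.card {p : P // p ∉ X} = Fintype.card {l : L // l ∉ Y} := by
    rw [hcardP, hcardL, hPL, hXY]
  -- the Hall relation
  set t : {p : P // p ∉ X} → Finset {l : L // l ∉ Y} :=
    fun p => univ.filter (fun l => (p : P) ∈ (l : L)) with ht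
  have hall : ∀ A : Finset {p : P // p ∉ X}, A.card ≤ (A.biUnion t).card := by
    intro A
    set S : Finset P := A.image Subtype.val with hS
    set B : Finset {l : L // l ∉ Y} := A.biUnion t with hB
    set T : Finset L := (univ \ B).image Subtype.val with hT
    have hfree' : ∀ p ∈ X', ∀ l ∈ Y', p ∉ l := by
      intro p hp l hl
      exact hfree p (Set.mem_toFinset.mp hp) l (Set.mem_toFinset.mp hl)
    have hSX : ∀ p ∈ S, p ∉ X' := by
      intro p hp
      obtain ⟨x, -, rfl⟩ := Finset.mem_image.mp hp
      exact fun h => x.2 (Set.mem_toFinset.mp h)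
    have hTY : ∀ l ∈ T, l ∉ Y' := by
      intro l hl
      obtain ⟨x, -, rfl⟩ := Finset.mem_image.mp hl
      exact fun h => x.2 (Set.mem_toFinset.mp h)
    have hST : ∀ p ∈ S, ∀ l ∈ T, p ∉ l := by
      intro p hp l hl hmem
      obtain ⟨x, hxA, rfl⟩ := Finset.mem_image.mp hp
      obtain ⟨y, hyB, rfl⟩ := Finset.mem_image.mp hl
      have : y ∈ B := Finset.mem_biUnion.mpr ⟨x, hxA, by
        rw [ht]; exact Finset.mem_filter.mpr ⟨mem_univ y, hmem⟩⟩
      exact (Finset.mem_sdiff.mp hyB).2 this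
    have hkey := my_key X' Y' hfree' hXY S T hSX hTY hST
    -- card computations
    have hScard : S.card = A.card :=
      Finset.card_image_of_injective A Subtype.val_injective
    have hTcard : T.card = Fintype.card {l : L // l ∉ Y} - B.card := by
      rw [hT, Finset.card_image_of_injective _ Subtype.val_injective,
        Finset.card_sdiff_of_subset (subset_univ B), Finset.card_univ]
    have hRcard : ((univ \ X') \ S).card = Fintype.card P - X'.card - S.card := by
      rw [Finset.card_sdiff_of_subset, Finset.card_sdiff_of_subset (subset_univ X'), Finset.card_univ]
      intro p hp
      exact Finset.mem_sdiff.mpr ⟨mem_univ p, hSX p hp⟩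
    have hBle : B.card ≤ Fintype.card {l : L // l ∉ Y} := by
      rw [← Finset.card_univ]; exact Finset.card_le_card (subset_univ B)
    have hAle : A.card ≤ Fintype.card {p : P // p ∉ X} := by
      rw [← Finset.card_univ]; exact Finset.card_le_card (subset_univ A)
    rw [hTcard, hRcard, hScard] at hkey
    omega
  obtain ⟨f, hfinj, hf⟩ := (Finset.all_card_le_biUnion_card_iff_exists_injective t).mp hall
  refine ⟨f, (Fintype.bijective_iff_injective_and_card f).mpr ⟨hfinj, hcards⟩, fun p => ?_⟩
  have := hf p
  rw [ht] at this
  exact (Finset.mem_filter.mp this).2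
end

section
/- Let Π be a projective plane of order q and suppose there exist chambers (P₁,ℓ₁),…,(P_t,ℓ_t) of Π, with t ≤ q²+q+1, such that every chamber (P,ℓ) of Π satisfies P = P_i or ℓ = ℓ_i for some i ∈ {1,…,t}. Then Π admits an equinumerous incidence-free pair (X,Y) with X a set of points, Y a set of lines, and |X| = |Y| = q²+q+1−t. -/
open Configuration

/-- Let `Π` be a projective plane of order `q` and suppose there are chambers
`(P₁, ℓ₁), …, (P_t, ℓ_t)`, with `t ≤ q² + q + 1`, such that every chamber `(P, ℓ)` satisfies
`P = P_i` or `ℓ = ℓ_i` for some `i`. Then `Π` admits an equinumerous incidence-free pair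
`(X, Y)` with `|X| = |Y| = q² + q + 1 − t`. -/
theorem stmt_4 (q : ℕ) (hq : 2 ≤ q) (P L : Type*) [Membership P L]
    [ProjectivePlane P L] [Fintype P] [Fintype L]
    (horder : ProjectivePlane.order P L = q)
    (t : ℕ) (ht : t ≤ q ^ 2 + q + 1)
    (Pt : Fin t → P) (ln : Fin t → L)
    (hchamber : ∀ i : Fin t, Pt i ∈ ln i)
    (hcover : ∀ (Q : P) (m : L), Q ∈ m → ∃ i : Fin t, Q = Pt i ∨ m = ln i) :
    ∃ (X : Set P) (Y : Set L),
      (∀ p ∈ X, ∀ l ∈ Y, p ∉ l) ∧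
      X.ncard = q ^ 2 + q + 1 - t ∧ Y.ncard = q ^ 2 + q + 1 - t := by
  classical
  have hcardP : Fintype.card P = q ^ 2 + q + 1 := by
    rw [ProjectivePlane.card_points P L, horder]
  have hcardL : Fintype.card L = q ^ 2 + q + 1 := by
    rw [ProjectivePlane.card_lines P L, horder]
  -- candidate big sets
  set X0 : Set P := (Set.range Pt)ᶜ with hX0
  set Y0 : Set L := (Set.range ln)ᶜ with hY0
  have hXcard : q ^ 2 + q + 1 - t ≤ X0.ncard := by
    have h1 : (Set.range Pt).ncard + X0.ncard = Fintype.card P := by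
      rw [hX0]
      simpa [Nat.card_eq_fintype_card] using
        Set.ncard_add_ncard_compl (Set.range Pt)
    have h2 : (Set.range Pt).ncard ≤ t := by
      calc (Set.range Pt).ncard = (Pt '' Set.univ).ncard := by rw [Set.image_univ]
        _ ≤ (Set.univ : Set (Fin t)).ncard := Set.ncard_image_le Set.finite_univ
        _ = t := by simp [Set.ncard_univ]
    omega
  have hYcard : q ^ 2 + q + 1 - t ≤ Y0.ncard := by
    have h1 : (Set.range ln).ncard + Y0.ncard = Fintype.card L := by
      rw [hY0]
      simpa [Nat.card_eq_fintype_card] using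
        Set.ncard_add_ncard_compl (Set.range ln)
    have h2 : (Set.range ln).ncard ≤ t := by
      calc (Set.range ln).ncard = (ln '' Set.univ).ncard := by rw [Set.image_univ]
        _ ≤ (Set.univ : Set (Fin t)).ncard := Set.ncard_image_le Set.finite_univ
        _ = t := by simp [Set.ncard_univ]
    omega
  obtain ⟨X, hXsub, hXc⟩ := Set.exists_subset_card_eq hXcard
  obtain ⟨Y, hYsub, hYc⟩ := Set.exists_subset_card_eq hYcard
  refine ⟨X, Y, ?_, hXc, hYc⟩
  intro p hp l hl hpl
  obtain ⟨i, h | h⟩ := hcover p l hpl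
  · exact hXsub hp ⟨i, h.symm⟩
  · exact hYsub hl ⟨i, h.symm⟩
end

section
/- Let Π be a projective plane of order q. If Π admits an equinumerous incidence-free pair (X,Y) with |X| = |Y| = s, then the chromatic number of the Kneser graph Γ_q on chambers of Π satisfies χ(Γ_q) ≤ q²+q+1−s. -/
open Configuration

/-- The Kneser graph on chambers (incident point-line pairs) of a point-line geometry:
two chambers `(P₁, ℓ₁)` and `(P₂, ℓ₂)` are adjacent iff `P₁ ∉ ℓ₂` and `P₂ ∉ ℓ₁`. -/
def chamberKneserGraph (P L : Type*) [Membership P L] :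
    SimpleGraph {c : P × L // c.1 ∈ c.2} where
  Adj c d := (c : P × L).1 ∉ (d : P × L).2 ∧ (d : P × L).1 ∉ (c : P × L).2
  symm := ⟨fun _ _ h => ⟨h.2, h.1⟩⟩
  loopless := ⟨fun c h => h.1 c.2⟩

section Aux

open Finset
open scoped Classical


variable {P L : Type*} [Membership P L] [ProjectivePlane P L] [Fintype P] [Fintype L]

lemma dc2 (A : Finset P) (B : Finset L) :
    ∑ p ∈ A, (B.filter (fun ℓ => p ∈ ℓ)).card = ∑ ℓ ∈ B, (A.filter (fun p => p ∈ ℓ)).card := by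
  simp_rw [Finset.card_filter]
  exact Finset.sum_comm

lemma ptscard (ℓ : L) :
    (univ.filter (fun p : P => p ∈ ℓ)).card = ProjectivePlane.order P L + 1 := by
  have h := ProjectivePlane.pointCount_eq P ℓ
  rwa [pointCount, Nat.card_eq_fintype_card, Fintype.card_subtype] at h

lemma lnscard (p : P) :
    (univ.filter (fun ℓ : L => p ∈ ℓ)).card = ProjectivePlane.order P L + 1 := by
  have h := ProjectivePlane.lineCount_eq L p
  rwa [lineCount, Nat.card_eq_fintype_card, Fintype.card_subtype] at h

set_option linter.unusedSectionVars false

lemma keyPW (S : Finset P) (T : Finset L) (x : P) (ℓ : L) (hx : x ∉ ℓ)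
    (hTl : ℓ ∉ T) (hTS : ∀ m ∈ T, ∀ p ∈ S, p ∉ m) :
    (T.filter (fun m => x ∈ m)).card + (S.filter (fun p => p ∈ ℓ)).card
      ≤ ProjectivePlane.order P L + 1 := by
  set f : L → P := fun m => if h : m = ℓ then x else HasPoints.mkPoint h with hf
  have hfm : ∀ m ∈ T.filter (fun m => x ∈ m), f m ∈ m ∧ f m ∈ ℓ := by
    intro m hm
    simp only [mem_filter] at hm
    have hne : m ≠ ℓ := fun h => hTl (h ▸ hm.1)
    simp only [hf, dif_neg hne]
    exact HasPoints.mkPoint_ax hne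
  have hinj : Set.InjOn f (T.filter (fun m => x ∈ m)) := by
    intro m₁ h₁ m₂ h₂ he
    have hx₁ : x ∈ m₁ := (mem_filter.mp h₁).2
    have hx₂ : x ∈ m₂ := (mem_filter.mp h₂).2
    have hr₁ := hfm m₁ h₁
    have hr₂ := hfm m₂ h₂
    rw [he] at hr₁
    rcases Nondegenerate.eq_or_eq hx₁ hr₁.1 hx₂ hr₂.1 with h | h
    · exact absurd (h ▸ hr₂.2) hx
    · exact h
  have hsub : (T.filter (fun m => x ∈ m)).image f ∪ S.filter (fun p => p ∈ ℓ)
      ⊆ univ.filter (fun p : P => p ∈ ℓ) := by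
    intro p hp
    rcases mem_union.mp hp with hp | hp
    · obtain ⟨m, hm, rfl⟩ := mem_image.mp hp
      exact mem_filter.mpr ⟨mem_univ _, (hfm m hm).2⟩
    · exact mem_filter.mpr ⟨mem_univ _, (mem_filter.mp hp).2⟩
  have hdisj : Disjoint ((T.filter (fun m => x ∈ m)).image f) (S.filter (fun p => p ∈ ℓ)) := by
    rw [Finset.disjoint_left]
    rintro p hp hp'
    obtain ⟨m, hm, rfl⟩ := mem_image.mp hp
    exact hTS m (mem_filter.mp hm).1 _ (mem_filter.mp hp').1 (hfm m hm).1
  calc (T.filter (fun m => x ∈ m)).card + (S.filter (fun p => p ∈ ℓ)).card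
      = ((T.filter (fun m => x ∈ m)).image f).card + (S.filter (fun p => p ∈ ℓ)).card := by
        rw [Finset.card_image_of_injOn hinj]
    _ = ((T.filter (fun m => x ∈ m)).image f ∪ S.filter (fun p => p ∈ ℓ)).card :=
        (Finset.card_union_of_disjoint hdisj).symm
    _ ≤ (univ.filter (fun p : P => p ∈ ℓ)).card := Finset.card_le_card hsub
    _ = ProjectivePlane.order P L + 1 := ptscard ℓ

lemma hall_aux (X : Set P) (Y : Set L)
    (hfree : ∀ p ∈ X, ∀ l ∈ Y, p ∉ l)
    (hXY : X.toFinset.card = Y.toFinset.card)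
    (S : Finset P) (hSX : ∀ p ∈ S, p ∉ X) :
    S.card ≤ (univ.filter (fun ℓ : L => ℓ ∉ Y ∧ ∃ p ∈ S, p ∈ ℓ)).card := by
  set q := ProjectivePlane.order P L with hqdef
  set Xf := X.toFinset with hXf
  set Yf := Y.toFinset with hYf
  set N := univ.filter (fun ℓ : L => ℓ ∉ Y ∧ ∃ p ∈ S, p ∈ ℓ) with hN
  set T := univ.filter (fun ℓ : L => ℓ ∉ Y ∧ ∀ p ∈ S, p ∉ ℓ) with hT
  set R := (univ : Finset P) \ (S ∪ Xf) with hR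
  -- basic disjointness facts
  have hTmiss : ∀ m ∈ T, ∀ p ∈ S, p ∉ m := fun m hm => (mem_filter.mp hm).2.2
  have hTY : ∀ m ∈ T, m ∉ Y := fun m hm => (mem_filter.mp hm).2.1
  have hSXf : Disjoint S Xf := by
    rw [Finset.disjoint_left]
    intro p hp hp'
    exact hSX p hp (Set.mem_toFinset.mp hp')
  have hTYf : Disjoint T Yf := by
    rw [Finset.disjoint_left]
    intro m hm hm'
    exact hTY m hm (Set.mem_toFinset.mp hm')
  -- the central counting inequality : T.card ≤ R.card
  have hcount : T.card ≤ R.card := by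
    have base : (T ∪ Yf).card * (q + 1) = ∑ p : P, ((T ∪ Yf).filter (fun ℓ => p ∈ ℓ)).card := by
      rw [dc2 univ (T ∪ Yf), Finset.sum_congr rfl (fun ℓ _ => ptscard ℓ), Finset.sum_const,
        smul_eq_mul]
    -- split the sum over univ = S ∪ Xf ∪ R
    have hsplit : ∑ p : P, ((T ∪ Yf).filter (fun ℓ => p ∈ ℓ)).card
        = ∑ p ∈ S, ((T ∪ Yf).filter (fun ℓ => p ∈ ℓ)).card
          + ∑ p ∈ Xf, ((T ∪ Yf).filter (fun ℓ => p ∈ ℓ)).card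
          + ∑ p ∈ R, ((T ∪ Yf).filter (fun ℓ => p ∈ ℓ)).card := by
      rw [← Finset.sum_union hSXf, ← Finset.sum_union (Finset.disjoint_sdiff)]
      congr 1
      rw [Finset.union_sdiff_of_subset (Finset.subset_univ _)]
    -- term over S
    have hSterm : ∀ p ∈ S, ((T ∪ Yf).filter (fun ℓ => p ∈ ℓ)).card
        = (Yf.filter (fun ℓ => p ∈ ℓ)).card := by
      intro p hp
      congr 1
      rw [Finset.filter_union]
      rw [Finset.filter_false_of_mem (fun m hm => hTmiss m hm p hp), Finset.empty_union]
    -- term over Xf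
    have hXterm : ∀ x ∈ Xf, ((T ∪ Yf).filter (fun ℓ => x ∈ ℓ)).card
        = (T.filter (fun ℓ => x ∈ ℓ)).card := by
      intro x hx
      congr 1
      rw [Finset.filter_union]
      rw [Finset.filter_false_of_mem
        (fun m hm => hfree x (Set.mem_toFinset.mp hx) m (Set.mem_toFinset.mp hm)), Finset.union_empty]
    -- term over R
    have hRterm : ∀ p ∈ R, ((T ∪ Yf).filter (fun ℓ => p ∈ ℓ)).card ≤ q + 1 := by
      intro p _
      calc ((T ∪ Yf).filter (fun ℓ => p ∈ ℓ)).card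
          ≤ (univ.filter (fun ℓ : L => p ∈ ℓ)).card :=
            Finset.card_le_card (Finset.filter_subset_filter _ (Finset.subset_univ _))
        _ = q + 1 := lnscard p
    -- the S-sum flipped
    have hflip : ∑ p ∈ S, (Yf.filter (fun ℓ => p ∈ ℓ)).card
        = ∑ ℓ ∈ Yf, (S.filter (fun p => p ∈ ℓ)).card := dc2 S Yf
    -- bound the middle two sums by Yf.card * (q+1) using keyPW
    have hmid : ∑ x ∈ Xf, (T.filter (fun ℓ => x ∈ ℓ)).card
        + ∑ ℓ ∈ Yf, (S.filter (fun p => p ∈ ℓ)).card ≤ Yf.card * (q + 1) := by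
      rcases Finset.eq_empty_or_nonempty Xf with he | hne
      · have hYe : Yf = ∅ := Finset.card_eq_zero.mp (by rw [← hXY, he, Finset.card_empty])
        simp [he, hYe]
      · have hYne : Yf.Nonempty := Finset.card_pos.mp (hXY ▸ Finset.card_pos.mpr hne)
        obtain ⟨x₀, hx₀, hx₀max⟩ := Finset.exists_max_image Xf
          (fun x => (T.filter (fun ℓ => x ∈ ℓ)).card) hne
        obtain ⟨ℓ₀, hℓ₀, hℓ₀max⟩ := Finset.exists_max_image Yf
          (fun ℓ => (S.filter (fun p => p ∈ ℓ)).card) hYne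
        have hkey : (T.filter (fun ℓ => x₀ ∈ ℓ)).card + (S.filter (fun p => p ∈ ℓ₀)).card
            ≤ q + 1 := by
          refine keyPW S T x₀ ℓ₀ ?_ ?_ hTmiss
          · exact hfree x₀ (Set.mem_toFinset.mp hx₀) ℓ₀ (Set.mem_toFinset.mp hℓ₀)
          · exact fun h => hTY ℓ₀ h (Set.mem_toFinset.mp hℓ₀)
        calc ∑ x ∈ Xf, (T.filter (fun ℓ => x ∈ ℓ)).card
              + ∑ ℓ ∈ Yf, (S.filter (fun p => p ∈ ℓ)).card
            ≤ Xf.card * (T.filter (fun ℓ => x₀ ∈ ℓ)).card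
              + Yf.card * (S.filter (fun p => p ∈ ℓ₀)).card := by
              gcongr
              · exact Finset.sum_le_card_nsmul _ _ _ (fun x hx => hx₀max x hx)
              · exact Finset.sum_le_card_nsmul _ _ _ (fun ℓ hℓ => hℓ₀max ℓ hℓ)
          _ = Yf.card * ((T.filter (fun ℓ => x₀ ∈ ℓ)).card + (S.filter (fun p => p ∈ ℓ₀)).card) := by
              rw [hXY]; ring
          _ ≤ Yf.card * (q + 1) := Nat.mul_le_mul_left _ hkey
    -- assemble
    have hcards : (T ∪ Yf).card = T.card + Yf.card := Finset.card_union_of_disjoint hTYf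
    have hfinal : (T.card + Yf.card) * (q + 1) ≤ Yf.card * (q + 1) + R.card * (q + 1) := by
      calc (T.card + Yf.card) * (q + 1) = (T ∪ Yf).card * (q + 1) := by rw [hcards]
        _ = ∑ p : P, ((T ∪ Yf).filter (fun ℓ => p ∈ ℓ)).card := base
        _ = ∑ p ∈ S, ((T ∪ Yf).filter (fun ℓ => p ∈ ℓ)).card
            + ∑ p ∈ Xf, ((T ∪ Yf).filter (fun ℓ => p ∈ ℓ)).card
            + ∑ p ∈ R, ((T ∪ Yf).filter (fun ℓ => p ∈ ℓ)).card := hsplit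
        _ ≤ ∑ ℓ ∈ Yf, (S.filter (fun p => p ∈ ℓ)).card
            + ∑ x ∈ Xf, (T.filter (fun ℓ => x ∈ ℓ)).card + R.card * (q + 1) := by
            rw [Finset.sum_congr rfl hSterm, Finset.sum_congr rfl hXterm, hflip]
            have hRsum : ∑ p ∈ R, ((T ∪ Yf).filter (fun ℓ => p ∈ ℓ)).card ≤ R.card * (q + 1) := by
              simpa [smul_eq_mul] using
                Finset.sum_le_card_nsmul R (fun p => ((T ∪ Yf).filter (fun ℓ => p ∈ ℓ)).card)
                  (q + 1) hRterm
            omega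
        _ ≤ Yf.card * (q + 1) + R.card * (q + 1) := by omega
    have h2 := hfinal
    rw [show Yf.card * (q + 1) + R.card * (q + 1) = (Yf.card + R.card) * (q + 1) by ring] at h2
    have h3 := Nat.le_of_mul_le_mul_right h2 (Nat.succ_pos q)
    omega
  -- partition of lines : N.card + T.card + Yf.card = card L
  have hNT : Disjoint N T := by
    rw [Finset.disjoint_left]
    intro m hm hm'
    obtain ⟨p, hp, hpm⟩ := (mem_filter.mp hm).2.2
    exact (mem_filter.mp hm').2.2 p hp hpm
  have hNTunion : N ∪ T = univ.filter (fun ℓ : L => ℓ ∉ Y) := by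
    ext m
    simp only [hN, hT, mem_union, mem_filter, mem_univ, true_and]
    constructor
    · rintro (⟨h1, _⟩ | ⟨h1, _⟩) <;> exact h1
    · intro h1
      by_cases h : ∃ p ∈ S, p ∈ m
      · exact Or.inl ⟨h1, h⟩
      · push_neg at h
        exact Or.inr ⟨h1, h⟩
  have hLpart : N.card + T.card + Yf.card = Fintype.card L := by
    have h2 : Yf.card = (univ.filter (fun ℓ : L => ℓ ∈ Y)).card := by
      congr 1; ext m; simp [hYf, Set.mem_toFinset]
    have h3 := Finset.card_filter_add_card_filter_not
      (s := (univ : Finset L)) (p := fun ℓ : L => ℓ ∈ Y)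
    have h4 : (N ∪ T).card = N.card + T.card := Finset.card_union_of_disjoint hNT
    rw [hNTunion] at h4
    rw [Finset.card_univ] at h3
    omega
  have hPpart : S.card + Xf.card + R.card = Fintype.card P := by
    have h1 : R.card + (S ∪ Xf).card = Fintype.card P := by
      rw [hR, Finset.card_sdiff_add_card_eq_card (Finset.subset_univ (S ∪ Xf)),
        Finset.card_univ]
    have h4 := Finset.card_union_of_disjoint hSXf
    omega
  have hPL := ProjectivePlane.card_points_eq_card_lines P L
  omega

lemma exists_incidence_bijection (X : Set P) (Y : Set L)
    (hfree : ∀ p ∈ X, ∀ l ∈ Y, p ∉ l)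
    (hXY : X.toFinset.card = Y.toFinset.card) :
    ∃ g : {p : P // p ∉ X} → {ℓ : L // ℓ ∉ Y},
      Function.Bijective g ∧ ∀ p, p.1 ∈ (g p).1 := by
  set t : {p : P // p ∉ X} → Finset {ℓ : L // ℓ ∉ Y} :=
    fun p => univ.filter (fun ℓ => p.1 ∈ ℓ.1) with ht
  have hall : ∀ (S : Finset {p : P // p ∉ X}), S.card ≤ (S.biUnion t).card := by
    intro S
    set S' : Finset P := S.image Subtype.val with hS'
    have hcard : S.card = S'.card := (Finset.card_image_of_injective S Subtype.val_injective).symm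
    have himg : (S.biUnion t).image Subtype.val
        = univ.filter (fun ℓ : L => ℓ ∉ Y ∧ ∃ p ∈ S', p ∈ ℓ) := by
      ext ℓ
      simp only [Finset.mem_image, Finset.mem_biUnion, ht, Finset.mem_filter, Finset.mem_univ,
        true_and, hS']
      constructor
      · rintro ⟨⟨ℓ', hℓ'Y⟩, ⟨⟨p, hp, hpl⟩, rfl⟩⟩
        exact ⟨hℓ'Y, p.1, ⟨p, hp, rfl⟩, hpl⟩
      · rintro ⟨hℓY, p, ⟨ps, hps, rfl⟩, hpl⟩
        exact ⟨⟨ℓ, hℓY⟩, ⟨ps, hps, hpl⟩, rfl⟩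
    have h2 : (S.biUnion t).card = (univ.filter (fun ℓ : L => ℓ ∉ Y ∧ ∃ p ∈ S', p ∈ ℓ)).card := by
      rw [← himg, Finset.card_image_of_injective _ Subtype.val_injective]
    rw [hcard, h2]
    refine hall_aux X Y hfree hXY S' ?_
    intro p hp
    obtain ⟨ps, _, rfl⟩ := Finset.mem_image.mp hp
    exact ps.2
  obtain ⟨g, hginj, hgmem⟩ := (Finset.all_card_le_biUnion_card_iff_exists_injective t).mp hall
  refine ⟨g, ?_, fun p => ?_⟩
  · rw [Fintype.bijective_iff_injective_and_card]
    refine ⟨hginj, ?_⟩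
    have hX' : Fintype.card {p : P // p ∈ X} = X.toFinset.card := by
      rw [Set.toFinset_card]
    have hY' : Fintype.card {ℓ : L // ℓ ∈ Y} = Y.toFinset.card := by
      rw [Set.toFinset_card]
    have h1 := Fintype.card_subtype_compl (fun p : P => p ∈ X)
    have h2 := Fintype.card_subtype_compl (fun ℓ : L => ℓ ∈ Y)
    have hPL := ProjectivePlane.card_points_eq_card_lines P L
    -- card {p // p ∉ X} vs card {p // ¬ p ∈ X}
    rw [h1, h2, hX', hY', hXY, hPL]
  · have := hgmem p
    rw [ht] at this
    exact (Finset.mem_filter.mp this).2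

end Aux

/-- Let `Π` be a projective plane of order `q`. If `Π` admits an
equinumerous incidence-free pair `(X, Y)` with `|X| = |Y| = s`, then the chromatic number
of the Kneser graph `Γ_q` on chambers of `Π` satisfies `χ(Γ_q) ≤ q² + q + 1 − s`. -/
theorem stmt_6 (q : ℕ) (hq : 2 ≤ q) (P L : Type*) [Membership P L]
    [ProjectivePlane P L] [Fintype P] [Fintype L]
    (horder : ProjectivePlane.order P L = q)
    (s : ℕ) (X : Set P) (Y : Set L)
    (hfree : ∀ p ∈ X, ∀ l ∈ Y, p ∉ l)
    (hX : X.ncard = s) (hY : Y.ncard = s) :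
    (chamberKneserGraph P L).chromaticNumber ≤ (q ^ 2 + q + 1 - s : ℕ) := by
  classical
  have hXc : X.toFinset.card = s := by rw [← Set.ncard_eq_toFinset_card']; exact hX
  have hYc : Y.toFinset.card = s := by rw [← Set.ncard_eq_toFinset_card']; exact hY
  obtain ⟨g, hgbij, hgmem⟩ := exists_incidence_bijection X Y hfree (by rw [hXc, hYc])
  set e := Equiv.ofBijective g hgbij with he
  set col : {c : P × L // c.1 ∈ c.2} → {p : P // p ∉ X} := fun c =>
    if h : c.1.1 ∈ X then e.symm ⟨c.1.2, fun hY' => hfree _ h _ hY' c.2⟩ else ⟨c.1.1, h⟩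
    with hcol
  have hvalid : ∀ {a b}, (chamberKneserGraph P L).Adj a b → col a ≠ col b := by
    intro a b hab heq
    obtain ⟨h1, h2⟩ := hab
    by_cases ha : a.1.1 ∈ X <;> by_cases hb : b.1.1 ∈ X
    · rw [hcol] at heq
      simp only [dif_pos ha, dif_pos hb] at heq
      have := e.symm.injective heq
      have hlines : a.1.2 = b.1.2 := congrArg Subtype.val this
      exact h2 (hlines ▸ b.2)
    · rw [hcol] at heq
      simp only [dif_pos ha, dif_neg hb] at heq
      have h3 : (⟨a.1.2, fun hY' => hfree _ ha _ hY' a.2⟩ : {ℓ : L // ℓ ∉ Y})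
          = g ⟨b.1.1, hb⟩ := by
        rw [← Equiv.apply_symm_apply e ⟨a.1.2, fun hY' => hfree _ ha _ hY' a.2⟩, heq]
        rfl
      have h4 : a.1.2 = (g ⟨b.1.1, hb⟩).1 := congrArg Subtype.val h3
      exact h2 (h4 ▸ hgmem ⟨b.1.1, hb⟩)
    · rw [hcol] at heq
      simp only [dif_neg ha, dif_pos hb] at heq
      have h3 : (⟨b.1.2, fun hY' => hfree _ hb _ hY' b.2⟩ : {ℓ : L // ℓ ∉ Y})
          = g ⟨a.1.1, ha⟩ := by
        rw [← Equiv.apply_symm_apply e ⟨b.1.2, fun hY' => hfree _ hb _ hY' b.2⟩, ← heq]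
        rfl
      have h4 : b.1.2 = (g ⟨a.1.1, ha⟩).1 := congrArg Subtype.val h3
      exact h1 (h4 ▸ hgmem ⟨a.1.1, ha⟩)
    · rw [hcol] at heq
      simp only [dif_neg ha, dif_neg hb] at heq
      have h3 : a.1.1 = b.1.1 := congrArg Subtype.val heq
      exact h1 (h3 ▸ b.2)
  have C : (chamberKneserGraph P L).Coloring {p : P // p ∉ X} :=
    SimpleGraph.Coloring.mk col fun hab => hvalid hab
  have hcolorable := C.colorable
  have hcard : Fintype.card {p : P // p ∉ X} = q ^ 2 + q + 1 - s := by
    have h1 := Fintype.card_subtype_compl (fun p : P => p ∈ X)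
    have h2 : Fintype.card {p : P // p ∈ X} = s := by
      rw [← Set.toFinset_card, hXc]
    have h3 : Fintype.card P = q ^ 2 + q + 1 := by
      rw [ProjectivePlane.card_points P L, horder]
    rw [h1, h2, h3]
  rw [hcard] at hcolorable
  exact hcolorable.chromaticNumber_le
end

section
/- Let Π be a projective plane of order q and let ℱ be a nonempty maximal independent set of the Kneser graph Γ_q on chambers of Π. Then either there exists a chamber (P,ℓ) such that every chamber of ℱ has line ℓ or point P (in which case |ℱ| = 2q+1), or |ℱ| = 3 and the three points of the chambers of ℱ are not collinear. -/
open Configuration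

lemma kneser_adj {P L : Type*} [Membership P L] (c d : {c : P × L // c.1 ∈ c.2}) :
    (chamberKneserGraph P L).Adj c d ↔ (c : P × L).1 ∉ (d : P × L).2 ∧ (d : P × L).1 ∉ (c : P × L).2 :=
  Iff.rfl

section Aux

variable {P L : Type*} [Membership P L] [ProjectivePlane P L]

/-- size of a pencil coclique -/
lemma coclique_ncard [Fintype P] [Fintype L] (P₀ : P) (l₀ : L) (h₀ : P₀ ∈ l₀) :
    ({c : {c : P × L // c.1 ∈ c.2} | (c : P × L).1 = P₀ ∨ (c : P × L).2 = l₀}).ncard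
      = 2 * ProjectivePlane.order P L + 1 := by
  classical
  set A : Set {c : P × L // c.1 ∈ c.2} := {c | (c : P × L).1 = P₀} with hAdef
  set B : Set {c : P × L // c.1 ∈ c.2} := {c | (c : P × L).2 = l₀} with hBdef
  have hA : A.ncard = ProjectivePlane.order P L + 1 := by
    rw [← Nat.card_coe_set_eq]
    have e : A ≃ {l : L // P₀ ∈ l} :=
      { toFun := fun x => ⟨x.1.1.2, by
          have h : x.1.1.1 = P₀ := x.2
          rw [← h]; exact x.1.2⟩
        invFun := fun l => ⟨⟨⟨P₀, l.1⟩, l.2⟩, rfl⟩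
        left_inv := by rintro ⟨⟨⟨p, l⟩, hpl⟩, h⟩; have h' : p = P₀ := h; subst h'; rfl
        right_inv := fun l => rfl }
    rw [Nat.card_congr e]
    exact ProjectivePlane.lineCount_eq L P₀
  have hB : B.ncard = ProjectivePlane.order P L + 1 := by
    rw [← Nat.card_coe_set_eq]
    have e : B ≃ {p : P // p ∈ l₀} :=
      { toFun := fun x => ⟨x.1.1.1, by
          have h : x.1.1.2 = l₀ := x.2
          rw [← h]; exact x.1.2⟩
        invFun := fun p => ⟨⟨⟨p.1, l₀⟩, p.2⟩, rfl⟩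
        left_inv := by rintro ⟨⟨⟨p, l⟩, hpl⟩, h⟩; have h' : l = l₀ := h; subst h'; rfl
        right_inv := fun p => rfl }
    rw [Nat.card_congr e]
    exact ProjectivePlane.pointCount_eq P l₀
  have hAB : A ∩ B = {(⟨⟨P₀, l₀⟩, h₀⟩ : {c : P × L // c.1 ∈ c.2})} := by
    ext c
    constructor
    · rintro ⟨h1, h2⟩
      have h1' : (c : P × L).1 = P₀ := h1
      have h2' : (c : P × L).2 = l₀ := h2
      exact Subtype.ext (Prod.ext h1' h2')
    · rintro rfl; exact ⟨rfl, rfl⟩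
  have key := Set.ncard_union_add_ncard_inter A B (Set.toFinite A) (Set.toFinite B)
  rw [hAB, Set.ncard_singleton] at key
  have hU : {c : {c : P × L // c.1 ∈ c.2} | (c : P × L).1 = P₀ ∨ (c : P × L).2 = l₀} = A ∪ B := rfl
  rw [hU]
  omega

/-- a maximal independent set cannot have exactly two chambers with distinct points and lines -/
lemma not_two (ℱ : Set {c : P × L // c.1 ∈ c.2})
    (hindep : ∀ c ∈ ℱ, ∀ d ∈ ℱ, ¬(chamberKneserGraph P L).Adj c d)
    (hmax : ∀ S : Set {c : P × L // c.1 ∈ c.2},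
      (∀ c ∈ S, ∀ d ∈ S, ¬(chamberKneserGraph P L).Adj c d) → ℱ ⊆ S → S = ℱ)
    (c1 c2 : {c : P × L // c.1 ∈ c.2}) (hc1 : c1 ∈ ℱ) (hc2 : c2 ∈ ℱ)
    (hp : (c1 : P × L).1 ≠ (c2 : P × L).1) (hl : (c1 : P × L).2 ≠ (c2 : P × L).2)
    (hmem : ∀ c ∈ ℱ, c = c1 ∨ c = c2) (h12 : (c1 : P × L).1 ∈ (c2 : P × L).2) : False := by
  set e : {c : P × L // c.1 ∈ c.2} := ⟨⟨(c1 : P × L).1, (c2 : P × L).2⟩, h12⟩ with hedef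
  have he1 : e ≠ c1 := fun h => hl (by rw [← h])
  have he2 : e ≠ c2 := fun h => hp (by rw [← h])
  have hnadj : ∀ b ∈ ℱ, ¬(chamberKneserGraph P L).Adj e b ∧ ¬(chamberKneserGraph P L).Adj b e := by
    intro b hb
    rcases hmem b hb with rfl | rfl
    · constructor
      · intro hadj; exact hadj.2 h12
      · intro hadj; exact hadj.1 h12
    · constructor
      · intro hadj; exact hadj.1 h12
      · intro hadj; exact hadj.2 h12
  have hSind : ∀ c ∈ insert e ℱ, ∀ d ∈ insert e ℱ, ¬(chamberKneserGraph P L).Adj c d := by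
    intro c hc d hd
    rcases Set.mem_insert_iff.1 hc with rfl | hc <;> rcases Set.mem_insert_iff.1 hd with rfl | hd
    · exact fun hadj => hadj.1 e.2
    · exact (hnadj d hd).1
    · exact (hnadj c hc).2
    · exact hindep c hc d hd
  have hS := hmax _ hSind (Set.subset_insert e ℱ)
  have : e ∈ ℱ := hS ▸ Set.mem_insert e ℱ
  rcases hmem e this with h | h
  · exact he1 h
  · exact he2 h

/-- the triangle case -/
lemma triangle_case [Fintype P] [Fintype L] (ℱ : Set {c : P × L // c.1 ∈ c.2})
    (hnadj : ∀ c ∈ ℱ, ∀ d ∈ ℱ, (c : P × L).1 ∈ (d : P × L).2 ∨ (d : P × L).1 ∈ (c : P × L).2)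
    (hpt : ∀ c ∈ ℱ, ∀ d ∈ ℱ, c ≠ d → (c : P × L).1 ≠ (d : P × L).1)
    (hln : ∀ c ∈ ℱ, ∀ d ∈ ℱ, c ≠ d → (c : P × L).2 ≠ (d : P × L).2)
    (c1 c2 c3 : {c : P × L // c.1 ∈ c.2}) (hc1 : c1 ∈ ℱ) (hc2 : c2 ∈ ℱ) (hc3 : c3 ∈ ℱ)
    (h12' : c1 ≠ c2) (h13' : c1 ≠ c3) (h23' : c2 ≠ c3)
    (h12 : (c1 : P × L).1 ∈ (c2 : P × L).2) :
    ℱ.ncard = 3 ∧ ∃ a b c : {c : P × L // c.1 ∈ c.2}, ℱ = {a, b, c} ∧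
      ¬∃ m : L, (a : P × L).1 ∈ m ∧ (b : P × L).1 ∈ m ∧ (c : P × L).1 ∈ m := by
  have hP12 := hpt c1 hc1 c2 hc2 h12'
  have hP13 := hpt c1 hc1 c3 hc3 h13'
  have hP23 := hpt c2 hc2 c3 hc3 h23'
  have hL12 := hln c1 hc1 c2 hc2 h12'
  have hL13 := hln c1 hc1 c3 hc3 h13'
  have hL23 := hln c2 hc2 c3 hc3 h23'
  -- establish the 3-cycle
  obtain ⟨h23, h31⟩ : (c2 : P × L).1 ∈ (c3 : P × L).2 ∧ (c3 : P × L).1 ∈ (c1 : P × L).2 := by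
    rcases hnadj c2 hc2 c3 hc3 with h23 | h32
    · rcases hnadj c1 hc1 c3 hc3 with h13 | h31
      · rcases Nondegenerate.eq_or_eq h13 h23 h12 c2.2 with h | h
        · exact absurd h hP12
        · exact absurd h.symm hL23
      · exact ⟨h23, h31⟩
    · rcases hnadj c1 hc1 c3 hc3 with h13 | h31
      · rcases Nondegenerate.eq_or_eq h13 c3.2 h12 h32 with h | h
        · exact absurd h hP13
        · exact absurd h.symm hL23
      · rcases Nondegenerate.eq_or_eq c1.2 h31 h12 h32 with h | h
        · exact absurd h hP13
        · exact absurd h hL12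
  have hsub : ∀ c ∈ ℱ, c = c1 ∨ c = c2 ∨ c = c3 := by
    intro c hc
    by_contra hcon
    push_neg at hcon
    obtain ⟨hne1, hne2, hne3⟩ := hcon
    have hQ1 := hpt c hc c1 hc1 hne1
    have hQ2 := hpt c hc c2 hc2 hne2
    have hQ3 := hpt c hc c3 hc3 hne3
    have hM1 := hln c hc c1 hc1 hne1
    have hM2 := hln c hc c2 hc2 hne2
    have hM3 := hln c hc c3 hc3 hne3
    have o1 := hnadj c hc c1 hc1
    have o2 := hnadj c hc c2 hc2
    have o3 := hnadj c hc c3 hc3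
    have n12 : ¬((c : P × L).1 ∈ (c1 : P × L).2 ∧ (c : P × L).1 ∈ (c2 : P × L).2) := by
      rintro ⟨a, b⟩
      rcases Nondegenerate.eq_or_eq a c1.2 b h12 with h | h
      · exact hQ1 h
      · exact hL12 h
    have n13 : ¬((c : P × L).1 ∈ (c1 : P × L).2 ∧ (c : P × L).1 ∈ (c3 : P × L).2) := by
      rintro ⟨a, b⟩
      rcases Nondegenerate.eq_or_eq a h31 b c3.2 with h | h
      · exact hQ3 h
      · exact hL13 h
    have n23 : ¬((c : P × L).1 ∈ (c2 : P × L).2 ∧ (c : P × L).1 ∈ (c3 : P × L).2) := by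
      rintro ⟨a, b⟩
      rcases Nondegenerate.eq_or_eq a c2.2 b h23 with h | h
      · exact hQ2 h
      · exact hL23 h
    have m12 : ¬((c1 : P × L).1 ∈ (c : P × L).2 ∧ (c2 : P × L).1 ∈ (c : P × L).2) := by
      rintro ⟨a, b⟩
      rcases Nondegenerate.eq_or_eq a b h12 c2.2 with h | h
      · exact hP12 h
      · exact hM2 h
    have m23 : ¬((c2 : P × L).1 ∈ (c : P × L).2 ∧ (c3 : P × L).1 ∈ (c : P × L).2) := by
      rintro ⟨a, b⟩
      rcases Nondegenerate.eq_or_eq a b h23 c3.2 with h | h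
      · exact hP23 h
      · exact hM3 h
    have m13 : ¬((c1 : P × L).1 ∈ (c : P × L).2 ∧ (c3 : P × L).1 ∈ (c : P × L).2) := by
      rintro ⟨a, b⟩
      rcases Nondegenerate.eq_or_eq a b c1.2 h31 with h | h
      · exact hP13 h
      · exact hM1 h
    rcases o1 with a1 | b1 <;> rcases o2 with a2 | b2 <;> rcases o3 with a3 | b3
    · exact n12 ⟨a1, a2⟩
    · exact n12 ⟨a1, a2⟩
    · exact n13 ⟨a1, a3⟩
    · exact m23 ⟨b2, b3⟩
    · exact n23 ⟨a2, a3⟩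
    · exact m13 ⟨b1, b3⟩
    · exact m12 ⟨b1, b2⟩
    · exact m12 ⟨b1, b2⟩
  have hEq : ℱ = {c1, c2, c3} := by
    ext c
    constructor
    · intro hc
      rcases hsub c hc with rfl | rfl | rfl
      · exact Set.mem_insert _ _
      · exact Set.mem_insert_of_mem _ (Set.mem_insert _ _)
      · exact Set.mem_insert_of_mem _ (Set.mem_insert_of_mem _ rfl)
    · intro hc
      rcases hc with rfl | rfl | rfl
      · exact hc1
      · exact hc2
      · exact hc3
  constructor
  · rw [hEq]
    exact Set.ncard_eq_three.mpr ⟨c1, c2, c3, h12', h13', h23', rfl⟩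
  · refine ⟨c1, c2, c3, hEq, ?_⟩
    rintro ⟨m, hm1, hm2, hm3⟩
    have e1 : m = (c2 : P × L).2 := by
      rcases Nondegenerate.eq_or_eq hm1 hm2 h12 c2.2 with h | h
      · exact absurd h hP12
      · exact h
    have e2 : m = (c3 : P × L).2 := by
      rcases Nondegenerate.eq_or_eq hm2 hm3 h23 c3.2 with h | h
      · exact absurd h hP23
      · exact h
    exact hL23 (e1 ▸ e2)

end Aux

/-- Every nonempty maximal independent set `ℱ` of the Kneser graph `Γ_q`
on chambers of a projective plane of order `q` is either a chamber coclique — there is a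
chamber `(P₀, ℓ₀)` such that every chamber of `ℱ` has line `ℓ₀` or point `P₀`, and then
`|ℱ| = 2q + 1` — or `|ℱ| = 3` and the three points of the chambers of `ℱ` are not
collinear. -/
theorem stmt_10 (q : ℕ) (hq : 2 ≤ q) (P L : Type*) [Membership P L]
    [ProjectivePlane P L] [Fintype P] [Fintype L]
    (horder : ProjectivePlane.order P L = q)
    (ℱ : Set {c : P × L // c.1 ∈ c.2}) (hne : ℱ.Nonempty)
    (hindep : ∀ c ∈ ℱ, ∀ d ∈ ℱ, ¬(chamberKneserGraph P L).Adj c d)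
    (hmax : ∀ S : Set {c : P × L // c.1 ∈ c.2},
      (∀ c ∈ S, ∀ d ∈ S, ¬(chamberKneserGraph P L).Adj c d) → ℱ ⊆ S → S = ℱ) :
    (∃ (P₀ : P) (l₀ : L), P₀ ∈ l₀ ∧
      (∀ c ∈ ℱ, (c : P × L).1 = P₀ ∨ (c : P × L).2 = l₀) ∧ ℱ.ncard = 2 * q + 1) ∨
    (ℱ.ncard = 3 ∧ ∃ c₁ c₂ c₃ : {c : P × L // c.1 ∈ c.2}, ℱ = {c₁, c₂, c₃} ∧
      ¬∃ m : L, (c₁ : P × L).1 ∈ m ∧ (c₂ : P × L).1 ∈ m ∧ (c₃ : P × L).1 ∈ m) := by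
  have hnadj : ∀ c ∈ ℱ, ∀ d ∈ ℱ, (c : P × L).1 ∈ (d : P × L).2 ∨ (d : P × L).1 ∈ (c : P × L).2 := by
    intro c hc d hd
    have := hindep c hc d hd
    rw [kneser_adj] at this
    tauto
  by_cases hflag : ∃ (P₀ : P) (l₀ : L), P₀ ∈ l₀ ∧
      ∀ c ∈ ℱ, (c : P × L).1 = P₀ ∨ (c : P × L).2 = l₀
  · left
    obtain ⟨P₀, l₀, h₀, hall⟩ := hflag
    set D : Set {c : P × L // c.1 ∈ c.2} :=
      {c | (c : P × L).1 = P₀ ∨ (c : P × L).2 = l₀} with hDdef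
    have hDind : ∀ c ∈ D, ∀ d ∈ D, ¬(chamberKneserGraph P L).Adj c d := by
      intro c hc d hd hadj
      rcases hc with h | h <;> rcases hd with h' | h'
      · apply hadj.1; rw [h, ← h']; exact d.2
      · apply hadj.1; rw [h, h']; exact h₀
      · apply hadj.2; rw [h', h]; exact h₀
      · apply hadj.2; rw [h, ← h']; exact d.2
    have hD : D = ℱ := hmax D hDind (fun c hc => hall c hc)
    refine ⟨P₀, l₀, h₀, hall, ?_⟩
    rw [← hD, hDdef]
    rw [coclique_ncard P₀ l₀ h₀, horder]
  · -- no pencil flag: pairwise distinct points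
    have hpt : ∀ c ∈ ℱ, ∀ d ∈ ℱ, c ≠ d → (c : P × L).1 ≠ (d : P × L).1 := by
      intro c hc d hd hcd heq
      have hl : (c : P × L).2 ≠ (d : P × L).2 := fun h => hcd (Subtype.ext (Prod.ext heq h))
      have hall : ∀ e ∈ ℱ, (e : P × L).1 = (c : P × L).1 ∨ (c : P × L).1 ∈ (e : P × L).2 := by
        intro e he
        by_cases h1 : (e : P × L).1 = (c : P × L).1
        · exact Or.inl h1
        by_cases h2 : (c : P × L).1 ∈ (e : P × L).2
        · exact Or.inr h2
        exfalso
        have o1 : (e : P × L).1 ∈ (c : P × L).2 := by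
          rcases hnadj e he c hc with h | h
          · exact h
          · exact absurd h h2
        have o2 : (e : P × L).1 ∈ (d : P × L).2 := by
          rcases hnadj e he d hd with h | h
          · exact h
          · rw [← heq] at h; exact absurd h h2
        have hcd2 : (c : P × L).1 ∈ (d : P × L).2 := heq ▸ d.2
        rcases Nondegenerate.eq_or_eq o1 c.2 o2 hcd2 with h | h
        · exact h1 h
        · exact hl h
      apply hflag
      by_cases hd2 : ∃ e ∈ ℱ, (e : P × L).1 ≠ (c : P × L).1
      · obtain ⟨e, he, hep⟩ := hd2
        have hPe : (c : P × L).1 ∈ (e : P × L).2 := (hall e he).resolve_left hep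
        by_cases hsame : ∀ f ∈ ℱ, (f : P × L).1 ≠ (c : P × L).1 → (f : P × L).2 = (e : P × L).2
        · refine ⟨(c : P × L).1, (e : P × L).2, hPe, fun f hf => ?_⟩
          by_cases hf1 : (f : P × L).1 = (c : P × L).1
          · exact Or.inl hf1
          · exact Or.inr (hsame f hf hf1)
        · exfalso
          push_neg at hsame
          obtain ⟨f, hf, hf1, hf2⟩ := hsame
          have hPf : (c : P × L).1 ∈ (f : P × L).2 := (hall f hf).resolve_left hf1
          apply hindep e he f hf
          constructor
          · intro hx
            rcases Nondegenerate.eq_or_eq hx hPf e.2 hPe with h | h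
            · exact hep h
            · exact hf2 h
          · intro hx
            rcases Nondegenerate.eq_or_eq hx hPe f.2 hPf with h | h
            · exact hf1 h
            · exact hf2 h.symm
      · push_neg at hd2
        exact ⟨(c : P × L).1, (c : P × L).2, c.2, fun f hf => Or.inl (hd2 f hf)⟩
    -- pairwise distinct lines
    have hln : ∀ c ∈ ℱ, ∀ d ∈ ℱ, c ≠ d → (c : P × L).2 ≠ (d : P × L).2 := by
      intro c hc d hd hcd heq
      have hp : (c : P × L).1 ≠ (d : P × L).1 := fun h => hcd (Subtype.ext (Prod.ext h heq))
      have hall : ∀ e ∈ ℱ, (e : P × L).2 = (c : P × L).2 ∨ (e : P × L).1 ∈ (c : P × L).2 := by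
        intro e he
        by_cases h1 : (e : P × L).2 = (c : P × L).2
        · exact Or.inl h1
        by_cases h2 : (e : P × L).1 ∈ (c : P × L).2
        · exact Or.inr h2
        exfalso
        have o1 : (c : P × L).1 ∈ (e : P × L).2 := by
          rcases hnadj c hc e he with h | h
          · exact h
          · exact absurd h h2
        have o2 : (d : P × L).1 ∈ (e : P × L).2 := by
          rcases hnadj d hd e he with h | h
          · exact h
          · rw [← heq] at h; exact absurd h h2
        have hd2 : (d : P × L).1 ∈ (c : P × L).2 := heq ▸ d.2
        rcases Nondegenerate.eq_or_eq o1 o2 c.2 hd2 with h | h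
        · exact hp h
        · exact h1 h
      apply hflag
      by_cases hd2 : ∃ e ∈ ℱ, (e : P × L).2 ≠ (c : P × L).2
      · obtain ⟨e, he, hel⟩ := hd2
        have hPe : (e : P × L).1 ∈ (c : P × L).2 := (hall e he).resolve_left hel
        by_cases hsame : ∀ f ∈ ℱ, (f : P × L).2 ≠ (c : P × L).2 → (f : P × L).1 = (e : P × L).1
        · refine ⟨(e : P × L).1, (c : P × L).2, hPe, fun f hf => ?_⟩
          by_cases hf1 : (f : P × L).2 = (c : P × L).2
          · exact Or.inr hf1
          · exact Or.inl (hsame f hf hf1)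
        · exfalso
          push_neg at hsame
          obtain ⟨f, hf, hf1, hf2⟩ := hsame
          have hPf : (f : P × L).1 ∈ (c : P × L).2 := (hall f hf).resolve_left hf1
          apply hindep e he f hf
          constructor
          · intro hx
            rcases Nondegenerate.eq_or_eq hx f.2 hPe hPf with h | h
            · exact hf2 h.symm
            · exact hf1 h
          · intro hx
            rcases Nondegenerate.eq_or_eq hx e.2 hPf hPe with h | h
            · exact hf2 h
            · exact hel h
      · push_neg at hd2
        exact ⟨(c : P × L).1, (c : P × L).2, c.2, fun f hf => Or.inr (hd2 f hf)⟩
    obtain ⟨c1, hc1⟩ := hne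
    by_cases h2 : ∃ c2 ∈ ℱ, c2 ≠ c1
    · obtain ⟨c2, hc2, h21⟩ := h2
      by_cases h3 : ∃ c3 ∈ ℱ, c3 ≠ c1 ∧ c3 ≠ c2
      · obtain ⟨c3, hc3, h31, h32⟩ := h3
        right
        rcases hnadj c1 hc1 c2 hc2 with h | h
        · exact triangle_case ℱ hnadj hpt hln c1 c2 c3 hc1 hc2 hc3 h21.symm h31.symm h32.symm h
        · obtain ⟨hcard, a, b, c, hset, hncol⟩ :=
            triangle_case ℱ hnadj hpt hln c2 c1 c3 hc2 hc1 hc3 h21 h32.symm h31.symm h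
          exact ⟨hcard, a, b, c, hset, hncol⟩
      · exfalso
        push_neg at h3
        have hmem : ∀ c ∈ ℱ, c = c1 ∨ c = c2 := by
          intro c hc
          by_cases h : c = c1
          · exact Or.inl h
          · exact Or.inr (h3 c hc h)
        have hp12 := hpt c2 hc2 c1 hc1 h21
        have hl12 := hln c2 hc2 c1 hc1 h21
        rcases hnadj c1 hc1 c2 hc2 with h | h
        · exact not_two ℱ hindep hmax c1 c2 hc1 hc2 hp12.symm hl12.symm hmem h
        · exact not_two ℱ hindep hmax c2 c1 hc2 hc1 hp12 hl12
            (fun c hc => (hmem c hc).symm) h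
    · push_neg at h2
      exact absurd ⟨(c1 : P × L).1, (c1 : P × L).2, c1.2,
        fun c hc => Or.inl (by rw [h2 c hc])⟩ hflag
end

section
/- Let Π be a projective plane of order 5. Then there exists an incidence-free pair (X,Y) with X a set of 7 points of Π and Y a set of 7 lines of Π. -/
open Configuration

section Aux
variable {P L : Type*} [Membership P L] [ProjectivePlane P L] [Fintype P] [Fintype L]

private lemma stmt11_ncard_pts (l : L) :
    {p : P | p ∈ l}.ncard = ProjectivePlane.order P L + 1 := by
  rw [← Nat.card_coe_set_eq]
  exact ProjectivePlane.pointCount_eq P l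

private lemma stmt11_ncard_lns (p : P) :
    {l : L | p ∈ l}.ncard = ProjectivePlane.order P L + 1 := by
  rw [← Nat.card_coe_set_eq]
  exact ProjectivePlane.lineCount_eq L p

omit [Fintype P] [Fintype L] in
private lemma stmt11_line_eq {p q : P} {l m : L} (hpq : p ≠ q) (h1 : p ∈ l) (h2 : q ∈ l)
    (h3 : p ∈ m) (h4 : q ∈ m) : l = m :=
  (Nondegenerate.eq_or_eq h1 h2 h3 h4).resolve_left hpq

omit [Fintype P] [Fintype L] in
private lemma stmt11_pt_eq {p q : P} {l m : L} (hlm : l ≠ m) (h1 : p ∈ l) (h2 : q ∈ l)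
    (h3 : p ∈ m) (h4 : q ∈ m) : p = q :=
  (Nondegenerate.eq_or_eq h1 h2 h3 h4).resolve_right hlm

end Aux

/-- Let `Π` be a projective plane of order `5`. Then there exists an
incidence-free pair `(X, Y)` with `X` a set of `7` points and `Y` a set of `7` lines. -/
theorem stmt_11 (P L : Type*) [Membership P L]
    [ProjectivePlane P L] [Fintype P] [Fintype L]
    (horder : ProjectivePlane.order P L = 5) :
    ∃ (X : Set P) (Y : Set L),
      (∀ p ∈ X, ∀ l ∈ Y, p ∉ l) ∧ X.ncard = 7 ∧ Y.ncard = 7 := by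
  classical
  -- two distinct lines
  obtain ⟨p₁, p₂, p₃, l₁, ℓ₁, ℓ₂, h₁₂, h₁₃, h₂₁, h₂₂, h₂₃, h₃₁, h₃₂, h₃₃⟩ :=
    ProjectivePlane.exists_config (P := P) (L := L)
  have hne : ℓ₁ ≠ ℓ₂ := fun h => h₃₃ (h ▸ h₃₂)
  set z : P := HasPoints.mkPoint (P := P) hne with hzdef
  obtain ⟨hz1, hz2⟩ := HasPoints.mkPoint_ax (P := P) hne
  have hkey : ∀ {p : P}, p ∈ ℓ₁ → p ∈ ℓ₂ → p = z :=
    fun h1 h2 => stmt11_pt_eq hne h1 hz1 h2 hz2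
  -- the point rows
  have hL1 : ({p : P | p ∈ ℓ₁}).ncard = 6 := by rw [stmt11_ncard_pts, horder]
  have hL2 : ({p : P | p ∈ ℓ₂}).ncard = 6 := by rw [stmt11_ncard_pts, horder]
  -- pick u1 u2 on ℓ₁ minus z
  have hS1 : ({p : P | p ∈ ℓ₁} \ {z}).ncard = 5 := by
    rw [Set.ncard_diff_singleton_of_mem (show z ∈ {p : P | p ∈ ℓ₁} from hz1), hL1]
  obtain ⟨u1, u2, hu1, hu2, hu12⟩ :=
    (Set.one_lt_ncard_iff (Set.toFinite _)).mp (by rw [hS1]; norm_num)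
  have hu1l : u1 ∈ ℓ₁ := hu1.1
  have hu2l : u2 ∈ ℓ₁ := hu2.1
  have hu1z : u1 ≠ z := by simpa using hu1.2
  have hu2z : u2 ≠ z := by simpa using hu2.2
  have hS2 : ({p : P | p ∈ ℓ₂} \ {z}).ncard = 5 := by
    rw [Set.ncard_diff_singleton_of_mem (show z ∈ {p : P | p ∈ ℓ₂} from hz2), hL2]
  obtain ⟨v1, v2, hv1, hv2, hv12⟩ :=
    (Set.one_lt_ncard_iff (Set.toFinite _)).mp (by rw [hS2]; norm_num)
  have hv1l : v1 ∈ ℓ₂ := hv1.1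
  have hv2l : v2 ∈ ℓ₂ := hv2.1
  have hv1z : v1 ≠ z := by simpa using hv1.2
  have hv2z : v2 ≠ z := by simpa using hv2.2
  -- u's differ from v's
  have huv : ∀ {u v : P}, u ∈ ℓ₁ → u ≠ z → v ∈ ℓ₂ → u ≠ v :=
    fun hu huz hv h => huz (hkey hu (h ▸ hv))
  -- the four uv lines
  set m11 : L := HasLines.mkLine (L := L) (huv hu1l hu1z hv1l) with hm11def
  set m12 : L := HasLines.mkLine (L := L) (huv hu1l hu1z hv2l) with hm12def
  set m21 : L := HasLines.mkLine (L := L) (huv hu2l hu2z hv1l) with hm21def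
  set m22 : L := HasLines.mkLine (L := L) (huv hu2l hu2z hv2l) with hm22def
  obtain ⟨hm11u, hm11v⟩ := HasLines.mkLine_ax (L := L) (huv hu1l hu1z hv1l)
  obtain ⟨hm12u, hm12v⟩ := HasLines.mkLine_ax (L := L) (huv hu1l hu1z hv2l)
  obtain ⟨hm21u, hm21v⟩ := HasLines.mkLine_ax (L := L) (huv hu2l hu2z hv1l)
  obtain ⟨hm22u, hm22v⟩ := HasLines.mkLine_ax (L := L) (huv hu2l hu2z hv2l)
  -- z is not on any uv line
  have hzm : ∀ {u v : P} {m : L}, u ∈ ℓ₁ → u ≠ z → v ∈ ℓ₂ → v ≠ z → u ∈ m → v ∈ m →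
      z ∉ m := by
    intro u v m hu huz hv hvz hum hvm hzm'
    have hm1 : m = ℓ₁ := stmt11_line_eq huz hum hzm' hu hz1
    exact hvz (hkey (hm1 ▸ hvm) hv)
  -- secant lemmas
  have hsecA : ∀ {u v p : P} {m : L}, u ∈ ℓ₁ → v ∈ ℓ₂ → v ≠ z → u ∈ m → v ∈ m →
      p ∈ ℓ₁ → p ∈ m → p = u := by
    intro u v p m hu hv hvz hum hvm hp hpm
    by_contra h
    have hm1 : m = ℓ₁ := stmt11_line_eq h hpm hum hp hu
    exact hvz (hkey (hm1 ▸ hvm) hv)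
  have hsecB : ∀ {u v p : P} {m : L}, u ∈ ℓ₁ → u ≠ z → v ∈ ℓ₂ → u ∈ m → v ∈ m →
      p ∈ ℓ₂ → p ∈ m → p = v := by
    intro u v p m hu huz hv hum hvm hp hpm
    by_contra h
    have hm2 : m = ℓ₂ := stmt11_line_eq h hpm hvm hp hv
    exact huz (hkey hu (hm2 ▸ hum))
  -- pairwise distinctness of the four uv lines
  have hmne : ∀ {u u' v v' : P} {m m' : L}, u ∈ ℓ₁ → u' ∈ ℓ₁ → u ≠ z → v ∈ ℓ₂ → v' ∈ ℓ₂ →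
      v ≠ z → u ∈ m → v ∈ m → u' ∈ m' → v' ∈ m' → (u ≠ u' ∨ v ≠ v') → m ≠ m' := by
    intro u u' v v' m m' hu hu' huz hv hv' hvz hum hvm hu'm hv'm hor h
    subst h
    rcases hor with h1 | h2
    · have hm1 : m = ℓ₁ := stmt11_line_eq h1 hum hu'm hu hu'
      exact hvz (hkey (hm1 ▸ hvm) hv)
    · have hm2 : m = ℓ₂ := stmt11_line_eq h2 hvm hv'm hv hv'
      exact huz (hkey hu (hm2 ▸ hum))
  have hne1112 : m11 ≠ m12 :=
    hmne hu1l hu1l hu1z hv1l hv2l hv1z hm11u hm11v hm12u hm12v (Or.inr hv12)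
  have hne1121 : m11 ≠ m21 :=
    hmne hu1l hu2l hu1z hv1l hv1l hv1z hm11u hm11v hm21u hm21v (Or.inl hu12)
  have hne1122 : m11 ≠ m22 :=
    hmne hu1l hu2l hu1z hv1l hv2l hv1z hm11u hm11v hm22u hm22v (Or.inl hu12)
  have hne1221 : m12 ≠ m21 :=
    hmne hu1l hu2l hu1z hv2l hv1l hv2z hm12u hm12v hm21u hm21v (Or.inl hu12)
  have hne1222 : m12 ≠ m22 :=
    hmne hu1l hu2l hu1z hv2l hv2l hv2z hm12u hm12v hm22u hm22v (Or.inl hu12)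
  have hne2122 : m21 ≠ m22 :=
    hmne hu2l hu2l hu2z hv1l hv2l hv1z hm21u hm21v hm22u hm22v (Or.inr hv12)
  -- the bad set: points on ℓ₁, ℓ₂ or one of the four uv lines
  set Bad : Set P := {p : P | p ∈ ℓ₁} ∪ (({p : P | p ∈ ℓ₂} \ {z}) ∪
      (({p : P | p ∈ m11} \ {u1, v1}) ∪ (({p : P | p ∈ m12} \ {u1, v2}) ∪
      (({p : P | p ∈ m21} \ {u2, v1}) ∪ ({p : P | p ∈ m22} \ {u2, v2}))))) with hBaddef
  have hMcard : ∀ (m : L) (u v : P), u ≠ v → u ∈ m → v ∈ m →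
      ({p : P | p ∈ m} \ {u, v}).ncard = 4 := by
    intro m u v huvne hum hvm
    rw [Set.ncard_diff (by
      intro x hx
      rcases hx with h | h
      · exact h ▸ hum
      · exact h ▸ hvm) (Set.toFinite _), stmt11_ncard_pts, horder, Set.ncard_pair huvne]
  have hBadcard : Bad.ncard ≤ 27 := by
    have e11 := hMcard m11 u1 v1 (huv hu1l hu1z hv1l) hm11u hm11v
    have e12 := hMcard m12 u1 v2 (huv hu1l hu1z hv2l) hm12u hm12v
    have e21 := hMcard m21 u2 v1 (huv hu2l hu2z hv1l) hm21u hm21v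
    have e22 := hMcard m22 u2 v2 (huv hu2l hu2z hv2l) hm22u hm22v
    have b5 : (({p : P | p ∈ m21} \ {u2, v1}) ∪ ({p : P | p ∈ m22} \ {u2, v2})).ncard ≤ 8 :=
      (Set.ncard_union_le _ _).trans (by omega)
    have b4 : (({p : P | p ∈ m12} \ {u1, v2}) ∪ (({p : P | p ∈ m21} \ {u2, v1}) ∪
        ({p : P | p ∈ m22} \ {u2, v2}))).ncard ≤ 12 :=
      (Set.ncard_union_le _ _).trans (by omega)
    have b3 : (({p : P | p ∈ m11} \ {u1, v1}) ∪ (({p : P | p ∈ m12} \ {u1, v2}) ∪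
        (({p : P | p ∈ m21} \ {u2, v1}) ∪ ({p : P | p ∈ m22} \ {u2, v2})))).ncard ≤ 16 :=
      (Set.ncard_union_le _ _).trans (by omega)
    have b2 : ((({p : P | p ∈ ℓ₂} \ {z})) ∪ (({p : P | p ∈ m11} \ {u1, v1}) ∪
        (({p : P | p ∈ m12} \ {u1, v2}) ∪ (({p : P | p ∈ m21} \ {u2, v1}) ∪
        ({p : P | p ∈ m22} \ {u2, v2}))))).ncard ≤ 21 :=
      (Set.ncard_union_le _ _).trans (by omega)
    exact (Set.ncard_union_le _ _).trans (by omega)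
  -- the point w
  have hcardP : (Set.univ : Set P).ncard = 31 := by
    rw [Set.ncard_univ, Nat.card_eq_fintype_card,
      ProjectivePlane.card_points P L, horder]
    norm_num
  obtain ⟨w, -, hwBad⟩ := Set.exists_mem_notMem_of_ncard_lt_ncard
    (show Bad.ncard < (Set.univ : Set P).ncard by omega) (Set.toFinite _)
  have hwL1 : w ∉ ℓ₁ := fun h => hwBad (Or.inl h)
  have hwL2 : w ∉ ℓ₂ := by
    intro h
    by_cases hwz : w = z
    · exact hwL1 (hwz ▸ hz1)
    · exact hwBad (Or.inr (Or.inl ⟨h, by simpa using hwz⟩))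
  have hwM : ∀ {u v : P} {m : L},
      u ∈ ℓ₁ → v ∈ ℓ₂ → u ∈ m → v ∈ m →
      ({p : P | p ∈ m} \ {u, v}) ⊆ Bad → w ∉ m := by
    intro u v m hu hv hum hvm hsub h
    by_cases h1 : w = u
    · exact hwL1 (h1 ▸ hu)
    by_cases h2 : w = v
    · exact hwL2 (h2 ▸ hv)
    exact hwBad (hsub ⟨h, by simp [h1, h2]⟩)
  have hwM11 : w ∉ m11 := hwM hu1l hv1l hm11u hm11v
    (fun x hx => Or.inr (Or.inr (Or.inl hx)))
  have hwM12 : w ∉ m12 := hwM hu1l hv2l hm12u hm12v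
    (fun x hx => Or.inr (Or.inr (Or.inr (Or.inl hx))))
  have hwM21 : w ∉ m21 := hwM hu2l hv1l hm21u hm21v
    (fun x hx => Or.inr (Or.inr (Or.inr (Or.inr (Or.inl hx)))))
  have hwM22 : w ∉ m22 := hwM hu2l hv2l hm22u hm22v
    (fun x hx => Or.inr (Or.inr (Or.inr (Or.inr (Or.inr hx)))))
  have hzw : z ≠ w := fun h => hwL1 (h ▸ hz1)
  set ℓw : L := HasLines.mkLine (L := L) hzw with hlwdef
  obtain ⟨hzlw, hwlw⟩ := HasLines.mkLine_ax (L := L) hzw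
  have hlw1 : ℓw ≠ ℓ₁ := fun h => hwL1 (h ▸ hwlw)
  have hlw2 : ℓw ≠ ℓ₂ := fun h => hwL2 (h ▸ hwlw)
  -- the sets
  set A : Set P := {p : P | p ∈ ℓ₁} \ {z, u1, u2} with hAdef
  set B : Set P := {p : P | p ∈ ℓ₂} \ {z, v1, v2} with hBdef
  set X : Set P := A ∪ (B ∪ {w}) with hXdef
  set Y1 : Set L := {l : L | z ∈ l} \ {ℓ₁, ℓ₂, ℓw} with hY1def
  set Y2 : Set L := {m11, m12, m21, m22} with hY2def
  set Y : Set L := Y1 ∪ Y2 with hYdef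
  refine ⟨X, Y, ?_, ?_, ?_⟩
  · -- incidence-free
    rintro p hp l hl hpl
    rcases hl with ⟨hzl, hlnot⟩ | hl2
    · -- l through z, l ∉ {ℓ₁, ℓ₂, ℓw}
      simp only [Set.mem_insert_iff, Set.mem_singleton_iff, not_or] at hlnot
      obtain ⟨hl1', hl2', hlw'⟩ := hlnot
      rcases hp with hpA | hpB | hpw
      · have hpz : p ≠ z := fun h => hpA.2 (by simp [h])
        exact hl1' (stmt11_line_eq hpz hpl hzl hpA.1 hz1)
      · have hpz : p ≠ z := fun h => hpB.2 (by simp [h])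
        exact hl2' (stmt11_line_eq hpz hpl hzl hpB.1 hz2)
      · have hpw' : p = w := hpw
        subst hpw'
        exact hlw' (stmt11_line_eq (Ne.symm hzw) hpl hzl hwlw hzlw)
    · -- l is one of the uv lines
      have hfin : ∀ {u v : P} {m : L}, u ∈ ℓ₁ → u ≠ z → v ∈ ℓ₂ → v ≠ z → u ∈ m → v ∈ m →
          (u = u1 ∨ u = u2) → (v = v1 ∨ v = v2) → w ∉ m → p ∈ m → False := by
        intro u v m hu huz hv hvz hum hvm huu hvv hwm hpm
        rcases hp with hpA | hpB | hpw
        · have : p = u := hsecA hu hv hvz hum hvm hpA.1 hpm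
          exact hpA.2 (by rcases huu with h | h <;> simp [this, h])
        · have : p = v := hsecB hu huz hv hum hvm hpB.1 hpm
          exact hpB.2 (by rcases hvv with h | h <;> simp [this, h])
        · have hpw' : p = w := hpw
          exact hwm (hpw' ▸ hpm)
      rcases hl2 with h | h | h | h <;> subst h
      · exact hfin hu1l hu1z hv1l hv1z hm11u hm11v (Or.inl rfl) (Or.inl rfl) hwM11 hpl
      · exact hfin hu1l hu1z hv2l hv2z hm12u hm12v (Or.inl rfl) (Or.inr rfl) hwM12 hpl
      · exact hfin hu2l hu2z hv1l hv1z hm21u hm21v (Or.inr rfl) (Or.inl rfl) hwM21 hpl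
      · exact hfin hu2l hu2z hv2l hv2z hm22u hm22v (Or.inr rfl) (Or.inr rfl) hwM22 hpl
  · -- |X| = 7
    have hAcard : A.ncard = 3 := by
      rw [hAdef, Set.ncard_diff (by
        rintro x (h | h | h)
        · exact h ▸ hz1
        · exact h ▸ hu1l
        · exact h ▸ hu2l) (Set.toFinite _), hL1,
        Set.ncard_insert_of_notMem (by simp [Ne.symm hu1z, Ne.symm hu2z]),
        Set.ncard_pair hu12]
    have hBcard : B.ncard = 3 := by
      rw [hBdef, Set.ncard_diff (by
        rintro x (h | h | h)
        · exact h ▸ hz2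
        · exact h ▸ hv1l
        · exact h ▸ hv2l) (Set.toFinite _), hL2,
        Set.ncard_insert_of_notMem (by simp [Ne.symm hv1z, Ne.symm hv2z]),
        Set.ncard_pair hv12]
    have hdAB : Disjoint A (B ∪ {w}) := by
      rw [Set.disjoint_left]
      rintro x hxA (hxB | hxw)
      · exact hxA.2 (Or.inl (hkey hxA.1 hxB.1))
      · have : x = w := hxw
        exact hwL1 (this ▸ hxA.1)
    have hdBw : Disjoint B ({w} : Set P) := by
      rw [Set.disjoint_left]
      rintro x hxB hxw
      have : x = w := hxw
      exact hwL2 (this ▸ hxB.1)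
    rw [hXdef, Set.ncard_union_eq hdAB (Set.toFinite _) (Set.toFinite _),
      Set.ncard_union_eq hdBw (Set.toFinite _) (Set.toFinite _), hAcard, hBcard,
      Set.ncard_singleton]
  · -- |Y| = 7
    have hY1card : Y1.ncard = 3 := by
      rw [hY1def, Set.ncard_diff (by
        rintro x (h | h | h) <;> subst h
        · exact hz1
        · exact hz2
        · exact hzlw) (Set.toFinite _), stmt11_ncard_lns, horder,
        Set.ncard_insert_of_notMem (by simp [hne, Ne.symm hlw1]),
        Set.ncard_pair (Ne.symm hlw2)]
    have hY2card : Y2.ncard = 4 := by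
      rw [hY2def, Set.ncard_insert_of_notMem (by simp [hne1112, hne1121, hne1122]),
        Set.ncard_insert_of_notMem (by simp [hne1221, hne1222]),
        Set.ncard_pair hne2122]
    have hd : Disjoint Y1 Y2 := by
      rw [Set.disjoint_left]
      rintro l ⟨hzl, -⟩ (h | h | h | h) <;> subst h
      · exact hzm hu1l hu1z hv1l hv1z hm11u hm11v hzl
      · exact hzm hu1l hu1z hv2l hv2z hm12u hm12v hzl
      · exact hzm hu2l hu2z hv1l hv1z hm21u hm21v hzl
      · exact hzm hu2l hu2z hv2l hv2z hm22u hm22v hzl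
    rw [hYdef, Set.ncard_union_eq hd (Set.toFinite _) (Set.toFinite _), hY1card, hY2card]
end

section
/- Let Π be a projective plane of order 5. Then the chromatic number of the Kneser graph Γ_5 on chambers of Π satisfies χ(Γ_5) ≤ 24. -/
set_option linter.unusedSectionVars false
set_option maxHeartbeats 1600000

open Configuration

namespace Stmt12Aux

open Configuration.ProjectivePlane

section

variable {P L : Type*} [Membership P L] [ProjectivePlane P L] [Fintype P] [Fintype L]

lemma eqPt' {l m : L} (hlm : l ≠ m) {p q : P} (hpl : p ∈ l) (hpm : p ∈ m) (hql : q ∈ l)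
    (hqm : q ∈ m) : p = q :=
  (Nondegenerate.eq_or_eq hpl hql hpm hqm).resolve_right hlm

lemma eqLn' {p q : P} (hpq : p ≠ q) {l m : L} (hpl : p ∈ l) (hql : q ∈ l) (hpm : p ∈ m)
    (hqm : q ∈ m) : l = m :=
  (Nondegenerate.eq_or_eq hpl hql hpm hqm).resolve_left hpq

lemma pick_point' (horder : order P L = 5) (l : L) (t : Finset P) (ht : t.card ≤ 5) :
    ∃ p, p ∈ l ∧ p ∉ t := by
  classical
  have hcard : (Set.toFinset {p : P | p ∈ l}).card = 6 := by
    rw [Set.toFinset_card]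
    have h : pointCount P l = 6 := by rw [pointCount_eq P l, horder]
    rw [← h, pointCount, Nat.card_eq_fintype_card]
    exact Fintype.card_congr' rfl
  have h3 := Finset.le_card_sdiff t (Set.toFinset {p : P | p ∈ l})
  have h2 : 0 < (Set.toFinset {p : P | p ∈ l} \ t).card := by omega
  obtain ⟨p, hp⟩ := Finset.card_pos.mp h2
  rw [Finset.mem_sdiff, Set.mem_toFinset] at hp
  exact ⟨p, hp.1, hp.2⟩

lemma pick_line' (horder : order P L = 5) (x : P) (t : Finset L) (ht : t.card ≤ 5) :
    ∃ l : L, x ∈ l ∧ l ∉ t := by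
  classical
  have hcard : (Set.toFinset {l : L | x ∈ l}).card = 6 := by
    rw [Set.toFinset_card]
    have h : lineCount L x = 6 := by rw [lineCount_eq L x, horder]
    rw [← h, lineCount, Nat.card_eq_fintype_card]
    exact Fintype.card_congr' rfl
  have h3 := Finset.le_card_sdiff t (Set.toFinset {l : L | x ∈ l})
  have h2 : 0 < (Set.toFinset {l : L | x ∈ l} \ t).card := by omega
  obtain ⟨p, hp⟩ := Finset.card_pos.mp h2
  rw [Finset.mem_sdiff, Set.mem_toFinset] at hp
  exact ⟨p, hp.1, hp.2⟩

lemma classify_lines' (horder : order P L = 5) (x : P) (s : Finset L) (hs : s.card = 6)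
    (hall : ∀ l ∈ s, x ∈ l) : ∀ l : L, x ∈ l → l ∈ s := by
  classical
  have hsub : s ⊆ Set.toFinset {l : L | x ∈ l} := fun l hl => Set.mem_toFinset.mpr (hall l hl)
  have hcard : (Set.toFinset {l : L | x ∈ l}).card = 6 := by
    rw [Set.toFinset_card]
    have h : lineCount L x = 6 := by rw [lineCount_eq L x, horder]
    rw [← h, lineCount, Nat.card_eq_fintype_card]
    exact Fintype.card_congr' rfl
  have := Finset.eq_of_subset_of_card_le hsub (by rw [hcard, hs])
  intro l hl
  rw [this]
  exact Set.mem_toFinset.mpr hl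

end

section cards

variable {α : Type*} [DecidableEq α]

lemma card3_le' (x1 x2 x3 : α) : ({x1, x2, x3} : Finset α).card ≤ 3 := by
  have h1 := Finset.card_insert_le x1 ({x2, x3} : Finset α)
  have h2 := Finset.card_insert_le x2 ({x3} : Finset α)
  simp only [Finset.card_singleton] at *
  omega

lemma card4_le' (x1 x2 x3 x4 : α) : ({x1, x2, x3, x4} : Finset α).card ≤ 4 := by
  have h1 := Finset.card_insert_le x1 ({x2, x3, x4} : Finset α)
  have h2 := card3_le' x2 x3 x4
  omega

lemma card5_le (x1 x2 x3 x4 x5 : α) : ({x1, x2, x3, x4, x5} : Finset α).card ≤ 5 := by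
  have h1 := Finset.card_insert_le x1 ({x2, x3, x4, x5} : Finset α)
  have h2 := card4_le' x2 x3 x4 x5
  omega

lemma card3_le (x1 x2 x3 : α) : ({x1, x2, x3} : Finset α).card ≤ 5 :=
  (card3_le' x1 x2 x3).trans (by norm_num)

lemma card4_le (x1 x2 x3 x4 : α) : ({x1, x2, x3, x4} : Finset α).card ≤ 5 :=
  (card4_le' x1 x2 x3 x4).trans (by norm_num)

lemma card6_eq {x1 x2 x3 x4 x5 x6 : α}
    (h12 : x1 ≠ x2) (h13 : x1 ≠ x3) (h14 : x1 ≠ x4) (h15 : x1 ≠ x5) (h16 : x1 ≠ x6)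
    (h23 : x2 ≠ x3) (h24 : x2 ≠ x4) (h25 : x2 ≠ x5) (h26 : x2 ≠ x6)
    (h34 : x3 ≠ x4) (h35 : x3 ≠ x5) (h36 : x3 ≠ x6)
    (h45 : x4 ≠ x5) (h46 : x4 ≠ x6) (h56 : x5 ≠ x6) :
    ({x1, x2, x3, x4, x5, x6} : Finset α).card = 6 := by
  rw [Finset.card_insert_of_notMem (by simp [h12, h13, h14, h15, h16]),
    Finset.card_insert_of_notMem (by simp [h23, h24, h25, h26]),
    Finset.card_insert_of_notMem (by simp [h34, h35, h36]),
    Finset.card_insert_of_notMem (by simp [h45, h46]),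
    Finset.card_insert_of_notMem (by simp [h56]), Finset.card_singleton]

lemma card7_eq {x1 x2 x3 x4 x5 x6 x7 : α}
    (h12 : x1 ≠ x2) (h13 : x1 ≠ x3) (h14 : x1 ≠ x4) (h15 : x1 ≠ x5) (h16 : x1 ≠ x6)
    (h17 : x1 ≠ x7)
    (h23 : x2 ≠ x3) (h24 : x2 ≠ x4) (h25 : x2 ≠ x5) (h26 : x2 ≠ x6) (h27 : x2 ≠ x7)
    (h34 : x3 ≠ x4) (h35 : x3 ≠ x5) (h36 : x3 ≠ x6) (h37 : x3 ≠ x7)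
    (h45 : x4 ≠ x5) (h46 : x4 ≠ x6) (h47 : x4 ≠ x7)
    (h56 : x5 ≠ x6) (h57 : x5 ≠ x7) (h67 : x6 ≠ x7) :
    ({x1, x2, x3, x4, x5, x6, x7} : Finset α).card = 7 := by
  rw [Finset.card_insert_of_notMem (by simp [h12, h13, h14, h15, h16, h17]),
    card6_eq h23 h24 h25 h26 h27 h34 h35 h36 h37 h45 h46 h47 h56 h57 h67]

end cards

end Stmt12Aux

namespace Stmt12Main

open Configuration Configuration.ProjectivePlane Stmt12Aux

theorem key (P L : Type*) [Membership P L]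
    [ProjectivePlane P L] [Fintype P] [Fintype L]
    (horder : ProjectivePlane.order P L = 5) :
    ∃ (Bfin : Finset P) (f : L → P),
      Bfin.card = 7 ∧ Fintype.card P = 31 ∧
      (∀ ℓ : L, f ℓ ∈ ℓ) ∧ (∀ ℓ : L, f ℓ ∉ Bfin) ∧
      (∀ ℓ ℓ' : L, (∃ w ∈ Bfin, w ∈ ℓ) → (∃ w ∈ Bfin, w ∈ ℓ') → f ℓ = f ℓ' → ℓ = ℓ') := by
  classical
  -- ### a point Z and two lines a, b through it
  obtain ⟨Z, -, -, -, -, -, -⟩ := @ProjectivePlane.exists_config P L _ _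
  obtain ⟨a, haZ, -⟩ := pick_line' horder Z ∅ (by simp)
  obtain ⟨b, hbZ, hb'⟩ := pick_line' horder Z {a} (by simp)
  have hab : a ≠ b := fun h => hb' (by simp [h])
  -- generic: common point of two lines through Z is Z
  have mZ : ∀ {l m : L}, l ≠ m → Z ∈ l → Z ∈ m → ∀ {x : P}, x ∈ l → x ∈ m → x = Z := by
    intro l m hlm hl hm x hx1 hx2; exact eqPt' hlm hx1 hx2 hl hm
  -- ### points a1 a2 on a, b1 b2 on b
  obtain ⟨a1, ha1a, h'⟩ := pick_point' horder a {Z} (by simp)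
  have ha1Z : a1 ≠ Z := by simpa using h'
  obtain ⟨a2, ha2a, h'⟩ := pick_point' horder a {Z, a1} (by
    exact le_trans (Finset.card_insert_le _ _) (by simp))
  have ha2Z : a2 ≠ Z := by simp at h'; exact h'.1
  have ha2a1 : a2 ≠ a1 := by simp at h'; exact h'.2
  obtain ⟨b1, hb1b, h'⟩ := pick_point' horder b {Z} (by simp)
  have hb1Z : b1 ≠ Z := by simpa using h'
  obtain ⟨b2, hb2b, h'⟩ := pick_point' horder b {Z, b1} (by
    exact le_trans (Finset.card_insert_le _ _) (by simp))
  have hb2Z : b2 ≠ Z := by simp at h'; exact h'.1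
  have hb2b1 : b2 ≠ b1 := by simp at h'; exact h'.2
  -- non-incidences between a, b and the chosen points
  have hb1a : b1 ∉ a := fun h => hb1Z (mZ hab haZ hbZ h hb1b)
  have hb2a : b2 ∉ a := fun h => hb2Z (mZ hab haZ hbZ h hb2b)
  have ha1b : a1 ∉ b := fun h => ha1Z (mZ hab haZ hbZ ha1a h)
  have ha2b : a2 ∉ b := fun h => ha2Z (mZ hab haZ hbZ ha2a h)
  have ha1b1 : a1 ≠ b1 := fun h => hb1a (h ▸ ha1a)
  have ha1b2 : a1 ≠ b2 := fun h => hb2a (h ▸ ha1a)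
  have ha2b1 : a2 ≠ b1 := fun h => hb1a (h ▸ ha2a)
  have ha2b2 : a2 ≠ b2 := fun h => hb2a (h ▸ ha2a)
  -- ### the four cross lines m i j
  set m11 := HasLines.mkLine (L := L) ha1b1 with hm11def
  have ha1m11 : a1 ∈ m11 := (HasLines.mkLine_ax (L := L) ha1b1).1
  have hb1m11 : b1 ∈ m11 := (HasLines.mkLine_ax (L := L) ha1b1).2
  set m12 := HasLines.mkLine (L := L) ha1b2 with hm12def
  have ha1m12 : a1 ∈ m12 := (HasLines.mkLine_ax (L := L) ha1b2).1
  have hb2m12 : b2 ∈ m12 := (HasLines.mkLine_ax (L := L) ha1b2).2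
  set m21 := HasLines.mkLine (L := L) ha2b1 with hm21def
  have ha2m21 : a2 ∈ m21 := (HasLines.mkLine_ax (L := L) ha2b1).1
  have hb1m21 : b1 ∈ m21 := (HasLines.mkLine_ax (L := L) ha2b1).2
  set m22 := HasLines.mkLine (L := L) ha2b2 with hm22def
  have ha2m22 : a2 ∈ m22 := (HasLines.mkLine_ax (L := L) ha2b2).1
  have hb2m22 : b2 ∈ m22 := (HasLines.mkLine_ax (L := L) ha2b2).2
  -- m lines differ from a and b; Z not on them
  have hm11a : m11 ≠ a := fun h => hb1a (h ▸ hb1m11)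
  have hm12a : m12 ≠ a := fun h => hb2a (h ▸ hb2m12)
  have hm21a : m21 ≠ a := fun h => hb1a (h ▸ hb1m21)
  have hm22a : m22 ≠ a := fun h => hb2a (h ▸ hb2m22)
  have hm11b : m11 ≠ b := fun h => ha1b (h ▸ ha1m11)
  have hm12b : m12 ≠ b := fun h => ha1b (h ▸ ha1m12)
  have hm21b : m21 ≠ b := fun h => ha2b (h ▸ ha2m21)
  have hm22b : m22 ≠ b := fun h => ha2b (h ▸ ha2m22)
  have hZm11 : Z ∉ m11 := fun h => hm11a (eqLn' ha1Z ha1m11 h ha1a haZ)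
  have hZm12 : Z ∉ m12 := fun h => hm12a (eqLn' ha1Z ha1m12 h ha1a haZ)
  have hZm21 : Z ∉ m21 := fun h => hm21a (eqLn' ha2Z ha2m21 h ha2a haZ)
  have hZm22 : Z ∉ m22 := fun h => hm22a (eqLn' ha2Z ha2m22 h ha2a haZ)
  -- second points of a, b not on wrong m lines
  have ha2m11 : a2 ∉ m11 := fun h => hm11a (eqLn' ha2a1 h ha1m11 ha2a ha1a)
  have ha2m12 : a2 ∉ m12 := fun h => hm12a (eqLn' ha2a1 h ha1m12 ha2a ha1a)
  have ha1m21 : a1 ∉ m21 := fun h => hm21a (eqLn' (Ne.symm ha2a1) h ha2m21 ha1a ha2a)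
  have ha1m22 : a1 ∉ m22 := fun h => hm22a (eqLn' (Ne.symm ha2a1) h ha2m22 ha1a ha2a)
  have hb2m11 : b2 ∉ m11 := fun h => hm11b (eqLn' hb2b1 h hb1m11 hb2b hb1b)
  have hb2m21 : b2 ∉ m21 := fun h => hm21b (eqLn' hb2b1 h hb1m21 hb2b hb1b)
  have hb1m12 : b1 ∉ m12 := fun h => hm12b (eqLn' (Ne.symm hb2b1) h hb2m12 hb1b hb2b)
  have hb1m22 : b1 ∉ m22 := fun h => hm22b (eqLn' (Ne.symm hb2b1) h hb2m22 hb1b hb2b)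
  -- ### the diagonal point Q and the line c through Z and Q
  have hm11m22 : m11 ≠ m22 := fun h => ha1m22 (h ▸ ha1m11)
  set Q := HasPoints.mkPoint (P := P) hm11m22 with hQdef
  have hQ11 : Q ∈ m11 := (HasPoints.mkPoint_ax (P := P) hm11m22).1
  have hQ22 : Q ∈ m22 := (HasPoints.mkPoint_ax (P := P) hm11m22).2
  have hQZ : Q ≠ Z := fun h => hZm11 (h ▸ hQ11)
  have hQa : Q ∉ a := fun h => ha1m22 ((eqPt' hm11a hQ11 h ha1m11 ha1a) ▸ hQ22)
  have hQb : Q ∉ b := fun h => hb1m22 ((eqPt' hm11b hQ11 h hb1m11 hb1b) ▸ hQ22)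
  set c := HasLines.mkLine (L := L) (Ne.symm hQZ) with hcdef
  have hcZ : Z ∈ c := (HasLines.mkLine_ax (L := L) (Ne.symm hQZ)).1
  have hQc : Q ∈ c := (HasLines.mkLine_ax (L := L) (Ne.symm hQZ)).2
  have hac : a ≠ c := fun h => hQa (h ▸ hQc)
  have hbc : b ≠ c := fun h => hQb (h ▸ hQc)
  have ha1c : a1 ∉ c := fun h => ha1Z (mZ hac haZ hcZ ha1a h)
  have ha2c : a2 ∉ c := fun h => ha2Z (mZ hac haZ hcZ ha2a h)
  have hb1c : b1 ∉ c := fun h => hb1Z (mZ hbc hbZ hcZ hb1b h)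
  have hb2c : b2 ∉ c := fun h => hb2Z (mZ hbc hbZ hcZ hb2b h)
  have hm11c : m11 ≠ c := fun h => hb1c (h ▸ hb1m11)
  have hm12c : m12 ≠ c := fun h => hb2c (h ▸ hb2m12)
  have hm21c : m21 ≠ c := fun h => hb1c (h ▸ hb1m21)
  have hm22c : m22 ≠ c := fun h => hb2c (h ▸ hb2m22)
  -- ### the other crossing points of m12, m21 with c, and the points c1, c2
  set Rp := HasPoints.mkPoint (P := P) hm12c with hRpdef
  have hRp12 : Rp ∈ m12 := (HasPoints.mkPoint_ax (P := P) hm12c).1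
  have hRpc : Rp ∈ c := (HasPoints.mkPoint_ax (P := P) hm12c).2
  set Rq := HasPoints.mkPoint (P := P) hm21c with hRqdef
  have hRq21 : Rq ∈ m21 := (HasPoints.mkPoint_ax (P := P) hm21c).1
  have hRqc : Rq ∈ c := (HasPoints.mkPoint_ax (P := P) hm21c).2
  obtain ⟨c1, hc1c, h'⟩ := pick_point' horder c {Z, Q, Rp, Rq} (card4_le _ _ _ _)
  have hc1Z : c1 ≠ Z := by simp at h'; exact h'.1
  have hc1Q : c1 ≠ Q := by simp at h'; exact h'.2.1
  have hc1Rp : c1 ≠ Rp := by simp at h'; exact h'.2.2.1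
  have hc1Rq : c1 ≠ Rq := by simp at h'; exact h'.2.2.2
  obtain ⟨c2, hc2c, h'⟩ := pick_point' horder c {Z, Q, Rp, Rq, c1} (card5_le _ _ _ _ _)
  have hc2Z : c2 ≠ Z := by simp at h'; exact h'.1
  have hc2Q : c2 ≠ Q := by simp at h'; exact h'.2.1
  have hc2Rp : c2 ≠ Rp := by simp at h'; exact h'.2.2.1
  have hc2Rq : c2 ≠ Rq := by simp at h'; exact h'.2.2.2.1
  have hc2c1 : c2 ≠ c1 := by simp at h'; exact h'.2.2.2.2
  have hc1a : c1 ∉ a := fun h => hc1Z (mZ hac haZ hcZ h hc1c)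
  have hc2a : c2 ∉ a := fun h => hc2Z (mZ hac haZ hcZ h hc2c)
  have hc1b : c1 ∉ b := fun h => hc1Z (mZ hbc hbZ hcZ h hc1c)
  have hc2b : c2 ∉ b := fun h => hc2Z (mZ hbc hbZ hcZ h hc2c)
  have ha1c1 : a1 ≠ c1 := fun h => hc1a (h ▸ ha1a)
  have ha1c2 : a1 ≠ c2 := fun h => hc2a (h ▸ ha1a)
  have ha2c1 : a2 ≠ c1 := fun h => hc1a (h ▸ ha2a)
  have ha2c2 : a2 ≠ c2 := fun h => hc2a (h ▸ ha2a)
  have hb1c1 : b1 ≠ c1 := fun h => hc1b (h ▸ hb1b)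
  have hb1c2 : b1 ≠ c2 := fun h => hc2b (h ▸ hb1b)
  have hb2c1 : b2 ≠ c1 := fun h => hc1b (h ▸ hb2b)
  have hb2c2 : b2 ≠ c2 := fun h => hc2b (h ▸ hb2b)
  -- no line m i j passes through c1 or c2  (the "no 3-secant" conditions)
  have hc1m11 : c1 ∉ m11 := fun h => hc1Q (eqPt' hm11c h hc1c hQ11 hQc)
  have hc1m22 : c1 ∉ m22 := fun h => hc1Q (eqPt' hm22c h hc1c hQ22 hQc)
  have hc1m12 : c1 ∉ m12 := fun h => hc1Rp (eqPt' hm12c h hc1c hRp12 hRpc)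
  have hc1m21 : c1 ∉ m21 := fun h => hc1Rq (eqPt' hm21c h hc1c hRq21 hRqc)
  have hc2m11 : c2 ∉ m11 := fun h => hc2Q (eqPt' hm11c h hc2c hQ11 hQc)
  have hc2m22 : c2 ∉ m22 := fun h => hc2Q (eqPt' hm22c h hc2c hQ22 hQc)
  have hc2m12 : c2 ∉ m12 := fun h => hc2Rp (eqPt' hm12c h hc2c hRp12 hRpc)
  have hc2m21 : c2 ∉ m21 := fun h => hc2Rq (eqPt' hm21c h hc2c hRq21 hRqc)
  -- ### the lines n i k  (through a i and c k) and p j k (through b j and c k)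
  set n11 := HasLines.mkLine (L := L) ha1c1 with hn11def
  have ha1n11 : a1 ∈ n11 := (HasLines.mkLine_ax (L := L) ha1c1).1
  have hc1n11 : c1 ∈ n11 := (HasLines.mkLine_ax (L := L) ha1c1).2
  set n12 := HasLines.mkLine (L := L) ha1c2 with hn12def
  have ha1n12 : a1 ∈ n12 := (HasLines.mkLine_ax (L := L) ha1c2).1
  have hc2n12 : c2 ∈ n12 := (HasLines.mkLine_ax (L := L) ha1c2).2
  set n21 := HasLines.mkLine (L := L) ha2c1 with hn21def
  have ha2n21 : a2 ∈ n21 := (HasLines.mkLine_ax (L := L) ha2c1).1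
  have hc1n21 : c1 ∈ n21 := (HasLines.mkLine_ax (L := L) ha2c1).2
  set n22 := HasLines.mkLine (L := L) ha2c2 with hn22def
  have ha2n22 : a2 ∈ n22 := (HasLines.mkLine_ax (L := L) ha2c2).1
  have hc2n22 : c2 ∈ n22 := (HasLines.mkLine_ax (L := L) ha2c2).2
  set p11 := HasLines.mkLine (L := L) hb1c1 with hp11def
  have hb1p11 : b1 ∈ p11 := (HasLines.mkLine_ax (L := L) hb1c1).1
  have hc1p11 : c1 ∈ p11 := (HasLines.mkLine_ax (L := L) hb1c1).2
  set p12 := HasLines.mkLine (L := L) hb1c2 with hp12def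
  have hb1p12 : b1 ∈ p12 := (HasLines.mkLine_ax (L := L) hb1c2).1
  have hc2p12 : c2 ∈ p12 := (HasLines.mkLine_ax (L := L) hb1c2).2
  set p21 := HasLines.mkLine (L := L) hb2c1 with hp21def
  have hb2p21 : b2 ∈ p21 := (HasLines.mkLine_ax (L := L) hb2c1).1
  have hc1p21 : c1 ∈ p21 := (HasLines.mkLine_ax (L := L) hb2c1).2
  set p22 := HasLines.mkLine (L := L) hb2c2 with hp22def
  have hb2p22 : b2 ∈ p22 := (HasLines.mkLine_ax (L := L) hb2c2).1
  have hc2p22 : c2 ∈ p22 := (HasLines.mkLine_ax (L := L) hb2c2).2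
  -- n, p lines differ from a, b, c ; Z not on them
  have hn11a : n11 ≠ a := fun h => hc1a (h ▸ hc1n11)
  have hn12a : n12 ≠ a := fun h => hc2a (h ▸ hc2n12)
  have hn21a : n21 ≠ a := fun h => hc1a (h ▸ hc1n21)
  have hn22a : n22 ≠ a := fun h => hc2a (h ▸ hc2n22)
  have hn11c : n11 ≠ c := fun h => ha1c (h ▸ ha1n11)
  have hn12c : n12 ≠ c := fun h => ha1c (h ▸ ha1n12)
  have hn21c : n21 ≠ c := fun h => ha2c (h ▸ ha2n21)
  have hn22c : n22 ≠ c := fun h => ha2c (h ▸ ha2n22)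
  have hp11b : p11 ≠ b := fun h => hc1b (h ▸ hc1p11)
  have hp12b : p12 ≠ b := fun h => hc2b (h ▸ hc2p12)
  have hp21b : p21 ≠ b := fun h => hc1b (h ▸ hc1p21)
  have hp22b : p22 ≠ b := fun h => hc2b (h ▸ hc2p22)
  have hp11c : p11 ≠ c := fun h => hb1c (h ▸ hb1p11)
  have hp12c : p12 ≠ c := fun h => hb1c (h ▸ hb1p12)
  have hp21c : p21 ≠ c := fun h => hb2c (h ▸ hb2p21)
  have hp22c : p22 ≠ c := fun h => hb2c (h ▸ hb2p22)
  have hZn11 : Z ∉ n11 := fun h => hn11a (eqLn' ha1Z ha1n11 h ha1a haZ)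
  have hZn12 : Z ∉ n12 := fun h => hn12a (eqLn' ha1Z ha1n12 h ha1a haZ)
  have hZn21 : Z ∉ n21 := fun h => hn21a (eqLn' ha2Z ha2n21 h ha2a haZ)
  have hZn22 : Z ∉ n22 := fun h => hn22a (eqLn' ha2Z ha2n22 h ha2a haZ)
  have hZp11 : Z ∉ p11 := fun h => hp11b (eqLn' hb1Z hb1p11 h hb1b hbZ)
  have hZp12 : Z ∉ p12 := fun h => hp12b (eqLn' hb1Z hb1p12 h hb1b hbZ)
  have hZp21 : Z ∉ p21 := fun h => hp21b (eqLn' hb2Z hb2p21 h hb2b hbZ)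
  have hZp22 : Z ∉ p22 := fun h => hp22b (eqLn' hb2Z hb2p22 h hb2b hbZ)
  -- b's not on n's  (else an m line would contain a c point)
  have hb1n11 : b1 ∉ n11 := fun h => hc1m11 ((eqLn' ha1b1 ha1n11 h ha1m11 hb1m11) ▸ hc1n11)
  have hb2n11 : b2 ∉ n11 := fun h => hc1m12 ((eqLn' ha1b2 ha1n11 h ha1m12 hb2m12) ▸ hc1n11)
  have hb1n12 : b1 ∉ n12 := fun h => hc2m11 ((eqLn' ha1b1 ha1n12 h ha1m11 hb1m11) ▸ hc2n12)
  have hb2n12 : b2 ∉ n12 := fun h => hc2m12 ((eqLn' ha1b2 ha1n12 h ha1m12 hb2m12) ▸ hc2n12)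
  have hb1n21 : b1 ∉ n21 := fun h => hc1m21 ((eqLn' ha2b1 ha2n21 h ha2m21 hb1m21) ▸ hc1n21)
  have hb2n21 : b2 ∉ n21 := fun h => hc1m22 ((eqLn' ha2b2 ha2n21 h ha2m22 hb2m22) ▸ hc1n21)
  have hb1n22 : b1 ∉ n22 := fun h => hc2m21 ((eqLn' ha2b1 ha2n22 h ha2m21 hb1m21) ▸ hc2n22)
  have hb2n22 : b2 ∉ n22 := fun h => hc2m22 ((eqLn' ha2b2 ha2n22 h ha2m22 hb2m22) ▸ hc2n22)
  -- a's not on p's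
  have ha1p11 : a1 ∉ p11 := fun h => hc1m11 ((eqLn' ha1b1 h hb1p11 ha1m11 hb1m11) ▸ hc1p11)
  have ha2p11 : a2 ∉ p11 := fun h => hc1m21 ((eqLn' ha2b1 h hb1p11 ha2m21 hb1m21) ▸ hc1p11)
  have ha1p12 : a1 ∉ p12 := fun h => hc2m11 ((eqLn' ha1b1 h hb1p12 ha1m11 hb1m11) ▸ hc2p12)
  have ha2p12 : a2 ∉ p12 := fun h => hc2m21 ((eqLn' ha2b1 h hb1p12 ha2m21 hb1m21) ▸ hc2p12)
  have ha1p21 : a1 ∉ p21 := fun h => hc1m12 ((eqLn' ha1b2 h hb2p21 ha1m12 hb2m12) ▸ hc1p21)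
  have ha2p21 : a2 ∉ p21 := fun h => hc1m22 ((eqLn' ha2b2 h hb2p21 ha2m22 hb2m22) ▸ hc1p21)
  have ha1p22 : a1 ∉ p22 := fun h => hc2m12 ((eqLn' ha1b2 h hb2p22 ha1m12 hb2m12) ▸ hc2p22)
  have ha2p22 : a2 ∉ p22 := fun h => hc2m22 ((eqLn' ha2b2 h hb2p22 ha2m22 hb2m22) ▸ hc2p22)
  -- wrong-index exclusions within the n and p families
  have ha2n11 : a2 ∉ n11 := fun h => hn11a (eqLn' ha2a1 h ha1n11 ha2a ha1a)
  have ha2n12 : a2 ∉ n12 := fun h => hn12a (eqLn' ha2a1 h ha1n12 ha2a ha1a)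
  have ha1n21 : a1 ∉ n21 := fun h => hn21a (eqLn' (Ne.symm ha2a1) h ha2n21 ha1a ha2a)
  have ha1n22 : a1 ∉ n22 := fun h => hn22a (eqLn' (Ne.symm ha2a1) h ha2n22 ha1a ha2a)
  have hc2n11 : c2 ∉ n11 := fun h => hn11c (eqLn' hc2c1 h hc1n11 hc2c hc1c)
  have hc2n21 : c2 ∉ n21 := fun h => hn21c (eqLn' hc2c1 h hc1n21 hc2c hc1c)
  have hc1n12 : c1 ∉ n12 := fun h => hn12c (eqLn' (Ne.symm hc2c1) h hc2n12 hc1c hc2c)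
  have hc1n22 : c1 ∉ n22 := fun h => hn22c (eqLn' (Ne.symm hc2c1) h hc2n22 hc1c hc2c)
  have hb2p11 : b2 ∉ p11 := fun h => hp11b (eqLn' hb2b1 h hb1p11 hb2b hb1b)
  have hb2p12 : b2 ∉ p12 := fun h => hp12b (eqLn' hb2b1 h hb1p12 hb2b hb1b)
  have hb1p21 : b1 ∉ p21 := fun h => hp21b (eqLn' (Ne.symm hb2b1) h hb2p21 hb1b hb2b)
  have hb1p22 : b1 ∉ p22 := fun h => hp22b (eqLn' (Ne.symm hb2b1) h hb2p22 hb1b hb2b)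
  have hc2p11 : c2 ∉ p11 := fun h => hp11c (eqLn' hc2c1 h hc1p11 hc2c hc1c)
  have hc2p21 : c2 ∉ p21 := fun h => hp21c (eqLn' hc2c1 h hc1p21 hc2c hc1c)
  have hc1p12 : c1 ∉ p12 := fun h => hp12c (eqLn' (Ne.symm hc2c1) h hc2p12 hc1c hc2c)
  have hc1p22 : c1 ∉ p22 := fun h => hp22c (eqLn' (Ne.symm hc2c1) h hc2p22 hc1c hc2c)
  -- ### the three remaining lines d, e, g through Z
  obtain ⟨d, hdZ, h'⟩ := pick_line' horder Z {a, b, c} (card3_le _ _ _)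
  have hda : d ≠ a := by simp at h'; exact h'.1
  have hdb : d ≠ b := by simp at h'; exact h'.2.1
  have hdc : d ≠ c := by simp at h'; exact h'.2.2
  obtain ⟨e, heZ, h'⟩ := pick_line' horder Z {a, b, c, d} (card4_le _ _ _ _)
  have hea : e ≠ a := by simp at h'; exact h'.1
  have heb : e ≠ b := by simp at h'; exact h'.2.1
  have hec : e ≠ c := by simp at h'; exact h'.2.2.1
  have hed : e ≠ d := by simp at h'; exact h'.2.2.2
  obtain ⟨g, hgZ, h'⟩ := pick_line' horder Z {a, b, c, d, e} (card5_le _ _ _ _ _)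
  have hga : g ≠ a := by simp at h'; exact h'.1
  have hgb : g ≠ b := by simp at h'; exact h'.2.1
  have hgc : g ≠ c := by simp at h'; exact h'.2.2.1
  have hgd : g ≠ d := by simp at h'; exact h'.2.2.2.1
  have hge : g ≠ e := by simp at h'; exact h'.2.2.2.2
  -- ### tangent lines T2a (at a2), T2b (at b2), T2c (at c2)
  obtain ⟨T2a, ha2T2a, h'⟩ := pick_line' horder a2 {a, m21, m22, n21, n22} (card5_le _ _ _ _ _)
  have hT2a_a : T2a ≠ a := by simp at h'; exact h'.1
  have hT2a_m21 : T2a ≠ m21 := by simp at h'; exact h'.2.1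
  have hT2a_m22 : T2a ≠ m22 := by simp at h'; exact h'.2.2.1
  have hT2a_n21 : T2a ≠ n21 := by simp at h'; exact h'.2.2.2.1
  have hT2a_n22 : T2a ≠ n22 := by simp at h'; exact h'.2.2.2.2
  have hZT2a : Z ∉ T2a := fun h => hT2a_a (eqLn' ha2Z ha2T2a h ha2a haZ)
  have ha1T2a : a1 ∉ T2a := fun h => hT2a_a (eqLn' ha2a1 ha2T2a h ha2a ha1a)
  have hb1T2a : b1 ∉ T2a := fun h => hT2a_m21 (eqLn' ha2b1 ha2T2a h ha2m21 hb1m21)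
  have hb2T2a : b2 ∉ T2a := fun h => hT2a_m22 (eqLn' ha2b2 ha2T2a h ha2m22 hb2m22)
  have hc1T2a : c1 ∉ T2a := fun h => hT2a_n21 (eqLn' ha2c1 ha2T2a h ha2n21 hc1n21)
  have hc2T2a : c2 ∉ T2a := fun h => hT2a_n22 (eqLn' ha2c2 ha2T2a h ha2n22 hc2n22)
  obtain ⟨T2b, hb2T2b, h'⟩ := pick_line' horder b2 {b, m12, m22, p21, p22} (card5_le _ _ _ _ _)
  have hT2b_b : T2b ≠ b := by simp at h'; exact h'.1
  have hT2b_m12 : T2b ≠ m12 := by simp at h'; exact h'.2.1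
  have hT2b_m22 : T2b ≠ m22 := by simp at h'; exact h'.2.2.1
  have hT2b_p21 : T2b ≠ p21 := by simp at h'; exact h'.2.2.2.1
  have hT2b_p22 : T2b ≠ p22 := by simp at h'; exact h'.2.2.2.2
  have hZT2b : Z ∉ T2b := fun h => hT2b_b (eqLn' hb2Z hb2T2b h hb2b hbZ)
  have hb1T2b : b1 ∉ T2b := fun h => hT2b_b (eqLn' hb2b1 hb2T2b h hb2b hb1b)
  have ha1T2b : a1 ∉ T2b := fun h => hT2b_m12 (eqLn' (Ne.symm ha1b2) hb2T2b h hb2m12 ha1m12)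
  have ha2T2b : a2 ∉ T2b := fun h => hT2b_m22 (eqLn' (Ne.symm ha2b2) hb2T2b h hb2m22 ha2m22)
  have hc1T2b : c1 ∉ T2b := fun h => hT2b_p21 (eqLn' hb2c1 hb2T2b h hb2p21 hc1p21)
  have hc2T2b : c2 ∉ T2b := fun h => hT2b_p22 (eqLn' hb2c2 hb2T2b h hb2p22 hc2p22)
  obtain ⟨T2c, hc2T2c, h'⟩ := pick_line' horder c2 {c, n12, n22, p12, p22} (card5_le _ _ _ _ _)
  have hT2c_c : T2c ≠ c := by simp at h'; exact h'.1
  have hT2c_n12 : T2c ≠ n12 := by simp at h'; exact h'.2.1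
  have hT2c_n22 : T2c ≠ n22 := by simp at h'; exact h'.2.2.1
  have hT2c_p12 : T2c ≠ p12 := by simp at h'; exact h'.2.2.2.1
  have hT2c_p22 : T2c ≠ p22 := by simp at h'; exact h'.2.2.2.2
  have hZT2c : Z ∉ T2c := fun h => hT2c_c (eqLn' hc2Z hc2T2c h hc2c hcZ)
  have hc1T2c : c1 ∉ T2c := fun h => hT2c_c (eqLn' hc2c1 hc2T2c h hc2c hc1c)
  have ha1T2c : a1 ∉ T2c := fun h => hT2c_n12 (eqLn' (Ne.symm ha1c2) hc2T2c h hc2n12 ha1n12)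
  have ha2T2c : a2 ∉ T2c := fun h => hT2c_n22 (eqLn' (Ne.symm ha2c2) hc2T2c h hc2n22 ha2n22)
  have hb1T2c : b1 ∉ T2c := fun h => hT2c_p12 (eqLn' (Ne.symm hb1c2) hc2T2c h hc2p12 hb1p12)
  have hb2T2c : b2 ∉ T2c := fun h => hT2c_p22 (eqLn' (Ne.symm hb2c2) hc2T2c h hc2p22 hb2p22)
  -- ### pencil classifications
  have hpen_Z : ∀ l : L, Z ∈ l → l ∈ ({a, b, c, d, e, g} : Finset L) := by
    refine classify_lines' horder Z _ ?_ ?_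
    · exact card6_eq hab hac (Ne.symm hda) (Ne.symm hea) (Ne.symm hga) hbc (Ne.symm hdb)
        (Ne.symm heb) (Ne.symm hgb) (Ne.symm hdc) (Ne.symm hec) (Ne.symm hgc)
        (Ne.symm hed) (Ne.symm hgd) (Ne.symm hge)
    · intro l hl
      simp only [Finset.mem_insert, Finset.mem_singleton] at hl
      rcases hl with rfl | rfl | rfl | rfl | rfl | rfl
      exacts [haZ, hbZ, hcZ, hdZ, heZ, hgZ]
  have hpen_a2 : ∀ l : L, a2 ∈ l → l ∈ ({a, m21, m22, n21, n22, T2a} : Finset L) := by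
    refine classify_lines' horder a2 _ ?_ ?_
    · refine card6_eq (Ne.symm hm21a) (Ne.symm hm22a) (Ne.symm hn21a) (Ne.symm hn22a)
        (Ne.symm hT2a_a) ?_ ?_ ?_ (Ne.symm hT2a_m21) ?_ ?_ (Ne.symm hT2a_m22) ?_
        (Ne.symm hT2a_n21) (Ne.symm hT2a_n22)
      · exact fun h => hb1m22 (h ▸ hb1m21)
      · exact fun h => hb1n21 (h ▸ hb1m21)
      · exact fun h => hb1n22 (h ▸ hb1m21)
      · exact fun h => hb2n21 (h ▸ hb2m22)
      · exact fun h => hb2n22 (h ▸ hb2m22)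
      · exact fun h => hc1n22 (h ▸ hc1n21)
    · intro l hl
      simp only [Finset.mem_insert, Finset.mem_singleton] at hl
      rcases hl with rfl | rfl | rfl | rfl | rfl | rfl
      exacts [ha2a, ha2m21, ha2m22, ha2n21, ha2n22, ha2T2a]
  have hpen_b2 : ∀ l : L, b2 ∈ l → l ∈ ({b, m12, m22, p21, p22, T2b} : Finset L) := by
    refine classify_lines' horder b2 _ ?_ ?_
    · refine card6_eq (Ne.symm hm12b) (Ne.symm hm22b) (Ne.symm hp21b) (Ne.symm hp22b)
        (Ne.symm hT2b_b) ?_ ?_ ?_ (Ne.symm hT2b_m12) ?_ ?_ (Ne.symm hT2b_m22) ?_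
        (Ne.symm hT2b_p21) (Ne.symm hT2b_p22)
      · exact fun h => ha1m22 (h ▸ ha1m12)
      · exact fun h => ha1p21 (h ▸ ha1m12)
      · exact fun h => ha1p22 (h ▸ ha1m12)
      · exact fun h => ha2p21 (h ▸ ha2m22)
      · exact fun h => ha2p22 (h ▸ ha2m22)
      · exact fun h => hc1p22 (h ▸ hc1p21)
    · intro l hl
      simp only [Finset.mem_insert, Finset.mem_singleton] at hl
      rcases hl with rfl | rfl | rfl | rfl | rfl | rfl
      exacts [hb2b, hb2m12, hb2m22, hb2p21, hb2p22, hb2T2b]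
  have hpen_c2 : ∀ l : L, c2 ∈ l → l ∈ ({c, n12, n22, p12, p22, T2c} : Finset L) := by
    refine classify_lines' horder c2 _ ?_ ?_
    · refine card6_eq (Ne.symm hn12c) (Ne.symm hn22c) (Ne.symm hp12c) (Ne.symm hp22c)
        (Ne.symm hT2c_c) ?_ ?_ ?_ (Ne.symm hT2c_n12) ?_ ?_ (Ne.symm hT2c_n22) ?_
        (Ne.symm hT2c_p12) (Ne.symm hT2c_p22)
      · exact fun h => ha1n22 (h ▸ ha1n12)
      · exact fun h => hb1n12 (h.symm ▸ hb1p12)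
      · exact fun h => hb2n12 (h.symm ▸ hb2p22)
      · exact fun h => hb1n22 (h.symm ▸ hb1p12)
      · exact fun h => hb2n22 (h.symm ▸ hb2p22)
      · exact fun h => hb1p22 (h.symm ▸ hb1p12)
    · intro l hl
      simp only [Finset.mem_insert, Finset.mem_singleton] at hl
      rcases hl with rfl | rfl | rfl | rfl | rfl | rfl
      exacts [hc2c, hc2n12, hc2n22, hc2p12, hc2p22, hc2T2c]
  -- ### the designated points on the six lines through Z
  have hp22a : p22 ≠ a := fun h => hc2a (h ▸ hc2p22)
  set pa := HasPoints.mkPoint (P := P) hp22a with hpadef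
  have hpap : pa ∈ p22 := (HasPoints.mkPoint_ax (P := P) hp22a).1
  have hpaa : pa ∈ a := (HasPoints.mkPoint_ax (P := P) hp22a).2
  have hT2ba : T2b ≠ a := fun h => hb2a (h ▸ hb2T2b)
  set ta := HasPoints.mkPoint (P := P) hT2ba with htadef
  have htaT : ta ∈ T2b := (HasPoints.mkPoint_ax (P := P) hT2ba).1
  have htaa : ta ∈ a := (HasPoints.mkPoint_ax (P := P) hT2ba).2
  obtain ⟨fa, hfaa, h'⟩ := pick_point' horder a {Z, a1, a2, pa, ta} (card5_le _ _ _ _ _)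
  have hfaZ : fa ≠ Z := by simp at h'; exact h'.1
  have hfa1 : fa ≠ a1 := by simp at h'; exact h'.2.1
  have hfa2 : fa ≠ a2 := by simp at h'; exact h'.2.2.1
  have hfapa : fa ≠ pa := by simp at h'; exact h'.2.2.2.1
  have hfata : fa ≠ ta := by simp at h'; exact h'.2.2.2.2
  have hn22b : n22 ≠ b := fun h => ha2b (h ▸ ha2n22)
  set pb := HasPoints.mkPoint (P := P) hn22b with hpbdef
  have hpbn : pb ∈ n22 := (HasPoints.mkPoint_ax (P := P) hn22b).1
  have hpbb : pb ∈ b := (HasPoints.mkPoint_ax (P := P) hn22b).2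
  have hT2cb : T2c ≠ b := fun h => hc2b (h ▸ hc2T2c)
  set tb := HasPoints.mkPoint (P := P) hT2cb with htbdef
  have htbT : tb ∈ T2c := (HasPoints.mkPoint_ax (P := P) hT2cb).1
  have htbb : tb ∈ b := (HasPoints.mkPoint_ax (P := P) hT2cb).2
  obtain ⟨fb, hfbb, h'⟩ := pick_point' horder b {Z, b1, b2, pb, tb} (card5_le _ _ _ _ _)
  have hfbZ : fb ≠ Z := by simp at h'; exact h'.1
  have hfb1 : fb ≠ b1 := by simp at h'; exact h'.2.1
  have hfb2 : fb ≠ b2 := by simp at h'; exact h'.2.2.1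
  have hfbpb : fb ≠ pb := by simp at h'; exact h'.2.2.2.1
  have hfbtb : fb ≠ tb := by simp at h'; exact h'.2.2.2.2
  have hT2ac : T2a ≠ c := fun h => ha2c (h ▸ ha2T2a)
  set tc := HasPoints.mkPoint (P := P) hT2ac with htcdef
  have htcT : tc ∈ T2a := (HasPoints.mkPoint_ax (P := P) hT2ac).1
  have htcc : tc ∈ c := (HasPoints.mkPoint_ax (P := P) hT2ac).2
  obtain ⟨fc, hfcc, h'⟩ := pick_point' horder c {Z, c1, c2, Q, tc} (card5_le _ _ _ _ _)
  have hfcZ : fc ≠ Z := by simp at h'; exact h'.1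
  have hfc1 : fc ≠ c1 := by simp at h'; exact h'.2.1
  have hfc2 : fc ≠ c2 := by simp at h'; exact h'.2.2.1
  have hfcQ : fc ≠ Q := by simp at h'; exact h'.2.2.2.1
  have hfctc : fc ≠ tc := by simp at h'; exact h'.2.2.2.2
  have hm11d : m11 ≠ d := fun h => hZm11 (h ▸ hdZ)
  set fd := HasPoints.mkPoint (P := P) hm11d with hfddef
  have hfdm : fd ∈ m11 := (HasPoints.mkPoint_ax (P := P) hm11d).1
  have hfdd : fd ∈ d := (HasPoints.mkPoint_ax (P := P) hm11d).2
  have hp11e : p11 ≠ e := fun h => hZp11 (h ▸ heZ)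
  set fe := HasPoints.mkPoint (P := P) hp11e with hfedef
  have hfep : fe ∈ p11 := (HasPoints.mkPoint_ax (P := P) hp11e).1
  have hfee : fe ∈ e := (HasPoints.mkPoint_ax (P := P) hp11e).2
  have hn11g : n11 ≠ g := fun h => hZn11 (h ▸ hgZ)
  set fg := HasPoints.mkPoint (P := P) hn11g with hfgdef
  have hfgn : fg ∈ n11 := (HasPoints.mkPoint_ax (P := P) hn11g).1
  have hfgg : fg ∈ g := (HasPoints.mkPoint_ax (P := P) hn11g).2
  -- distinctness of designated points on the same line
  have hpata : pa ≠ ta := by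
    intro h
    have hpab2 : pa ≠ b2 := fun h' => hb2a (h' ▸ hpaa)
    exact hT2b_p22 (eqLn' hpab2 hpap hb2p22 (h ▸ htaT) hb2T2b).symm
  have hpbtb : pb ≠ tb := by
    intro h
    have hpbc2 : pb ≠ c2 := fun h' => hc2b (h' ▸ hpbb)
    exact hT2c_n22 (eqLn' hpbc2 hpbn hc2n22 (h ▸ htbT) hc2T2c).symm
  have hQtc : Q ≠ tc := by
    intro h
    have hQa2 : Q ≠ a2 := fun h' => ha2c (h' ▸ hQc)
    exact hT2a_m22 (eqLn' hQa2 hQ22 ha2m22 (h ▸ htcT) ha2T2a).symm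
  -- ### the bad point set
  obtain ⟨Bfin, hBiff, hB7⟩ : ∃ s : Finset P,
      (∀ x : P, x ∈ s ↔ x = Z ∨ x = a1 ∨ x = a2 ∨ x = b1 ∨ x = b2 ∨ x = c1 ∨ x = c2) ∧
      s.card = 7 := by
    refine ⟨{Z, a1, a2, b1, b2, c1, c2}, fun x => by
      simp [Finset.mem_insert, Finset.mem_singleton], ?_⟩
    exact card7_eq (Ne.symm ha1Z) (Ne.symm ha2Z) (Ne.symm hb1Z) (Ne.symm hb2Z)
      (Ne.symm hc1Z) (Ne.symm hc2Z) (Ne.symm ha2a1) ha1b1 ha1b2 ha1c1 ha1c2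
      ha2b1 ha2b2 ha2c1 ha2c2 (Ne.symm hb2b1) hb1c1 hb1c2 hb2c1 hb2c2 (Ne.symm hc2c1)
  -- membership in Bfin is impossible for suitable points of the six lines
  have hBa : ∀ x : P, x ∈ a → x ≠ Z → x ≠ a1 → x ≠ a2 → x ∉ Bfin := by
    intro x hx hxZ hx1 hx2 hmem
    rcases (hBiff x).1 hmem with h | h | h | h | h | h | h
    exacts [hxZ h, hx1 h, hx2 h, hb1a (h ▸ hx), hb2a (h ▸ hx), hc1a (h ▸ hx), hc2a (h ▸ hx)]
  have hBb : ∀ x : P, x ∈ b → x ≠ Z → x ≠ b1 → x ≠ b2 → x ∉ Bfin := by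
    intro x hx hxZ hx1 hx2 hmem
    rcases (hBiff x).1 hmem with h | h | h | h | h | h | h
    exacts [hxZ h, ha1b (h ▸ hx), ha2b (h ▸ hx), hx1 h, hx2 h, hc1b (h ▸ hx), hc2b (h ▸ hx)]
  have hBc : ∀ x : P, x ∈ c → x ≠ Z → x ≠ c1 → x ≠ c2 → x ∉ Bfin := by
    intro x hx hxZ hx1 hx2 hmem
    rcases (hBiff x).1 hmem with h | h | h | h | h | h | h
    exacts [hxZ h, ha1c (h ▸ hx), ha2c (h ▸ hx), hb1c (h ▸ hx), hb2c (h ▸ hx), hx1 h, hx2 h]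
  have hBd : ∀ x : P, x ∈ d → x ≠ Z → x ∉ Bfin := by
    intro x hx hxZ hmem
    rcases (hBiff x).1 hmem with h | h | h | h | h | h | h
    · exact hxZ h
    · exact ha1Z (mZ (Ne.symm hda) haZ hdZ ha1a (h ▸ hx))
    · exact ha2Z (mZ (Ne.symm hda) haZ hdZ ha2a (h ▸ hx))
    · exact hb1Z (mZ (Ne.symm hdb) hbZ hdZ hb1b (h ▸ hx))
    · exact hb2Z (mZ (Ne.symm hdb) hbZ hdZ hb2b (h ▸ hx))
    · exact hc1Z (mZ (Ne.symm hdc) hcZ hdZ hc1c (h ▸ hx))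
    · exact hc2Z (mZ (Ne.symm hdc) hcZ hdZ hc2c (h ▸ hx))
  have hBe : ∀ x : P, x ∈ e → x ≠ Z → x ∉ Bfin := by
    intro x hx hxZ hmem
    rcases (hBiff x).1 hmem with h | h | h | h | h | h | h
    · exact hxZ h
    · exact ha1Z (mZ (Ne.symm hea) haZ heZ ha1a (h ▸ hx))
    · exact ha2Z (mZ (Ne.symm hea) haZ heZ ha2a (h ▸ hx))
    · exact hb1Z (mZ (Ne.symm heb) hbZ heZ hb1b (h ▸ hx))
    · exact hb2Z (mZ (Ne.symm heb) hbZ heZ hb2b (h ▸ hx))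
    · exact hc1Z (mZ (Ne.symm hec) hcZ heZ hc1c (h ▸ hx))
    · exact hc2Z (mZ (Ne.symm hec) hcZ heZ hc2c (h ▸ hx))
  have hBg : ∀ x : P, x ∈ g → x ≠ Z → x ∉ Bfin := by
    intro x hx hxZ hmem
    rcases (hBiff x).1 hmem with h | h | h | h | h | h | h
    · exact hxZ h
    · exact ha1Z (mZ (Ne.symm hga) haZ hgZ ha1a (h ▸ hx))
    · exact ha2Z (mZ (Ne.symm hga) haZ hgZ ha2a (h ▸ hx))
    · exact hb1Z (mZ (Ne.symm hgb) hbZ hgZ hb1b (h ▸ hx))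
    · exact hb2Z (mZ (Ne.symm hgb) hbZ hgZ hb2b (h ▸ hx))
    · exact hc1Z (mZ (Ne.symm hgc) hcZ hgZ hc1c (h ▸ hx))
    · exact hc2Z (mZ (Ne.symm hgc) hcZ hgZ hc2c (h ▸ hx))
  -- ### the matching function f and its key properties
  obtain ⟨f, hfmem, hfgood, hSUM⟩ :
      ∃ f : L → P, (∀ ℓ : L, f ℓ ∈ ℓ) ∧ (∀ ℓ : L, f ℓ ∉ Bfin) ∧
        (∀ ℓ : L, (∃ w ∈ Bfin, w ∈ ℓ) →
          (f ℓ ∈ a ∧ ((ℓ = a ∧ f ℓ = fa) ∨ (ℓ = p22 ∧ f ℓ = pa) ∨ (ℓ = T2b ∧ f ℓ = ta))) ∨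
          (f ℓ ∈ b ∧ ((ℓ = b ∧ f ℓ = fb) ∨ (ℓ = n22 ∧ f ℓ = pb) ∨ (ℓ = T2c ∧ f ℓ = tb))) ∨
          (f ℓ ∈ c ∧ ((ℓ = c ∧ f ℓ = fc) ∨ (ℓ = m22 ∧ f ℓ = Q) ∨ (ℓ = T2a ∧ f ℓ = tc))) ∨
          (f ℓ ∈ d ∧ ((ℓ = d ∧ f ℓ ∈ m11) ∨ (a1 ∈ ℓ ∧ ℓ ≠ m11))) ∨
          (f ℓ ∈ e ∧ ((ℓ = e ∧ f ℓ ∈ p11) ∨ (b1 ∈ ℓ ∧ ℓ ≠ p11))) ∨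
          (f ℓ ∈ g ∧ ((ℓ = g ∧ f ℓ ∈ n11) ∨ (c1 ∈ ℓ ∧ ℓ ≠ n11)))) := by
    refine ⟨fun ℓ =>
      if hZl : Z ∈ ℓ then
        (if ℓ = a then fa else if ℓ = b then fb else if ℓ = c then fc
         else if ℓ = d then fd else if ℓ = e then fe else fg)
      else if b1 ∈ ℓ ∧ ℓ ≠ p11 then
        HasPoints.mkPoint (P := P) (show ℓ ≠ e from fun h => hZl (by rw [h]; exact heZ))
      else if c1 ∈ ℓ ∧ ℓ ≠ n11 then
        HasPoints.mkPoint (P := P) (show ℓ ≠ g from fun h => hZl (by rw [h]; exact hgZ))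
      else if a1 ∈ ℓ then
        HasPoints.mkPoint (P := P) (show ℓ ≠ d from fun h => hZl (by rw [h]; exact hdZ))
      else if a2 ∈ ℓ ∧ c2 ∉ ℓ then
        HasPoints.mkPoint (P := P) (show ℓ ≠ c from fun h => hZl (by rw [h]; exact hcZ))
      else if c2 ∈ ℓ ∧ b2 ∉ ℓ then
        HasPoints.mkPoint (P := P) (show ℓ ≠ b from fun h => hZl (by rw [h]; exact hbZ))
      else HasPoints.mkPoint (P := P) (show ℓ ≠ a from fun h => hZl (by rw [h]; exact haZ)),
      ?_, ?_, ?_⟩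
    · -- f ℓ ∈ ℓ
      intro ℓ
      dsimp only
      by_cases hZl : Z ∈ ℓ
      · rw [dif_pos hZl]
        by_cases h1 : ℓ = a
        · rw [if_pos h1, h1]; exact hfaa
        rw [if_neg h1]
        by_cases h2 : ℓ = b
        · rw [if_pos h2, h2]; exact hfbb
        rw [if_neg h2]
        by_cases h3 : ℓ = c
        · rw [if_pos h3, h3]; exact hfcc
        rw [if_neg h3]
        by_cases h4 : ℓ = d
        · rw [if_pos h4, h4]; exact hfdd
        rw [if_neg h4]
        by_cases h5 : ℓ = e
        · rw [if_pos h5, h5]; exact hfee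
        rw [if_neg h5]
        have h6 := hpen_Z ℓ hZl
        simp only [Finset.mem_insert, Finset.mem_singleton] at h6
        rcases h6 with h | h | h | h | h | h
        · exact absurd h h1
        · exact absurd h h2
        · exact absurd h h3
        · exact absurd h h4
        · exact absurd h h5
        · rw [h]; exact hfgg
      · rw [dif_neg hZl]
        split_ifs <;> exact (HasPoints.mkPoint_ax (P := P) _).1
    · -- f ℓ ∉ Bfin
      intro ℓ
      dsimp only
      by_cases hZl : Z ∈ ℓ
      · rw [dif_pos hZl]
        split_ifs
        · exact hBa fa hfaa hfaZ hfa1 hfa2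
        · exact hBb fb hfbb hfbZ hfb1 hfb2
        · exact hBc fc hfcc hfcZ hfc1 hfc2
        · exact hBd fd hfdd (fun h => hZm11 (h ▸ hfdm))
        · exact hBe fe hfee (fun h => hZp11 (h ▸ hfep))
        · exact hBg fg hfgg (fun h => hZn11 (h ▸ hfgn))
      · rw [dif_neg hZl]
        split_ifs with h6 h7 h8 h9 h10
        · exact hBe _ (HasPoints.mkPoint_ax (P := P) _).2
            (fun h => hZl (h ▸ (HasPoints.mkPoint_ax (P := P) _).1))
        · exact hBg _ (HasPoints.mkPoint_ax (P := P) _).2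
            (fun h => hZl (h ▸ (HasPoints.mkPoint_ax (P := P) _).1))
        · exact hBd _ (HasPoints.mkPoint_ax (P := P) _).2
            (fun h => hZl (h ▸ (HasPoints.mkPoint_ax (P := P) _).1))
        · -- value on c
          refine hBc _ (HasPoints.mkPoint_ax (P := P) _).2
            (fun h => hZl (h ▸ (HasPoints.mkPoint_ax (P := P) _).1)) ?_ ?_
          · intro h
            have hc1l : c1 ∈ ℓ := h ▸ (HasPoints.mkPoint_ax (P := P) _).1
            have hln : ℓ = n11 := by
              by_contra hk
              exact h7 ⟨hc1l, hk⟩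
            exact h8 (hln.symm ▸ ha1n11)
          · intro h
            exact h9.2 (h ▸ (HasPoints.mkPoint_ax (P := P) _).1)
        · -- value on b
          refine hBb _ (HasPoints.mkPoint_ax (P := P) _).2
            (fun h => hZl (h ▸ (HasPoints.mkPoint_ax (P := P) _).1)) ?_ ?_
          · intro h
            have hb1l : b1 ∈ ℓ := h ▸ (HasPoints.mkPoint_ax (P := P) _).1
            have hlp : ℓ = p11 := by
              by_contra hk
              exact h6 ⟨hb1l, hk⟩
            refine h7 ⟨hlp.symm ▸ hc1p11, ?_⟩
            intro hk
            exact ha1p11 (hlp ▸ hk ▸ ha1n11)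
          · intro h
            exact h10.2 (h ▸ (HasPoints.mkPoint_ax (P := P) _).1)
        · -- value on a
          refine hBa _ (HasPoints.mkPoint_ax (P := P) _).2
            (fun h => hZl (h ▸ (HasPoints.mkPoint_ax (P := P) _).1)) ?_ ?_
          · intro h
            exact h8 (h ▸ (HasPoints.mkPoint_ax (P := P) _).1)
          · intro h
            have ha2l : a2 ∈ ℓ := h ▸ (HasPoints.mkPoint_ax (P := P) _).1
            have hc2l : c2 ∈ ℓ := by
              by_contra hk
              exact h9 ⟨ha2l, hk⟩
            have hb2l : b2 ∈ ℓ := by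
              by_contra hk
              exact h10 ⟨hc2l, hk⟩
            exact hb2n22 ((eqLn' ha2c2 ha2l hc2l ha2n22 hc2n22) ▸ hb2l)
    · -- the source/value classification
      intro ℓ hBm
      dsimp only
      by_cases hZl : Z ∈ ℓ
      · rw [dif_pos hZl]
        by_cases h1 : ℓ = a
        · rw [if_pos h1]
          exact Or.inl ⟨hfaa, Or.inl ⟨h1, rfl⟩⟩
        rw [if_neg h1]
        by_cases h2 : ℓ = b
        · rw [if_pos h2]
          exact Or.inr (Or.inl ⟨hfbb, Or.inl ⟨h2, rfl⟩⟩)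
        rw [if_neg h2]
        by_cases h3 : ℓ = c
        · rw [if_pos h3]
          exact Or.inr (Or.inr (Or.inl ⟨hfcc, Or.inl ⟨h3, rfl⟩⟩))
        rw [if_neg h3]
        by_cases h4 : ℓ = d
        · rw [if_pos h4]
          exact Or.inr (Or.inr (Or.inr (Or.inl ⟨hfdd, Or.inl ⟨h4, hfdm⟩⟩)))
        rw [if_neg h4]
        by_cases h5 : ℓ = e
        · rw [if_pos h5]
          exact Or.inr (Or.inr (Or.inr (Or.inr (Or.inl ⟨hfee, Or.inl ⟨h5, hfep⟩⟩))))
        rw [if_neg h5]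
        have h6 := hpen_Z ℓ hZl
        simp only [Finset.mem_insert, Finset.mem_singleton] at h6
        rcases h6 with h | h | h | h | h | h
        · exact absurd h h1
        · exact absurd h h2
        · exact absurd h h3
        · exact absurd h h4
        · exact absurd h h5
        · exact Or.inr (Or.inr (Or.inr (Or.inr (Or.inr ⟨hfgg, Or.inl ⟨h, hfgn⟩⟩))))
      · rw [dif_neg hZl]
        by_cases h6 : b1 ∈ ℓ ∧ ℓ ≠ p11
        · rw [if_pos h6]
          exact Or.inr (Or.inr (Or.inr (Or.inr (Or.inl
            ⟨(HasPoints.mkPoint_ax (P := P) _).2, Or.inr ⟨h6.1, h6.2⟩⟩))))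
        rw [if_neg h6]
        by_cases h7 : c1 ∈ ℓ ∧ ℓ ≠ n11
        · rw [if_pos h7]
          exact Or.inr (Or.inr (Or.inr (Or.inr (Or.inr
            ⟨(HasPoints.mkPoint_ax (P := P) _).2, Or.inr ⟨h7.1, h7.2⟩⟩))))
        rw [if_neg h7]
        by_cases h8 : a1 ∈ ℓ
        · rw [if_pos h8]
          refine Or.inr (Or.inr (Or.inr (Or.inl
            ⟨(HasPoints.mkPoint_ax (P := P) _).2, Or.inr ⟨h8, ?_⟩⟩)))
          intro h
          refine h6 ⟨h.symm ▸ hb1m11, ?_⟩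
          intro hk
          exact hc1m11 (h ▸ hk ▸ hc1p11)
        rw [if_neg h8]
        by_cases h9 : a2 ∈ ℓ ∧ c2 ∉ ℓ
        · rw [if_pos h9]
          have hmem := hpen_a2 ℓ h9.1
          simp only [Finset.mem_insert, Finset.mem_singleton] at hmem
          rcases hmem with h | h | h | h | h | h
          · exact absurd (h.symm ▸ haZ) hZl
          · exact absurd ⟨h.symm ▸ hb1m21, fun hk => hc1m21 (h ▸ hk ▸ hc1p11)⟩ h6
          · refine Or.inr (Or.inr (Or.inl ⟨(HasPoints.mkPoint_ax (P := P) _).2,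
              Or.inr (Or.inl ⟨h, ?_⟩)⟩))
            exact eqPt' (show ℓ ≠ c from fun hk => hZl (by rw [hk]; exact hcZ))
              (HasPoints.mkPoint_ax (P := P) _).1 (HasPoints.mkPoint_ax (P := P) _).2
              (h.symm ▸ hQ22) hQc
          · exact absurd ⟨h.symm ▸ hc1n21, fun hk => ha1n21 (h ▸ hk ▸ ha1n11)⟩ h7
          · exact absurd (h.symm ▸ hc2n22) h9.2
          · refine Or.inr (Or.inr (Or.inl ⟨(HasPoints.mkPoint_ax (P := P) _).2,
              Or.inr (Or.inr ⟨h, ?_⟩)⟩))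
            exact eqPt' (show ℓ ≠ c from fun hk => hZl (by rw [hk]; exact hcZ))
              (HasPoints.mkPoint_ax (P := P) _).1 (HasPoints.mkPoint_ax (P := P) _).2
              (h.symm ▸ htcT) htcc
        rw [if_neg h9]
        by_cases h10 : c2 ∈ ℓ ∧ b2 ∉ ℓ
        · rw [if_pos h10]
          have hmem := hpen_c2 ℓ h10.1
          simp only [Finset.mem_insert, Finset.mem_singleton] at hmem
          rcases hmem with h | h | h | h | h | h
          · exact absurd (h.symm ▸ hcZ) hZl
          · exact absurd (h.symm ▸ ha1n12) h8
          · refine Or.inr (Or.inl ⟨(HasPoints.mkPoint_ax (P := P) _).2,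
              Or.inr (Or.inl ⟨h, ?_⟩)⟩)
            exact eqPt' (show ℓ ≠ b from fun hk => hZl (by rw [hk]; exact hbZ))
              (HasPoints.mkPoint_ax (P := P) _).1 (HasPoints.mkPoint_ax (P := P) _).2
              (h.symm ▸ hpbn) hpbb
          · exact absurd ⟨h.symm ▸ hb1p12, fun hk => hc2p11 ((h.symm.trans hk) ▸ hc2p12)⟩ h6
          · exact absurd (h.symm ▸ hb2p22) h10.2
          · refine Or.inr (Or.inl ⟨(HasPoints.mkPoint_ax (P := P) _).2,
              Or.inr (Or.inr ⟨h, ?_⟩)⟩)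
            exact eqPt' (show ℓ ≠ b from fun hk => hZl (by rw [hk]; exact hbZ))
              (HasPoints.mkPoint_ax (P := P) _).1 (HasPoints.mkPoint_ax (P := P) _).2
              (h.symm ▸ htbT) htbb
        rw [if_neg h10]
        obtain ⟨w, hwB, hwl⟩ := hBm
        have hl_eq : ℓ = p22 ∨ ℓ = T2b := by
          rcases (hBiff w).1 hwB with h | h | h | h | h | h | h
          · exact absurd (h ▸ hwl) hZl
          · exact absurd (h ▸ hwl) h8
          · -- w = a2
            have ha2l : a2 ∈ ℓ := h ▸ hwl
            have hc2l : c2 ∈ ℓ := by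
              by_contra hk
              exact h9 ⟨ha2l, hk⟩
            have hb2l : b2 ∈ ℓ := by
              by_contra hk
              exact h10 ⟨hc2l, hk⟩
            exact absurd ((eqLn' ha2c2 ha2l hc2l ha2n22 hc2n22) ▸ hb2l) hb2n22
          · -- w = b1
            have hb1l : b1 ∈ ℓ := h ▸ hwl
            have hlp : ℓ = p11 := by
              by_contra hk
              exact h6 ⟨hb1l, hk⟩
            refine absurd ⟨hlp.symm ▸ hc1p11, ?_⟩ h7
            intro hk
            exact ha1p11 (hlp ▸ hk ▸ ha1n11)
          · -- w = b2
            have hb2l : b2 ∈ ℓ := h ▸ hwl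
            have hmem := hpen_b2 ℓ hb2l
            simp only [Finset.mem_insert, Finset.mem_singleton] at hmem
            rcases hmem with hh | hh | hh | hh | hh | hh
            · exact absurd (hh.symm ▸ hbZ) hZl
            · exact absurd (hh.symm ▸ ha1m12) h8
            · exact absurd ⟨hh.symm ▸ ha2m22, fun hk => hc2m22 (hh ▸ hk)⟩ h9
            · exact absurd ⟨hh.symm ▸ hc1p21, fun hk => ha1p21 (hh ▸ hk ▸ ha1n11)⟩ h7
            · exact Or.inl hh
            · exact Or.inr hh
          · -- w = c1
            have hc1l : c1 ∈ ℓ := h ▸ hwl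
            have hln : ℓ = n11 := by
              by_contra hk
              exact h7 ⟨hc1l, hk⟩
            exact absurd (hln.symm ▸ ha1n11) h8
          · -- w = c2
            have hc2l : c2 ∈ ℓ := h ▸ hwl
            have hb2l : b2 ∈ ℓ := by
              by_contra hk
              exact h10 ⟨hc2l, hk⟩
            exact Or.inl (eqLn' (Ne.symm hb2c2) hc2l hb2l hc2p22 hb2p22)
        rcases hl_eq with h | h
        · refine Or.inl ⟨(HasPoints.mkPoint_ax (P := P) _).2, Or.inr (Or.inl ⟨h, ?_⟩)⟩
          exact eqPt' (show ℓ ≠ a from fun hk => hZl (by rw [hk]; exact haZ))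
            (HasPoints.mkPoint_ax (P := P) _).1 (HasPoints.mkPoint_ax (P := P) _).2
            (h.symm ▸ hpap) hpaa
        · refine Or.inl ⟨(HasPoints.mkPoint_ax (P := P) _).2, Or.inr (Or.inr ⟨h, ?_⟩)⟩
          exact eqPt' (show ℓ ≠ a from fun hk => hZl (by rw [hk]; exact haZ))
            (HasPoints.mkPoint_ax (P := P) _).1 (HasPoints.mkPoint_ax (P := P) _).2
            (h.symm ▸ htaT) htaa
  -- ### cardinality of the plane
  have hcardP : Fintype.card P = 31 := by
    rw [ProjectivePlane.card_points P L, horder]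
    norm_num
  have hfZ : ∀ ℓ : L, f ℓ ≠ Z := fun ℓ h => hfgood ℓ ((hBiff _).2 (Or.inl h))
  refine ⟨Bfin, f, hB7, hcardP, hfmem, hfgood, ?_⟩
  intro ℓ ℓ' hB1 hB2 heq
  have KILL : ∀ {l1 l2 : L}, l1 ≠ l2 → Z ∈ l1 → Z ∈ l2 → f ℓ ∈ l1 → f ℓ' ∈ l2 → False := by
    intro l1 l2 h12 hZ1 hZ2 hm1 hm2
    exact hfZ ℓ (mZ h12 hZ1 hZ2 hm1 (heq.symm ▸ hm2))
  rcases hSUM ℓ hB1 with ⟨hx, hs⟩ | ⟨hx, hs⟩ | ⟨hx, hs⟩ | ⟨hx, hs⟩ | ⟨hx, hs⟩ | ⟨hx, hs⟩ <;>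
    rcases hSUM ℓ' hB2 with ⟨hy, ht⟩ | ⟨hy, ht⟩ | ⟨hy, ht⟩ | ⟨hy, ht⟩ | ⟨hy, ht⟩ | ⟨hy, ht⟩
  · rcases hs with ⟨hl, hv⟩ | ⟨hl, hv⟩ | ⟨hl, hv⟩ <;>
        rcases ht with ⟨hl', hv'⟩ | ⟨hl', hv'⟩ | ⟨hl', hv'⟩
    · exact hl.trans hl'.symm
    · rw [hv, hv'] at heq
      exact absurd heq hfapa
    · rw [hv, hv'] at heq
      exact absurd heq hfata
    · rw [hv, hv'] at heq
      exact absurd heq (Ne.symm hfapa)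
    · exact hl.trans hl'.symm
    · rw [hv, hv'] at heq
      exact absurd heq hpata
    · rw [hv, hv'] at heq
      exact absurd heq (Ne.symm hfata)
    · rw [hv, hv'] at heq
      exact absurd heq (Ne.symm hpata)
    · exact hl.trans hl'.symm
  · exact (KILL hab haZ hbZ hx hy).elim
  · exact (KILL hac haZ hcZ hx hy).elim
  · exact (KILL (Ne.symm hda) haZ hdZ hx hy).elim
  · exact (KILL (Ne.symm hea) haZ heZ hx hy).elim
  · exact (KILL (Ne.symm hga) haZ hgZ hx hy).elim
  · exact (KILL (Ne.symm hab) hbZ haZ hx hy).elim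
  · rcases hs with ⟨hl, hv⟩ | ⟨hl, hv⟩ | ⟨hl, hv⟩ <;>
        rcases ht with ⟨hl', hv'⟩ | ⟨hl', hv'⟩ | ⟨hl', hv'⟩
    · exact hl.trans hl'.symm
    · rw [hv, hv'] at heq
      exact absurd heq hfbpb
    · rw [hv, hv'] at heq
      exact absurd heq hfbtb
    · rw [hv, hv'] at heq
      exact absurd heq (Ne.symm hfbpb)
    · exact hl.trans hl'.symm
    · rw [hv, hv'] at heq
      exact absurd heq hpbtb
    · rw [hv, hv'] at heq
      exact absurd heq (Ne.symm hfbtb)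
    · rw [hv, hv'] at heq
      exact absurd heq (Ne.symm hpbtb)
    · exact hl.trans hl'.symm
  · exact (KILL hbc hbZ hcZ hx hy).elim
  · exact (KILL (Ne.symm hdb) hbZ hdZ hx hy).elim
  · exact (KILL (Ne.symm heb) hbZ heZ hx hy).elim
  · exact (KILL (Ne.symm hgb) hbZ hgZ hx hy).elim
  · exact (KILL (Ne.symm hac) hcZ haZ hx hy).elim
  · exact (KILL (Ne.symm hbc) hcZ hbZ hx hy).elim
  · rcases hs with ⟨hl, hv⟩ | ⟨hl, hv⟩ | ⟨hl, hv⟩ <;>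
        rcases ht with ⟨hl', hv'⟩ | ⟨hl', hv'⟩ | ⟨hl', hv'⟩
    · exact hl.trans hl'.symm
    · rw [hv, hv'] at heq
      exact absurd heq hfcQ
    · rw [hv, hv'] at heq
      exact absurd heq hfctc
    · rw [hv, hv'] at heq
      exact absurd heq (Ne.symm hfcQ)
    · exact hl.trans hl'.symm
    · rw [hv, hv'] at heq
      exact absurd heq hQtc
    · rw [hv, hv'] at heq
      exact absurd heq (Ne.symm hfctc)
    · rw [hv, hv'] at heq
      exact absurd heq (Ne.symm hQtc)
    · exact hl.trans hl'.symm
  · exact (KILL (Ne.symm hdc) hcZ hdZ hx hy).elim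
  · exact (KILL (Ne.symm hec) hcZ heZ hx hy).elim
  · exact (KILL (Ne.symm hgc) hcZ hgZ hx hy).elim
  · exact (KILL hda hdZ haZ hx hy).elim
  · exact (KILL hdb hdZ hbZ hx hy).elim
  · exact (KILL hdc hdZ hcZ hx hy).elim
  · rcases hs with ⟨hl, hv⟩ | ⟨hl1, hl2⟩ <;> rcases ht with ⟨hl', hv'⟩ | ⟨hl1', hl2'⟩
    · exact hl.trans hl'.symm
    · have hxl' : f ℓ ∈ ℓ' := heq.symm ▸ hfmem ℓ'
      have hxp : f ℓ ≠ a1 := fun h => ha1Z (mZ (Ne.symm hda) haZ hdZ ha1a (h ▸ hx))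
      exact absurd (eqLn' hxp hxl' hl1' hv ha1m11) hl2'
    · have hym : f ℓ ∈ m11 := heq.symm ▸ hv'
      have hxp : f ℓ ≠ a1 := fun h => ha1Z (mZ (Ne.symm hda) haZ hdZ ha1a (h ▸ hx))
      exact absurd (eqLn' hxp (hfmem ℓ) hl1 hym ha1m11) hl2
    · have hxl' : f ℓ ∈ ℓ' := heq.symm ▸ hfmem ℓ'
      have hxp : f ℓ ≠ a1 := fun h => ha1Z (mZ (Ne.symm hda) haZ hdZ ha1a (h ▸ hx))
      exact eqLn' hxp (hfmem ℓ) hl1 hxl' hl1'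
  · exact (KILL (Ne.symm hed) hdZ heZ hx hy).elim
  · exact (KILL (Ne.symm hgd) hdZ hgZ hx hy).elim
  · exact (KILL hea heZ haZ hx hy).elim
  · exact (KILL heb heZ hbZ hx hy).elim
  · exact (KILL hec heZ hcZ hx hy).elim
  · exact (KILL hed heZ hdZ hx hy).elim
  · rcases hs with ⟨hl, hv⟩ | ⟨hl1, hl2⟩ <;> rcases ht with ⟨hl', hv'⟩ | ⟨hl1', hl2'⟩
    · exact hl.trans hl'.symm
    · have hxl' : f ℓ ∈ ℓ' := heq.symm ▸ hfmem ℓ'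
      have hxp : f ℓ ≠ b1 := fun h => hb1Z (mZ (Ne.symm heb) hbZ heZ hb1b (h ▸ hx))
      exact absurd (eqLn' hxp hxl' hl1' hv hb1p11) hl2'
    · have hym : f ℓ ∈ p11 := heq.symm ▸ hv'
      have hxp : f ℓ ≠ b1 := fun h => hb1Z (mZ (Ne.symm heb) hbZ heZ hb1b (h ▸ hx))
      exact absurd (eqLn' hxp (hfmem ℓ) hl1 hym hb1p11) hl2
    · have hxl' : f ℓ ∈ ℓ' := heq.symm ▸ hfmem ℓ'
      have hxp : f ℓ ≠ b1 := fun h => hb1Z (mZ (Ne.symm heb) hbZ heZ hb1b (h ▸ hx))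
      exact eqLn' hxp (hfmem ℓ) hl1 hxl' hl1'
  · exact (KILL (Ne.symm hge) heZ hgZ hx hy).elim
  · exact (KILL hga hgZ haZ hx hy).elim
  · exact (KILL hgb hgZ hbZ hx hy).elim
  · exact (KILL hgc hgZ hcZ hx hy).elim
  · exact (KILL hgd hgZ hdZ hx hy).elim
  · exact (KILL hge hgZ heZ hx hy).elim
  · rcases hs with ⟨hl, hv⟩ | ⟨hl1, hl2⟩ <;> rcases ht with ⟨hl', hv'⟩ | ⟨hl1', hl2'⟩
    · exact hl.trans hl'.symm
    · have hxl' : f ℓ ∈ ℓ' := heq.symm ▸ hfmem ℓ'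
      have hxp : f ℓ ≠ c1 := fun h => hc1Z (mZ (Ne.symm hgc) hcZ hgZ hc1c (h ▸ hx))
      exact absurd (eqLn' hxp hxl' hl1' hv hc1n11) hl2'
    · have hym : f ℓ ∈ n11 := heq.symm ▸ hv'
      have hxp : f ℓ ≠ c1 := fun h => hc1Z (mZ (Ne.symm hgc) hcZ hgZ hc1c (h ▸ hx))
      exact absurd (eqLn' hxp (hfmem ℓ) hl1 hym hc1n11) hl2
    · have hxl' : f ℓ ∈ ℓ' := heq.symm ▸ hfmem ℓ'
      have hxp : f ℓ ≠ c1 := fun h => hc1Z (mZ (Ne.symm hgc) hcZ hgZ hc1c (h ▸ hx))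
      exact eqLn' hxp (hfmem ℓ) hl1 hxl' hl1'




end Stmt12Main


/-- Let `Π` be a projective plane of order `5`. Then the chromatic number
of the Kneser graph `Γ₅` on chambers of `Π` satisfies `χ(Γ₅) ≤ 24`. -/
theorem stmt_12 (P L : Type*) [Membership P L]
    [ProjectivePlane P L] [Fintype P] [Fintype L]
    (horder : ProjectivePlane.order P L = 5) :
    (chamberKneserGraph P L).chromaticNumber ≤ 24 := by
  classical
  obtain ⟨Bfin, f, hB7, hP31, hmem, hgood, hinj⟩ := Stmt12Main.key P L horder
  have hcard : Fintype.card {x : P // x ∉ Bfin} = 24 := by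
    have h1 : Fintype.card {x : P // x ∈ Bfin} = 7 := by
      rw [← hB7]
      exact Fintype.card_coe Bfin
    have h2 := Fintype.card_subtype_compl (fun x : P => x ∈ Bfin)
    rw [h2, h1, hP31]
  let C : (chamberKneserGraph P L).Coloring {x : P // x ∉ Bfin} :=
    SimpleGraph.Coloring.mk
      (fun v => if h : (v : P × L).1 ∈ Bfin then ⟨f (v : P × L).2, hgood _⟩
        else ⟨(v : P × L).1, h⟩)
      (by
        intro v w hadj heqc
        obtain ⟨h1, h2⟩ := hadj
        by_cases hv : (v : P × L).1 ∈ Bfin <;> by_cases hw : (w : P × L).1 ∈ Bfin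
        · rw [dif_pos hv, dif_pos hw, Subtype.mk.injEq] at heqc
          have := hinj _ _ ⟨_, hv, v.2⟩ ⟨_, hw, w.2⟩ heqc
          exact h2 (by rw [this]; exact w.2)
        · rw [dif_pos hv, dif_neg hw, Subtype.mk.injEq] at heqc
          exact h2 (heqc ▸ hmem (v : P × L).2)
        · rw [dif_neg hv, dif_pos hw, Subtype.mk.injEq] at heqc
          exact h1 (heqc.symm ▸ hmem (w : P × L).2)
        · rw [dif_neg hv, dif_neg hw, Subtype.mk.injEq] at heqc
          exact h2 (heqc ▸ v.2))
  have hcol := C.colorable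
  rw [hcard] at hcol
  exact_mod_cast hcol.chromaticNumber_le
end

section
/- Let D = (𝒫,ℬ) be a symmetric (v,k,λ)-design, let (X,Y) be an equinumerous incidence-free pair with X ⊆ 𝒫 and Y ⊆ ℬ, and let f : 𝒫∖X → ℬ∖Y be a bijection with p ∈ f(p) for all p ∈ 𝒫∖X. Then the set of edges M = { {p, f(p)} : p ∈ 𝒫∖X } is an edge dominating set of the incidence graph of D of cardinality v − |X|. -/
/-- The incidence graph of a design with point set `P` and block family `ℬ`: the bipartite
graph on `P ⊕ ℬ` with an edge between a point `p` and a block `C` whenever `p ∈ C`. -/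
def incidenceGraph (P : Type*) [DecidableEq P] (ℬ : Finset (Finset P)) :
    SimpleGraph (P ⊕ {C : Finset P // C ∈ ℬ}) where
  Adj x y :=
    (∃ (p : P) (C : {C : Finset P // C ∈ ℬ}), x = Sum.inl p ∧ y = Sum.inr C ∧ p ∈ C.1) ∨
    (∃ (p : P) (C : {C : Finset P // C ∈ ℬ}), x = Sum.inr C ∧ y = Sum.inl p ∧ p ∈ C.1)
  symm := ⟨fun x y h => by
    rcases h with ⟨p, C, h1, h2, hp⟩ | ⟨p, C, h1, h2, hp⟩
    · exact Or.inr ⟨p, C, h2, h1, hp⟩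
    · exact Or.inl ⟨p, C, h2, h1, hp⟩⟩
  loopless := ⟨fun x h => by
    rcases h with ⟨p, C, h1, h2, _⟩ | ⟨p, C, h1, h2, _⟩ <;> subst h1 <;> simp at h2⟩

/-- A set `M` of edges of a graph `G` is edge dominating if every edge of `G` shares an
endpoint with some edge of `M`. -/
def IsEdgeDominatingSet {V : Type*} (G : SimpleGraph V) (M : Set (Sym2 V)) : Prop :=
  M ⊆ G.edgeSet ∧ ∀ e ∈ G.edgeSet, ∃ e' ∈ M, ∃ x, x ∈ e ∧ x ∈ e'

/-- Let `D = (𝒫, ℬ)` be a symmetric `(v, k, l)`-design, let `(X, Y)` be an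
equinumerous incidence-free pair, and let `f : 𝒫 \ X → ℬ \ Y` be a bijection with
`p ∈ f p` for all `p`. Then `M = { {p, f p} : p ∈ 𝒫 \ X }` is an edge dominating set of the
incidence graph of `D` of cardinality `v − |X|`. -/
theorem stmt_14 (v k l : ℕ) (P : Type*) [Fintype P] [DecidableEq P]
    (ℬ : Finset (Finset P))
    -- D is a symmetric (v, k, l)-design:
    (hv : Fintype.card P = v) (hℬcard : ℬ.card = v)
    (hblock : ∀ C ∈ ℬ, C.card = k)
    (hdeg : ∀ p : P, (ℬ.filter (fun C => p ∈ C)).card = k)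
    (hpts : ∀ p q : P, p ≠ q → (ℬ.filter (fun C => p ∈ C ∧ q ∈ C)).card = l)
    (hblocks : ∀ C ∈ ℬ, ∀ D ∈ ℬ, C ≠ D → (C ∩ D).card = l)
    (hl : 0 < l) (hlk : l < k) (hkv : k < v)
    -- (X, Y) is an equinumerous incidence-free pair:
    (X : Finset P) (Y : Finset (Finset P)) (hY : Y ⊆ ℬ)
    (hfree : ∀ p ∈ X, ∀ C ∈ Y, p ∉ C)
    (hequi : X.card = Y.card)
    -- f is a perfect matching between 𝒫 \ X and ℬ \ Y:
    (f : {p : P // p ∉ X} → {C : Finset P // C ∈ ℬ \ Y})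
    (hf : Function.Bijective f)
    (hinc : ∀ p : {p : P // p ∉ X}, (p : P) ∈ (f p : Finset P)) :
    IsEdgeDominatingSet (incidenceGraph P ℬ)
      {e : Sym2 (P ⊕ {C : Finset P // C ∈ ℬ}) | ∃ p : {p : P // p ∉ X},
        e = s(Sum.inl (p : P), Sum.inr ⟨(f p : Finset P), (Finset.mem_sdiff.mp (f p).2).1⟩)} ∧
    {e : Sym2 (P ⊕ {C : Finset P // C ∈ ℬ}) | ∃ p : {p : P // p ∉ X},
        e = s(Sum.inl (p : P), Sum.inr ⟨(f p : Finset P),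
          (Finset.mem_sdiff.mp (f p).2).1⟩)}.ncard = v - X.card := by
  
  constructor
  · constructor
    · rintro e ⟨p, rfl⟩
      rw [SimpleGraph.mem_edgeSet]
      exact Or.inl ⟨p, _, rfl, rfl, hinc p⟩
    · intro e he
      induction e with
      | h x y =>
        rw [SimpleGraph.mem_edgeSet] at he
        -- wlog: reduce to the first case
        rcases he with ⟨p, C, rfl, rfl, hp⟩ | ⟨p, C, rfl, rfl, hp⟩
        · by_cases hpX : p ∈ X
          · -- C ∉ Y since p ∈ C
            have hCY : C.1 ∉ Y := fun h => hfree p hpX C.1 h hp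
            have hC : C.1 ∈ ℬ \ Y := Finset.mem_sdiff.mpr ⟨C.2, hCY⟩
            obtain ⟨q, hq⟩ := hf.2 ⟨C.1, hC⟩
            refine ⟨_, ⟨q, rfl⟩, Sum.inr C, ?_, ?_⟩
            · simp
            · rw [Sym2.mem_iff]
              right
              rw [hq]
          · exact ⟨_, ⟨⟨p, hpX⟩, rfl⟩, Sum.inl p, by simp, by simp⟩
        · by_cases hpX : p ∈ X
          · have hCY : C.1 ∉ Y := fun h => hfree p hpX C.1 h hp
            have hC : C.1 ∈ ℬ \ Y := Finset.mem_sdiff.mpr ⟨C.2, hCY⟩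
            obtain ⟨q, hq⟩ := hf.2 ⟨C.1, hC⟩
            refine ⟨_, ⟨q, rfl⟩, Sum.inr C, ?_, ?_⟩
            · simp
            · rw [Sym2.mem_iff]
              right
              rw [hq]
          · exact ⟨_, ⟨⟨p, hpX⟩, rfl⟩, Sum.inl p, by simp, by simp⟩
  · have hset : {e : Sym2 (P ⊕ {C : Finset P // C ∈ ℬ}) | ∃ p : {p : P // p ∉ X},
        e = s(Sum.inl (p : P), Sum.inr ⟨(f p : Finset P),
          (Finset.mem_sdiff.mp (f p).2).1⟩)} = Set.range (fun p : {p : P // p ∉ X} =>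
          s(Sum.inl (p : P), Sum.inr ⟨(f p : Finset P), (Finset.mem_sdiff.mp (f p).2).1⟩)) := by
      ext e
      simp [Set.range, eq_comm]
    rw [hset, Set.ncard_eq_toFinset_card', Set.toFinset_range, Finset.card_image_of_injective]
    · rw [Finset.card_univ, Fintype.card_subtype]
      have : (Finset.univ.filter (fun p : P => p ∉ X)) = Finset.univ \ X := by
        ext p; simp
      rw [this, Finset.card_sdiff_of_subset (Finset.subset_univ X), Finset.card_univ, hv]
    · intro a b hab
      simp only [Sym2.eq, Sym2.rel_iff', Prod.mk.injEq, Prod.swap_prod_mk] at hab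
      rcases hab with ⟨h1, _⟩ | ⟨h1, h2⟩
      · exact Subtype.ext (Sum.inl.inj h1)
      · exact absurd h1 (by simp)
end

section
/- Let D = (𝒫,ℬ) be a symmetric (v,k,λ)-design and let ᾱ denote the maximum of |X| over all equinumerous incidence-free pairs (X,Y) with X ⊆ 𝒫 and Y ⊆ ℬ. Then every edge dominating set of the incidence graph of D has cardinality at least v − ᾱ. -/
/-- Let `D = (𝒫, ℬ)` be a symmetric `(v, k, l)`-design and let `ᾱ` be the
maximum of `|X|` over all equinumerous incidence-free pairs `(X, Y)`. Then every edge
dominating set of the incidence graph of `D` has cardinality at least `v − ᾱ`. -/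
theorem stmt_15 (v k l : ℕ) (P : Type*) [Fintype P] [DecidableEq P]
    (ℬ : Finset (Finset P))
    -- D is a symmetric (v, k, l)-design:
    (hv : Fintype.card P = v) (hℬcard : ℬ.card = v)
    (hblock : ∀ C ∈ ℬ, C.card = k)
    (hdeg : ∀ p : P, (ℬ.filter (fun C => p ∈ C)).card = k)
    (hpts : ∀ p q : P, p ≠ q → (ℬ.filter (fun C => p ∈ C ∧ q ∈ C)).card = l)
    (hblocks : ∀ C ∈ ℬ, ∀ D ∈ ℬ, C ≠ D → (C ∩ D).card = l)
    (hl : 0 < l) (hlk : l < k) (hkv : k < v)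
    -- ᾱ is the maximum size of an equinumerous incidence-free pair:
    (α : ℕ)
    (hα : IsGreatest {s : ℕ | ∃ (X : Finset P) (Y : Finset (Finset P)), Y ⊆ ℬ ∧
      (∀ p ∈ X, ∀ C ∈ Y, p ∉ C) ∧ X.card = Y.card ∧ X.card = s} α)
    -- M is an edge dominating set:
    (M : Set (Sym2 (P ⊕ {C : Finset P // C ∈ ℬ})))
    (hM : IsEdgeDominatingSet (incidenceGraph P ℬ) M) :
    v - α ≤ M.ncard := by

  classical
  have hMsub := hM.1
  have hMfin : M.Finite := Set.Finite.subset (Set.toFinite _) hMsub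
  set Mf : Finset (Sym2 (P ⊕ {C : Finset P // C ∈ ℬ})) := hMfin.toFinset with hMf
  have hncard : M.ncard = Mf.card := Set.ncard_eq_toFinset_card M hMfin
  set n := Mf.card with hndef
  -- every edge has the form s(inl p, inr C)
  have hform : ∀ e ∈ M, ∃ (p : P) (C : {C : Finset P // C ∈ ℬ}),
      e = s(Sum.inl p, Sum.inr C) := by
    intro e he
    have := hMsub he
    induction e with
    | _ x y =>
      rw [SimpleGraph.mem_edgeSet] at this
      rcases this with ⟨p, C, h1, h2, _⟩ | ⟨p, C, h1, h2, _⟩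
      · exact ⟨p, C, by rw [h1, h2]⟩
      · exact ⟨p, C, by rw [h1, h2]; exact Sym2.eq_swap⟩
  -- covered points / blocks
  let Xc : Finset P := Finset.univ.filter (fun p => ∃ e ∈ M, Sum.inl p ∈ e)
  let Yc : Finset {C : Finset P // C ∈ ℬ} :=
    Finset.univ.filter (fun C => ∃ e ∈ M, Sum.inr C ∈ e)
  let pts : Sym2 (P ⊕ {C : Finset P // C ∈ ℬ}) → Finset P :=
    fun e => Finset.univ.filter (fun p => Sum.inl p ∈ e)
  let blks : Sym2 (P ⊕ {C : Finset P // C ∈ ℬ}) → Finset {C : Finset P // C ∈ ℬ} :=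
    fun e => Finset.univ.filter (fun C => Sum.inr C ∈ e)
  have hXc : Xc.card ≤ n := by
    have hsub : Xc ⊆ Mf.biUnion pts := by
      intro p hp
      simp only [Xc, Finset.mem_filter] at hp
      obtain ⟨-, e, he, hpe⟩ := hp
      refine Finset.mem_biUnion.2 ⟨e, ?_, ?_⟩
      · simpa [Mf] using he
      · simp [pts, hpe]
    calc Xc.card ≤ (Mf.biUnion pts).card := Finset.card_le_card hsub
      _ ≤ ∑ e ∈ Mf, (pts e).card := Finset.card_biUnion_le
      _ ≤ ∑ _e ∈ Mf, 1 := by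
          refine Finset.sum_le_sum ?_
          intro e he
          have heM : e ∈ M := by simpa [Mf] using he
          obtain ⟨p, C, rfl⟩ := hform e heM
          refine Finset.card_le_one.2 ?_
          intro a ha b hb
          simp only [pts, Finset.mem_filter, Sym2.mem_iff] at ha hb
          rcases ha.2 with h | h <;> rcases hb.2 with h' | h' <;>
            simp_all
      _ = n := by simp [hndef]
  have hYc : Yc.card ≤ n := by
    have hsub : Yc ⊆ Mf.biUnion blks := by
      intro C hC
      simp only [Yc, Finset.mem_filter] at hC
      obtain ⟨-, e, he, hCe⟩ := hC
      refine Finset.mem_biUnion.2 ⟨e, ?_, ?_⟩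
      · simpa [Mf] using he
      · simp [blks, hCe]
    calc Yc.card ≤ (Mf.biUnion blks).card := Finset.card_le_card hsub
      _ ≤ ∑ e ∈ Mf, (blks e).card := Finset.card_biUnion_le
      _ ≤ ∑ _e ∈ Mf, 1 := by
          refine Finset.sum_le_sum ?_
          intro e he
          have heM : e ∈ M := by simpa [Mf] using he
          obtain ⟨p, C, rfl⟩ := hform e heM
          refine Finset.card_le_one.2 ?_
          intro a ha b hb
          simp only [blks, Finset.mem_filter, Sym2.mem_iff] at ha hb
          rcases ha.2 with h | h <;> rcases hb.2 with h' | h' <;>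
            simp_all
      _ = n := by simp [hndef]
  -- uncovered points and blocks
  let X : Finset P := Finset.univ \ Xc
  let Y : Finset {C : Finset P // C ∈ ℬ} := Finset.univ \ Yc
  have hXcard : v - n ≤ X.card := by
    have : X.card = Fintype.card P - Xc.card := by
      simp [X, Finset.card_sdiff_of_subset (Finset.subset_univ _), Finset.card_univ]
    omega
  have hYcard : v - n ≤ Y.card := by
    have hcard : Fintype.card {C : Finset P // C ∈ ℬ} = v := by
      rw [Fintype.card_coe, hℬcard]
    have : Y.card = Fintype.card {C : Finset P // C ∈ ℬ} - Yc.card := by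
      rw [show Y = Finset.univ \ Yc from rfl,
        Finset.card_sdiff_of_subset (Finset.subset_univ _), Finset.card_univ]
    omega
  -- incidence-freeness
  have hfree : ∀ p ∈ X, ∀ C ∈ Y, p ∉ C.1 := by
    intro p hp C hC hpC
    have hadj : (incidenceGraph P ℬ).Adj (Sum.inl p) (Sum.inr C) :=
      Or.inl ⟨p, C, rfl, rfl, hpC⟩
    obtain ⟨e', he'M, x, hx1, hx2⟩ := hM.2 _ ((incidenceGraph P ℬ).mem_edgeSet.2 hadj)
    simp only [X, Y, Finset.mem_sdiff, Finset.mem_univ, true_and, Xc, Yc,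
      Finset.mem_filter, not_and, not_exists] at hp hC
    rcases Sym2.mem_iff.1 hx1 with rfl | rfl
    · exact hp e' he'M hx2
    · exact hC e' he'M hx2
  -- extract equal-size subsets
  obtain ⟨X0, hX0sub, hX0card⟩ := Finset.exists_subset_card_eq hXcard
  obtain ⟨Y0, hY0sub, hY0card⟩ := Finset.exists_subset_card_eq hYcard
  have hmem : (v - n) ∈ {s : ℕ | ∃ (X : Finset P) (Y : Finset (Finset P)), Y ⊆ ℬ ∧
      (∀ p ∈ X, ∀ C ∈ Y, p ∉ C) ∧ X.card = Y.card ∧ X.card = s} := by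
    refine ⟨X0, Y0.image Subtype.val, ?_, ?_, ?_, hX0card⟩
    · intro C hC
      simp only [Finset.mem_image] at hC
      obtain ⟨⟨C', hC'⟩, -, rfl⟩ := hC
      exact hC'
    · intro p hp C hC
      simp only [Finset.mem_image] at hC
      obtain ⟨C', hC', rfl⟩ := hC
      exact hfree p (hX0sub hp) C' (hY0sub hC')
    · rw [Finset.card_image_of_injective _ Subtype.val_injective, hX0card, hY0card]
  have := hα.2 hmem
  rw [hncard]
  omega
end
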